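/- Let T be semi-classical arithmetic and X ⊆ 𝒬_{k+1} a set of sentences. Then PA + X is (Π_{k+1} ∨ Π_{k+1})-conservative over T + X if and only if T + X is closed under the rule (Π_{k+1} ∨ Π_{k+1})-DNE-R, if and only if T + X is closed under Π_{k+1}-CD-R, if and only if T + X is closed under Σ_{k+1}-DML^⊥-R. -/

import Mathlib

namespace SemiClassicalArith

/-- Terms of arithmetic: variables (de Bruijn indices) and function symbols
(one symbol of each arity for every code, covering all primitive recursive functions). -/
inductive Term : Type
  | var : ℕ → Term
  | func : (code : ℕ) → (arity : ℕ) → (Fin arity → Term) → Term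

namespace Term

/-- Shift all variables `≥ d` up by one. -/
def lift (d : ℕ) : Term → Term
  | var n => if n < d then var n else var (n + 1)
  | func c a ts => func c a fun i => (ts i).lift d

/-- Binder-removing substitution of `s` for variable `k`. -/
def subst (k : ℕ) (s : Term) : Term → Term
  | var n => if n < k then var n else if n = k then s else var (n - 1)
  | func c a ts => func c a fun i => Term.subst k s (ts i)

/-- In-place replacement of variable `k` by `s` (no shifting of other variables). -/
def repl (k : ℕ) (s : Term) : Term → Term
  | var n => if n = k then s else var n
  | func c a ts => func c a fun i => Term.repl k s (ts i)

/-- Free variables of a term. -/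
def fv : Term → Finset ℕ
  | var n => {n}
  | func _ _ ts => Finset.univ.sup fun i => (ts i).fv

/-- The constant zero (function symbol of arity 0, code 0). -/
def zero : Term := func 0 0 (fun i => i.elim0)

/-- Successor (function symbol of arity 1, code 1). -/
def succ (t : Term) : Term := func 1 1 (fun _ => t)

end Term

/-- Formulas of arithmetic in the language with an extra nullary predicate
symbol `$` (`dollar`), used as a place holder. Quantifiers use de Bruijn indices. -/
inductive Formula : Type
  | falsum : Formula
  | dollar : Formula
  | eq : Term → Term → Formula
  | and : Formula → Formula → Formula
  | or : Formula → Formula → Formula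
  | imp : Formula → Formula → Formula
  | all : Formula → Formula
  | ex : Formula → Formula

namespace Formula

def neg (φ : Formula) : Formula := φ.imp falsum

def iff (φ ψ : Formula) : Formula := (φ.imp ψ).and (ψ.imp φ)

/-- `¬_$ φ`, i.e. `φ → $`. -/
def negD (φ : Formula) : Formula := φ.imp dollar

def lift (d : ℕ) : Formula → Formula
  | falsum => falsum
  | dollar => dollar
  | eq t u => eq (t.lift d) (u.lift d)
  | and φ ψ => and (φ.lift d) (ψ.lift d)
  | or φ ψ => or (φ.lift d) (ψ.lift d)
  | imp φ ψ => imp (φ.lift d) (ψ.lift d)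
  | all φ => all (φ.lift (d + 1))
  | ex φ => ex (φ.lift (d + 1))

/-- Binder-removing substitution of term `s` for variable `k`. -/
def subst (k : ℕ) (s : Term) : Formula → Formula
  | falsum => falsum
  | dollar => dollar
  | eq t u => eq (Term.subst k s t) (Term.subst k s u)
  | and φ ψ => and (Formula.subst k s φ) (Formula.subst k s ψ)
  | or φ ψ => or (Formula.subst k s φ) (Formula.subst k s ψ)
  | imp φ ψ => imp (Formula.subst k s φ) (Formula.subst k s ψ)
  | all φ => all (Formula.subst (k + 1) (s.lift 0) φ)
  | ex φ => ex (Formula.subst (k + 1) (s.lift 0) φ)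

/-- In-place replacement of variable `k` by term `s`. -/
def repl (k : ℕ) (s : Term) : Formula → Formula
  | falsum => falsum
  | dollar => dollar
  | eq t u => eq (Term.repl k s t) (Term.repl k s u)
  | and φ ψ => and (Formula.repl k s φ) (Formula.repl k s ψ)
  | or φ ψ => or (Formula.repl k s φ) (Formula.repl k s ψ)
  | imp φ ψ => imp (Formula.repl k s φ) (Formula.repl k s ψ)
  | all φ => all (Formula.repl (k + 1) (s.lift 0) φ)
  | ex φ => ex (Formula.repl (k + 1) (s.lift 0) φ)

/-- Free variables of a formula. -/
def fv : Formula → Finset ℕ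
  | falsum => ∅
  | dollar => ∅
  | eq t u => t.fv ∪ u.fv
  | and φ ψ => φ.fv ∪ ψ.fv
  | or φ ψ => φ.fv ∪ ψ.fv
  | imp φ ψ => φ.fv ∪ ψ.fv
  | all φ => (φ.fv.erase 0).image (· - 1)
  | ex φ => (φ.fv.erase 0).image (· - 1)

/-- A sentence is a formula with no free variables. -/
def sentence (φ : Formula) : Prop := φ.fv = ∅

/-- The formula is in the language of `HA` (the placeholder `$` does not occur). -/
def noDollar : Formula → Prop
  | falsum => True
  | dollar => False
  | eq _ _ => True
  | and φ ψ => φ.noDollar ∧ ψ.noDollar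
  | or φ ψ => φ.noDollar ∧ ψ.noDollar
  | imp φ ψ => φ.noDollar ∧ ψ.noDollar
  | all φ => φ.noDollar
  | ex φ => φ.noDollar

/-- Quantifier-free formula of `HA`. -/
def isQF : Formula → Prop
  | falsum => True
  | dollar => False
  | eq _ _ => True
  | and φ ψ => φ.isQF ∧ ψ.isQF
  | or φ ψ => φ.isQF ∧ ψ.isQF
  | imp φ ψ => φ.isQF ∧ ψ.isQF
  | all _ => False
  | ex _ => False

/-- Flip `+`/`-` in an alternation path (`true` = `+`, `false` = `-`). -/
def pflip (s : List Bool) : List Bool := s.map (!·)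

/-- The set of alternation paths of a formula (Akama–Berardi–Hayashi–Kohlenbach). -/
def alt : Formula → Finset (List Bool)
  | falsum => {([] : List Bool)}
  | dollar => {([] : List Bool)}
  | eq _ _ => {([] : List Bool)}
  | and φ ψ => φ.alt ∪ ψ.alt
  | or φ ψ => φ.alt ∪ ψ.alt
  | imp φ ψ => φ.alt.image pflip ∪ ψ.alt
  | all φ => φ.alt.image (fun s => if s.head? = some false then s else false :: s)
  | ex φ => φ.alt.image (fun s => if s.head? = some true then s else true :: s)

/-- The degree of a formula: the maximal length of its alternation paths. -/
def degree (φ : Formula) : ℕ := φ.alt.sup List.length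

/-- The class `U_k` (for `k ≥ 1`: degree `k` and all maximal paths begin with `-`;
`U_0` is the class of degree-`0` formulas). -/
def inU (k : ℕ) (φ : Formula) : Prop :=
  φ.degree = k ∧ ∀ s ∈ φ.alt, s.length = k → k = 0 ∨ s.head? = some false

/-- The class `E_k` (for `k ≥ 1`: degree `k` and all maximal paths begin with `+`;
`E_0` is the class of degree-`0` formulas). -/
def inE (k : ℕ) (φ : Formula) : Prop :=
  φ.degree = k ∧ ∀ s ∈ φ.alt, s.length = k → k = 0 ∨ s.head? = some true

/-- The dual of a prenex formula: swap quantifiers and negate the matrix. -/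
def dual : Formula → Formula
  | all φ => ex φ.dual
  | ex φ => all φ.dual
  | φ => φ.neg

/-- The `$`-translation (Ishihara's generalized negative translation). -/
def dollarTr : Formula → Formula
  | falsum => dollar
  | dollar => dollar
  | eq t u => (eq t u).negD.negD
  | and φ ψ => and φ.dollarTr ψ.dollarTr
  | or φ ψ => (or φ.dollarTr ψ.dollarTr).negD.negD
  | imp φ ψ => imp φ.dollarTr ψ.dollarTr
  | all φ => all φ.dollarTr
  | ex φ => (ex φ.dollarTr).negD.negD

/-- The Friedman A-translation: replace every prime formula `P` (including `⊥`)
by `P ∨ *` (here `*` is the placeholder `dollar`). -/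
def aTr : Formula → Formula
  | falsum => or falsum dollar
  | dollar => dollar
  | eq t u => or (eq t u) dollar
  | and φ ψ => and φ.aTr ψ.aTr
  | or φ ψ => or φ.aTr ψ.aTr
  | imp φ ψ => imp φ.aTr ψ.aTr
  | all φ => all φ.aTr
  | ex φ => ex φ.aTr

/-- Prefix `n` universal quantifiers. -/
def allN : Formula → ℕ → Formula
  | φ, 0 => φ
  | φ, n + 1 => Formula.allN φ.all n

/-- The universal closure of a formula. -/
def univClosure (φ : Formula) : Formula := φ.allN (φ.fv.sup Nat.succ)

end Formula

mutual
  /-- The class `Σ_k` of prenex formulas. -/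
  inductive IsSigma : ℕ → Formula → Prop
    | qf {φ : Formula} : φ.isQF → IsSigma 0 φ
    | ofPi {k : ℕ} {φ : Formula} : IsPi k φ → IsSigma (k + 1) φ
    | ex {k : ℕ} {φ : Formula} : IsSigma (k + 1) φ → IsSigma (k + 1) φ.ex
  /-- The class `Π_k` of prenex formulas. -/
  inductive IsPi : ℕ → Formula → Prop
    | qf {φ : Formula} : φ.isQF → IsPi 0 φ
    | ofSigma {k : ℕ} {φ : Formula} : IsSigma k φ → IsPi (k + 1) φ
    | all {k : ℕ} {φ : Formula} : IsPi (k + 1) φ → IsPi (k + 1) φ.all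
end

/-- Axioms of Heyting arithmetic `HA` (Hilbert style intuitionistic predicate logic
with equality, plus arithmetical axioms and the induction scheme). -/
inductive HAAx : Formula → Prop
  | axK (φ ψ : Formula) : HAAx (φ.imp (ψ.imp φ))
  | axS (φ ψ χ : Formula) : HAAx ((φ.imp (ψ.imp χ)).imp ((φ.imp ψ).imp (φ.imp χ)))
  | andI (φ ψ : Formula) : HAAx (φ.imp (ψ.imp (φ.and ψ)))
  | andE1 (φ ψ : Formula) : HAAx ((φ.and ψ).imp φ)
  | andE2 (φ ψ : Formula) : HAAx ((φ.and ψ).imp ψ)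
  | orI1 (φ ψ : Formula) : HAAx (φ.imp (φ.or ψ))
  | orI2 (φ ψ : Formula) : HAAx (ψ.imp (φ.or ψ))
  | orE (φ ψ χ : Formula) : HAAx ((φ.imp χ).imp ((ψ.imp χ).imp ((φ.or ψ).imp χ)))
  | efq (φ : Formula) : HAAx (Formula.falsum.imp φ)
  | allE (φ : Formula) (t : Term) : HAAx (φ.all.imp (φ.subst 0 t))
  | exI (φ : Formula) (t : Term) : HAAx ((φ.subst 0 t).imp φ.ex)
  | allK (φ ψ : Formula) : HAAx ((φ.imp ψ).all.imp (φ.all.imp ψ.all))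
  | allVac (φ : Formula) : HAAx (φ.imp (φ.lift 0).all)
  | exE (φ ψ : Formula) : HAAx ((φ.imp (ψ.lift 0)).all.imp (φ.ex.imp ψ))
  | eqRefl (t : Term) : HAAx (Formula.eq t t)
  | eqSubst (t u : Term) (φ : Formula) : HAAx ((Formula.eq t u).imp ((φ.subst 0 t).imp (φ.subst 0 u)))
  | succNeZero (t : Term) : HAAx (Formula.neg (Formula.eq (Term.succ t) Term.zero))
  | succInj (t u : Term) : HAAx ((Formula.eq (Term.succ t) (Term.succ u)).imp (Formula.eq t u))
  | ind (φ : Formula) : HAAx ((φ.subst 0 Term.zero).imp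
      ((((φ.imp (φ.repl 0 (Term.succ (Term.var 0))))).all).imp φ.all))
  | atomDec (t u : Term) : HAAx ((Formula.eq t u).or (Formula.eq t u).neg)

/-- Provability from `HA` (in the language possibly containing `$`)
together with the extra axioms `T`. -/
inductive Proves (T : Set Formula) : Formula → Prop
  | ax {φ : Formula} : φ ∈ T → Proves T φ
  | ha {φ : Formula} : HAAx φ → Proves T φ
  | mp {φ ψ : Formula} : Proves T (φ.imp ψ) → Proves T φ → Proves T ψ
  | gen {φ : Formula} : Proves T φ → Proves T φ.all

/-- The scheme `Σ_k-LEM`. -/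
def sigLEM (k : ℕ) : Set Formula := {ψ | ∃ φ : Formula, IsSigma k φ ∧ ψ = φ.or φ.neg}

/-- The full law of excluded middle for `HA`-formulas; `Proves lemSet` is `PA`-provability. -/
def lemSet : Set Formula := {ψ | ∃ φ : Formula, φ.noDollar ∧ ψ = φ.or φ.neg}

/-- The scheme `F_k-LEM`: excluded middle for `HA`-formulas of degree at most `k`. -/
def fLEM (k : ℕ) : Set Formula :=
  {ψ | ∃ φ : Formula, φ.noDollar ∧ φ.degree ≤ k ∧ ψ = φ.or φ.neg}

/-- `T` is (the set of extra axioms of) a semi-classical arithmetic: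
`HA ⊆ HA + T ⊆ PA`, i.e. all axioms are `HA`-formulas provable in `PA`. -/
def IsSemiClassical (T : Set Formula) : Prop :=
  ∀ φ ∈ T, φ.noDollar ∧ Proves lemSet φ

mutual
  /-- The class `ℛ_{k+1}` (index `k` denotes `ℛ_{k+1}`). -/
  inductive Rcl : ℕ → Formula → Prop
    | base {k : ℕ} {φ : Formula} : φ.degree ≤ k → φ.noDollar → Rcl k φ
    | and {k : ℕ} {φ ψ : Formula} : Rcl k φ → Rcl k ψ → Rcl k (φ.and ψ)
    | or {k : ℕ} {φ ψ : Formula} : Rcl k φ → Rcl k ψ → Rcl k (φ.or ψ)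
    | all {k : ℕ} {φ : Formula} : Rcl k φ → Rcl k φ.all
    | imp {k : ℕ} {φ ψ : Formula} : Jcl k φ → Rcl k ψ → Rcl k (φ.imp ψ)
  /-- The class `𝒥_{k+1}` (index `k` denotes `𝒥_{k+1}`). -/
  inductive Jcl : ℕ → Formula → Prop
    | base {k : ℕ} {φ : Formula} : φ.degree ≤ k → φ.noDollar → Jcl k φ
    | and {k : ℕ} {φ ψ : Formula} : Jcl k φ → Jcl k ψ → Jcl k (φ.and ψ)
    | or {k : ℕ} {φ ψ : Formula} : Jcl k φ → Jcl k ψ → Jcl k (φ.or ψ)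
    | ex {k : ℕ} {φ : Formula} : Jcl k φ → Jcl k φ.ex
    | imp {k : ℕ} {φ ψ : Formula} : Rcl k φ → Jcl k ψ → Jcl k (φ.imp ψ)
end

/-- The class `𝒬_{k+1}` (index `k` denotes `𝒬_{k+1}`): generated from prime formulas by
`∧, ∨, ∀, ∃` and implications `J → Q` with `J ∈ 𝒥_{k+1}`. -/
inductive Qcl : ℕ → Formula → Prop
  | falsum {k : ℕ} : Qcl k Formula.falsum
  | eq {k : ℕ} {t u : Term} : Qcl k (Formula.eq t u)
  | and {k : ℕ} {φ ψ : Formula} : Qcl k φ → Qcl k ψ → Qcl k (φ.and ψ)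
  | or {k : ℕ} {φ ψ : Formula} : Qcl k φ → Qcl k ψ → Qcl k (φ.or ψ)
  | all {k : ℕ} {φ : Formula} : Qcl k φ → Qcl k φ.all
  | ex {k : ℕ} {φ : Formula} : Qcl k φ → Qcl k φ.ex
  | imp {k : ℕ} {φ ψ : Formula} : Jcl k φ → Qcl k ψ → Qcl k (φ.imp ψ)

/-- The class `𝒱_{k+1}` (index `k` denotes `𝒱_{k+1}`): generated from `𝒥_{k+1}` by `∧, ∀`. -/
inductive Vcl : ℕ → Formula → Prop
  | ofJ {k : ℕ} {φ : Formula} : Jcl k φ → Vcl k φ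
  | and {k : ℕ} {φ ψ : Formula} : Vcl k φ → Vcl k ψ → Vcl k (φ.and ψ)
  | all {k : ℕ} {φ : Formula} : Vcl k φ → Vcl k φ.all

/-- The class `EΠ_k`: generated from `Π_k` formulas by `∨` and `∀`. -/
inductive EPi (k : ℕ) : Formula → Prop
  | ofPi {φ : Formula} : IsPi k φ → EPi k φ
  | or {φ ψ : Formula} : EPi k φ → EPi k ψ → EPi k (φ.or ψ)
  | all {φ : Formula} : EPi k φ → EPi k φ.all

/-- The class `EΣ_{k+1}` (index `k` denotes `EΣ_{k+1}`): existential quantifications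
of `EΠ_k` formulas. -/
inductive ESig (k : ℕ) : Formula → Prop
  | ofEPi {φ : Formula} : EPi k φ → ESig k φ
  | ex {φ : Formula} : ESig k φ → ESig k φ.ex

/-- The scheme `Γ-DNEC`: universal closure of `¬¬φ` implies universal closure of `φ`. -/
def dnecSet (Γ : Set Formula) : Set Formula :=
  {ψ | ∃ φ ∈ Γ, ψ = (φ.neg.neg.univClosure).imp φ.univClosure}

/-- The scheme `Γ-DNSC`: universal closure of `¬¬φ` implies `¬¬` of the universal closure. -/
def dnscSet (Γ : Set Formula) : Set Formula :=
  {ψ | ∃ φ ∈ Γ, ψ = (φ.neg.neg.univClosure).imp φ.univClosure.neg.neg}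

/-- Double-negation elimination for sentences in `Γ`. -/
def dneSentSet (Γ : Set Formula) : Set Formula :=
  {ψ | ∃ φ ∈ Γ, φ.sentence ∧ ψ = φ.neg.neg.imp φ}



end SemiClassicalArith
namespace SemiClassicalArith

/-! ### Infrastructure: basic de Bruijn lemmas -/

namespace Term

theorem lift_succ_subst_var (t : Term) : ∀ d, Term.subst d (Term.var d) (t.lift (d+1)) = t := by
  induction t with
  | var n =>
    intro d
    simp only [lift, subst]
    by_cases h : n < d + 1
    · simp only [if_pos h, subst]
      rcases Nat.lt_or_ge n d with h'|h'
      · simp [if_pos h', subst]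
      · have : n = d := Nat.le_antisymm (Nat.lt_succ_iff.mp h) h'
        simp [this]
    · simp only [if_neg h, subst]
      have h1 : ¬ (n + 1 < d) := by omega
      have h2 : ¬ (n + 1 = d) := by omega
      simp [h1, h2]
  | func c a ts ih =>
    intro d
    simp only [lift, subst]
    congr 1
    funext i
    exact ih i d

theorem lift_subst_self (t : Term) (s : Term) : ∀ d, Term.subst d s (t.lift d) = t := by
  induction t with
  | var n =>
    intro d
    simp only [lift, subst]
    by_cases h : n < d
    · simp [if_pos h, subst, h]
    · simp only [if_neg h]
      have h1 : ¬ (n + 1 < d) := by omega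
      have h2 : ¬ (n + 1 = d) := by omega
      simp [subst, h1, h2]
  | func c a ts ih =>
    intro d
    simp only [lift, subst]
    congr 1
    funext i
    exact ih i d

end Term

namespace Formula

theorem lift_succ_subst_var (φ : Formula) : ∀ d, (φ.lift (d+1)).subst d (Term.var d) = φ := by
  induction φ with
  | falsum => intro d; rfl
  | dollar => intro d; rfl
  | eq t u => intro d; simp [lift, subst, Term.lift_succ_subst_var]
  | and φ ψ ih1 ih2 => intro d; simp [lift, subst, ih1, ih2]
  | or φ ψ ih1 ih2 => intro d; simp [lift, subst, ih1, ih2]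
  | imp φ ψ ih1 ih2 => intro d; simp [lift, subst, ih1, ih2]
  | all φ ih => intro d; simp [lift, subst, Term.lift]; exact ih (d+1)
  | ex φ ih => intro d; simp [lift, subst, Term.lift]; exact ih (d+1)

theorem lift_subst_self (φ : Formula) (s : Term) : ∀ d, (φ.lift d).subst d s = φ := by
  induction φ generalizing s with
  | falsum => intro d; rfl
  | dollar => intro d; rfl
  | eq t u => intro d; simp [lift, subst, Term.lift_subst_self]
  | and φ ψ ih1 ih2 => intro d; simp [lift, subst, ih1, ih2]
  | or φ ψ ih1 ih2 => intro d; simp [lift, subst, ih1, ih2]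
  | imp φ ψ ih1 ih2 => intro d; simp [lift, subst, ih1, ih2]
  | all φ ih => intro d; simp only [lift, subst]; rw [ih]
  | ex φ ih => intro d; simp only [lift, subst]; rw [ih]

@[simp] theorem lift_neg (φ : Formula) (d : ℕ) : (φ.neg).lift d = (φ.lift d).neg := rfl
@[simp] theorem subst_neg (φ : Formula) (k : ℕ) (s : Term) :
    (φ.neg).subst k s = (φ.subst k s).neg := rfl

end Formula

/-! ### Infrastructure: derived rules for the Hilbert system -/

open Formula

namespace Proves

variable {T : Set Formula} {φ ψ χ δ : Formula}

theorem mono {T T' : Set Formula} (h : T ⊆ T') : Proves T φ → Proves T' φ := by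
  intro hp
  induction hp with
  | ax hφ => exact Proves.ax (h hφ)
  | ha hφ => exact Proves.ha hφ
  | mp _ _ ih1 ih2 => exact Proves.mp ih1 ih2
  | gen _ ih => exact Proves.gen ih

theorem cut {T T' : Set Formula} (h : ∀ χ ∈ T, Proves T' χ) : Proves T φ → Proves T' φ := by
  intro hp
  induction hp with
  | ax hφ => exact h _ hφ
  | ha hφ => exact Proves.ha hφ
  | mp _ _ ih1 ih2 => exact Proves.mp ih1 ih2
  | gen _ ih => exact Proves.gen ih

theorem imp_refl (T : Set Formula) (φ : Formula) : Proves T (φ.imp φ) :=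
  ((Proves.ha (HAAx.axS φ (φ.imp φ) φ)).mp (Proves.ha (HAAx.axK φ (φ.imp φ)))).mp
    (Proves.ha (HAAx.axK φ φ))

theorem imp_intro (h : Proves T ψ) : Proves T (φ.imp ψ) :=
  (Proves.ha (HAAx.axK ψ φ)).mp h

theorem imp_trans (h1 : Proves T (φ.imp ψ)) (h2 : Proves T (ψ.imp χ)) :
    Proves T (φ.imp χ) :=
  ((Proves.ha (HAAx.axS φ ψ χ)).mp (imp_intro h2)).mp h1

end Proves

/-! ### Natural-deduction style layer -/

/-- `impCtx Γ φ` = `γₙ ⊃ ⋯ ⊃ γ₁ ⊃ φ` where `Γ = [γ₁, …, γₙ]` (head innermost). -/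
def impCtx : List Formula → Formula → Formula
  | [], φ => φ
  | ψ :: Γ, φ => impCtx Γ (ψ.imp φ)

/-- Hilbert-provability from hypotheses (hypotheses are NOT generalizable). -/
def Drv (T : Set Formula) (Γ : List Formula) (φ : Formula) : Prop := Proves T (impCtx Γ φ)

namespace Drv

variable {T : Set Formula} {Γ : List Formula} {φ ψ χ δ : Formula}

theorem ofProves (h : Proves T φ) : ∀ {Γ : List Formula}, Drv T Γ φ := by
  intro Γ
  induction Γ generalizing φ with
  | nil => exact h
  | cons χ Γ ih => exact ih (Proves.imp_intro h)

theorem toProves (h : Drv T [] φ) : Proves T φ := h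

theorem impI (h : Drv T (ψ :: Γ) φ) : Drv T Γ (ψ.imp φ) := h

theorem of_impI (h : Drv T Γ (ψ.imp φ)) : Drv T (ψ :: Γ) φ := h

theorem impE (h1 : Drv T Γ (φ.imp ψ)) (h2 : Drv T Γ φ) : Drv T Γ ψ := by
  induction Γ generalizing φ ψ with
  | nil => exact h1.mp h2
  | cons χ Γ ih =>
    exact ih (ih (ofProves (Proves.ha (HAAx.axS χ φ ψ))) h1) h2

theorem weaken (h : Drv T Γ φ) : Drv T (ψ :: Γ) φ :=
  of_impI (impE (ofProves (Proves.ha (HAAx.axK φ ψ))) h)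

theorem hyp (h : φ ∈ Γ) : Drv T Γ φ := by
  induction Γ with
  | nil => cases h
  | cons χ Γ ih =>
    rcases List.mem_cons.mp h with h | h
    · subst h; exact of_impI (ofProves (Proves.imp_refl T φ))
    · exact weaken (ih h)

theorem hyp0 : Drv T (φ :: Γ) φ := hyp List.mem_cons_self
theorem hyp1 : Drv T (ψ :: φ :: Γ) φ := hyp (by simp)
theorem hyp2 : Drv T (χ :: ψ :: φ :: Γ) φ := hyp (by simp)
theorem hyp3 : Drv T (δ :: χ :: ψ :: φ :: Γ) φ := hyp (by simp)

theorem ax (h : φ ∈ T) : Drv T Γ φ := ofProves (Proves.ax h)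
theorem ha (h : HAAx φ) : Drv T Γ φ := ofProves (Proves.ha h)

-- and
theorem andI (h1 : Drv T Γ φ) (h2 : Drv T Γ ψ) : Drv T Γ (φ.and ψ) :=
  impE (impE (ha (HAAx.andI φ ψ)) h1) h2
theorem andE1 (h : Drv T Γ (φ.and ψ)) : Drv T Γ φ := impE (ha (HAAx.andE1 φ ψ)) h
theorem andE2 (h : Drv T Γ (φ.and ψ)) : Drv T Γ ψ := impE (ha (HAAx.andE2 φ ψ)) h

-- or
theorem orI1 (h : Drv T Γ φ) : Drv T Γ (φ.or ψ) := impE (ha (HAAx.orI1 φ ψ)) h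
theorem orI2 (h : Drv T Γ ψ) : Drv T Γ (φ.or ψ) := impE (ha (HAAx.orI2 φ ψ)) h
theorem orE (h : Drv T Γ (φ.or ψ)) (h1 : Drv T (φ :: Γ) χ) (h2 : Drv T (ψ :: Γ) χ) :
    Drv T Γ χ :=
  impE (impE (impE (ha (HAAx.orE φ ψ χ)) (impI h1)) (impI h2)) h

-- falsum
theorem efq (h : Drv T Γ Formula.falsum) : Drv T Γ φ := impE (ha (HAAx.efq φ)) h

theorem negE (h1 : Drv T Γ φ.neg) (h2 : Drv T Γ φ) : Drv T Γ χ := efq (impE h1 h2)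

end Drv

end SemiClassicalArith
namespace SemiClassicalArith
open Formula

namespace Proves

variable {T : Set Formula} {φ ψ χ δ : Formula}

/-- Generalization + distribution: from `⊢ φ ⊃ ψ` infer `⊢ ∀φ ⊃ ∀ψ`. -/
theorem mono_all (h : Proves T (φ.imp ψ)) : Proves T (φ.all.imp ψ.all) :=
  (Proves.ha (HAAx.allK φ ψ)).mp h.gen

/-- `⊢ φ ⊃ (lift 0 (ex φ))`. -/
theorem ex_self_lift (T : Set Formula) (φ : Formula) :
    Proves T (φ.imp ((φ.ex).lift 0)) := by
  have h := Proves.ha (T := T) (HAAx.exI (φ.lift 1) (Term.var 0))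
  rw [Formula.lift_succ_subst_var φ 0] at h
  exact h

/-- `⊢ (lift 0 (all φ)) ⊃ φ`. -/
theorem all_self_lift (T : Set Formula) (φ : Formula) :
    Proves T (((φ.all).lift 0).imp φ) := by
  have h := Proves.ha (T := T) (HAAx.allE (φ.lift 1) (Term.var 0))
  rw [Formula.lift_succ_subst_var φ 0] at h
  exact h

/-- From `⊢ lift ψ ⊃ φ` infer `⊢ ψ ⊃ ∀ φ`. -/
theorem all_intro (h : Proves T ((ψ.lift 0).imp φ)) : Proves T (ψ.imp φ.all) :=
  (Proves.ha (HAAx.allVac ψ)).imp_trans (mono_all h)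

/-- From `⊢ φ ⊃ lift ψ` infer `⊢ ∃ φ ⊃ ψ`. -/
theorem ex_elim (h : Proves T (φ.imp (ψ.lift 0))) : Proves T (φ.ex.imp ψ) :=
  (Proves.ha (HAAx.exE φ ψ)).mp h.gen

theorem mono_ex (h : Proves T (φ.imp ψ)) : Proves T (φ.ex.imp ψ.ex) :=
  ex_elim (h.imp_trans (ex_self_lift T ψ))

/-- `⊢ ∀(lift φ ⊃ ψ) ⊃ (φ ⊃ ∀ ψ)` : the intuitionistic direction of CD. -/
theorem cd_converse (T : Set Formula) (φ ψ : Formula) :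
    Proves T ((((φ.lift 0).imp ψ).all).imp (φ.imp ψ.all)) := by
  have h1 : Proves T ((((φ.lift 0).imp ψ).all).imp (((φ.lift 0).all).imp ψ.all)) :=
    Proves.ha (HAAx.allK (φ.lift 0) ψ)
  have h2 : Proves T (φ.imp ((φ.lift 0).all)) := Proves.ha (HAAx.allVac φ)
  -- now swap: want (A ⊃ B ⊃ C), have h1 : A ⊃ (B' ⊃ C), h2 : φ ⊃ B'
  refine Drv.toProves ?_
  refine Drv.impI (Drv.impI ?_)
  exact Drv.impE (Drv.impE (Drv.ofProves h1) Drv.hyp1) (Drv.impE (Drv.ofProves h2) Drv.hyp0)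

end Proves

namespace Drv

variable {T : Set Formula} {Γ : List Formula} {φ ψ χ δ : Formula}

theorem allE (t : Term) (h : Drv T Γ φ.all) : Drv T Γ (φ.subst 0 t) :=
  impE (ha (HAAx.allE φ t)) h

theorem exI (t : Term) (h : Drv T Γ (φ.subst 0 t)) : Drv T Γ φ.ex :=
  impE (ha (HAAx.exI φ t)) h

end Drv

/-! ### Propositional lemma library (all as provable implications) -/

namespace Proves

variable {T : Set Formula} {φ ψ χ δ φ' ψ' : Formula}

theorem or_comm_imp (T : Set Formula) (φ ψ : Formula) : Proves T ((φ.or ψ).imp (ψ.or φ)) :=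
  Drv.toProves (Drv.impI (Drv.orE Drv.hyp0 (Drv.orI2 Drv.hyp0) (Drv.orI1 Drv.hyp0)))

theorem or_mono (h1 : Proves T (φ.imp φ')) (h2 : Proves T (ψ.imp ψ')) :
    Proves T ((φ.or ψ).imp (φ'.or ψ')) :=
  Drv.toProves (Drv.impI (Drv.orE Drv.hyp0
    (Drv.orI1 (Drv.impE (Drv.ofProves h1) Drv.hyp0))
    (Drv.orI2 (Drv.impE (Drv.ofProves h2) Drv.hyp0))))

theorem and_mono (h1 : Proves T (φ.imp φ')) (h2 : Proves T (ψ.imp ψ')) :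
    Proves T ((φ.and ψ).imp (φ'.and ψ')) :=
  Drv.toProves (Drv.impI (Drv.andI
    (Drv.impE (Drv.ofProves h1) (Drv.andE1 Drv.hyp0))
    (Drv.impE (Drv.ofProves h2) (Drv.andE2 Drv.hyp0))))

/-- `⊢ φ ⊃ ¬¬φ`. -/
theorem dni (T : Set Formula) (φ : Formula) : Proves T (φ.imp φ.neg.neg) :=
  Drv.toProves (Drv.impI (Drv.impI (Drv.impE Drv.hyp0 Drv.hyp1)))

theorem contrapose (h : Proves T (φ.imp ψ)) : Proves T (ψ.neg.imp φ.neg) :=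
  Drv.toProves (Drv.impI (Drv.impI (Drv.impE Drv.hyp1 (Drv.impE (Drv.ofProves h) Drv.hyp0))))

theorem nn_mono (h : Proves T (φ.imp ψ)) : Proves T (φ.neg.neg.imp ψ.neg.neg) :=
  contrapose (contrapose h)

/-- `⊢ ¬¬¬φ ⊃ ¬φ`. -/
theorem nnn_imp_n (T : Set Formula) (φ : Formula) : Proves T (φ.neg.neg.neg.imp φ.neg) :=
  contrapose (dni T φ)

/-- `⊢ ¬¬(φ ⊃ ψ) ⊃ (¬¬φ ⊃ ¬¬ψ)`. -/
theorem nn_imp_distrib (T : Set Formula) (φ ψ : Formula) :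
    Proves T (((φ.imp ψ).neg.neg).imp (φ.neg.neg.imp ψ.neg.neg)) := by
  refine Drv.toProves (Drv.impI (Drv.impI (Drv.impI ?_)))
  -- Γ = ¬ψ :: ¬¬φ :: ¬¬(φ⊃ψ); goal falsum
  refine Drv.impE (Drv.hyp2 (φ := (φ.imp ψ).neg.neg)) (Drv.impI ?_)
  -- Γ = (φ⊃ψ) :: ¬ψ :: ¬¬φ; goal falsum
  refine Drv.impE Drv.hyp2 (Drv.impI ?_)
  -- Γ = φ :: (φ⊃ψ) :: ¬ψ :: ¬¬φ
  exact Drv.impE Drv.hyp2 (Drv.impE Drv.hyp1 Drv.hyp0)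

/-- `⊢ (¬¬φ ∨ ¬¬ψ) ⊃ ¬¬(φ ∨ ψ)`. -/
theorem nn_or_in (T : Set Formula) (φ ψ : Formula) :
    Proves T (((φ.neg.neg).or (ψ.neg.neg)).imp ((φ.or ψ).neg.neg)) := by
  refine Drv.toProves (Drv.impI ?_)
  refine Drv.orE Drv.hyp0 ?_ ?_
  · refine Drv.impI ?_
    refine Drv.impE Drv.hyp1 (Drv.impI (Drv.impE Drv.hyp1 (Drv.orI1 Drv.hyp0)))
  · refine Drv.impI ?_
    refine Drv.impE Drv.hyp1 (Drv.impI (Drv.impE Drv.hyp1 (Drv.orI2 Drv.hyp0)))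

/-- `⊢ ¬¬¬¬φ ⊃ ¬¬φ`. -/
theorem nnnn (T : Set Formula) (φ : Formula) : Proves T (φ.neg.neg.neg.neg.imp φ.neg.neg) :=
  nnn_imp_n T φ.neg

theorem imp_swap (h : Proves T (φ.imp (ψ.imp χ))) : Proves T (ψ.imp (φ.imp χ)) :=
  Drv.toProves (Drv.impI (Drv.impI
    (Drv.impE (Drv.impE (Drv.ofProves h) Drv.hyp0) Drv.hyp1)))

end Proves

end SemiClassicalArith
namespace SemiClassicalArith
open Formula

/-! ### Structural lemmas on formula classes -/

theorem Formula.isQF.noDollar : ∀ {φ : Formula}, φ.isQF → φ.noDollar := by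
  intro φ
  induction φ with
  | falsum => intro _; trivial
  | dollar => intro h; exact h
  | eq t u => intro _; trivial
  | and φ ψ ih1 ih2 => intro h; exact ⟨ih1 h.1, ih2 h.2⟩
  | or φ ψ ih1 ih2 => intro h; exact ⟨ih1 h.1, ih2 h.2⟩
  | imp φ ψ ih1 ih2 => intro h; exact ⟨ih1 h.1, ih2 h.2⟩
  | all φ _ => intro h; exact h.elim
  | ex φ _ => intro h; exact h.elim

theorem Formula.isQF.neg {φ : Formula} (h : φ.isQF) : φ.neg.isQF := ⟨h, trivial⟩

theorem IsSigma.noDollar : ∀ {k : ℕ} {φ : Formula}, IsSigma k φ → φ.noDollar := by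
  intro k φ h
  refine IsSigma.rec (motive_1 := fun _ φ _ => φ.noDollar) (motive_2 := fun _ φ _ => φ.noDollar)
    ?_ ?_ ?_ ?_ ?_ ?_ h
  · intro φ h; exact h.noDollar
  · intro _ _ _ ih; exact ih
  · intro _ _ _ ih; exact ih
  · intro φ h; exact h.noDollar
  · intro _ _ _ ih; exact ih
  · intro _ _ _ ih; exact ih

theorem IsPi.noDollar : ∀ {k : ℕ} {φ : Formula}, IsPi k φ → φ.noDollar := by
  intro k φ h
  refine IsPi.rec (motive_1 := fun _ φ _ => φ.noDollar) (motive_2 := fun _ φ _ => φ.noDollar)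
    ?_ ?_ ?_ ?_ ?_ ?_ h
  · intro φ h; exact h.noDollar
  · intro _ _ _ ih; exact ih
  · intro _ _ _ ih; exact ih
  · intro φ h; exact h.noDollar
  · intro _ _ _ ih; exact ih
  · intro _ _ _ ih; exact ih

theorem IsSigma.mono : ∀ {k : ℕ} {φ : Formula}, IsSigma k φ → IsSigma (k+1) φ := by
  intro k φ h
  refine IsSigma.rec (motive_1 := fun k φ _ => IsSigma (k+1) φ)
    (motive_2 := fun k φ _ => IsPi (k+1) φ) ?_ ?_ ?_ ?_ ?_ ?_ h
  · intro φ h; exact IsSigma.ofPi (IsPi.qf h)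
  · intro _ _ _ ih; exact IsSigma.ofPi ih
  · intro _ _ _ ih; exact IsSigma.ex ih
  · intro φ h; exact IsPi.ofSigma (IsSigma.qf h)
  · intro _ _ _ ih; exact IsPi.ofSigma ih
  · intro _ _ _ ih; exact IsPi.all ih

theorem IsPi.mono : ∀ {k : ℕ} {φ : Formula}, IsPi k φ → IsPi (k+1) φ := by
  intro k φ h
  refine IsPi.rec (motive_1 := fun k φ _ => IsSigma (k+1) φ)
    (motive_2 := fun k φ _ => IsPi (k+1) φ) ?_ ?_ ?_ ?_ ?_ ?_ h
  · intro φ h; exact IsSigma.ofPi (IsPi.qf h)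
  · intro _ _ _ ih; exact IsSigma.ofPi ih
  · intro _ _ _ ih; exact IsSigma.ex ih
  · intro φ h; exact IsPi.ofSigma (IsSigma.qf h)
  · intro _ _ _ ih; exact IsPi.ofSigma ih
  · intro _ _ _ ih; exact IsPi.all ih

theorem IsSigma.mono_le {j k : ℕ} {φ : Formula} (h : j ≤ k) (hs : IsSigma j φ) :
    IsSigma k φ := by
  induction h with
  | refl => exact hs
  | step _ ih => exact ih.mono

theorem IsPi.mono_le {j k : ℕ} {φ : Formula} (h : j ≤ k) (hs : IsPi j φ) : IsPi k φ := by
  induction h with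
  | refl => exact hs
  | step _ ih => exact ih.mono

theorem IsSigma.le_pi {j k : ℕ} {φ : Formula} (h : j < k) (hs : IsSigma j φ) : IsPi k φ := by
  rcases Nat.exists_eq_add_of_lt h with ⟨m, rfl⟩
  exact IsPi.mono_le (by omega) (IsPi.ofSigma hs)

theorem IsPi.le_sigma {j k : ℕ} {φ : Formula} (h : j < k) (hs : IsPi j φ) : IsSigma k φ := by
  rcases Nat.exists_eq_add_of_lt h with ⟨m, rfl⟩
  exact IsSigma.mono_le (by omega) (IsSigma.ofPi hs)

theorem Formula.dual_of_qf {φ : Formula} (h : φ.isQF) : φ.dual = φ.neg := by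
  cases φ <;> first | rfl | exact h.elim

theorem IsSigma.dual : ∀ {k : ℕ} {φ : Formula}, IsSigma k φ → IsPi k φ.dual := by
  intro k φ h
  refine IsSigma.rec (motive_1 := fun k φ _ => IsPi k φ.dual)
    (motive_2 := fun k φ _ => IsSigma k φ.dual) ?_ ?_ ?_ ?_ ?_ ?_ h
  · intro φ h; rw [Formula.dual_of_qf h]; exact IsPi.qf h.neg
  · intro _ _ _ ih; exact IsPi.ofSigma ih
  · intro _ _ _ ih; exact IsPi.all ih
  · intro φ h; rw [Formula.dual_of_qf h]; exact IsSigma.qf h.neg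
  · intro _ _ _ ih; exact IsSigma.ofPi ih
  · intro _ _ _ ih; exact IsSigma.ex ih

theorem IsPi.dual : ∀ {k : ℕ} {φ : Formula}, IsPi k φ → IsSigma k φ.dual := by
  intro k φ h
  refine IsPi.rec (motive_1 := fun k φ _ => IsPi k φ.dual)
    (motive_2 := fun k φ _ => IsSigma k φ.dual) ?_ ?_ ?_ ?_ ?_ ?_ h
  · intro φ h; rw [Formula.dual_of_qf h]; exact IsPi.qf h.neg
  · intro _ _ _ ih; exact IsPi.ofSigma ih
  · intro _ _ _ ih; exact IsPi.all ih
  · intro φ h; rw [Formula.dual_of_qf h]; exact IsSigma.qf h.neg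
  · intro _ _ _ ih; exact IsSigma.ofPi ih
  · intro _ _ _ ih; exact IsSigma.ex ih

/-! ### Quantifier-free excluded middle -/

theorem Proves.qf_lem {T : Set Formula} : ∀ {φ : Formula}, φ.isQF → Proves T (φ.or φ.neg) := by
  intro φ
  induction φ with
  | falsum =>
    intro _
    exact (Proves.ha (HAAx.orI2 _ _)).mp (Proves.imp_refl T Formula.falsum)
  | dollar => intro h; exact h.elim
  | eq t u => intro _; exact Proves.ha (HAAx.atomDec t u)
  | and φ ψ ih1 ih2 =>
    intro h
    refine Drv.toProves ?_
    refine Drv.orE (Drv.ofProves (ih1 h.1)) ?_ ?_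
    · refine Drv.orE (Drv.ofProves (ih2 h.2)) ?_ ?_
      · exact Drv.orI1 (Drv.andI Drv.hyp1 Drv.hyp0)
      · exact Drv.orI2 (Drv.impI (Drv.impE Drv.hyp1 (Drv.andE2 Drv.hyp0)))
    · exact Drv.orI2 (Drv.impI (Drv.impE Drv.hyp1 (Drv.andE1 Drv.hyp0)))
  | or φ ψ ih1 ih2 =>
    intro h
    refine Drv.toProves ?_
    refine Drv.orE (Drv.ofProves (ih1 h.1)) ?_ ?_
    · exact Drv.orI1 (Drv.orI1 Drv.hyp0)
    · refine Drv.orE (Drv.ofProves (ih2 h.2)) ?_ ?_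
      · exact Drv.orI1 (Drv.orI2 Drv.hyp0)
      · refine Drv.orI2 (Drv.impI ?_)
        exact Drv.orE Drv.hyp0 (Drv.impE Drv.hyp3 Drv.hyp0) (Drv.impE Drv.hyp2 Drv.hyp0)
  | imp φ ψ ih1 ih2 =>
    intro h
    refine Drv.toProves ?_
    refine Drv.orE (Drv.ofProves (ih2 h.2)) ?_ ?_
    · exact Drv.orI1 (Drv.impI Drv.hyp1)
    · refine Drv.orE (Drv.ofProves (ih1 h.1)) ?_ ?_
      · refine Drv.orI2 (Drv.impI ?_)
        exact Drv.impE Drv.hyp2 (Drv.impE Drv.hyp0 Drv.hyp1)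
      · refine Drv.orI1 (Drv.impI ?_)
        exact Drv.efq (Drv.impE Drv.hyp1 Drv.hyp0)
  | all φ _ => intro h; exact h.elim
  | ex φ _ => intro h; exact h.elim

/-- From excluded middle for `φ` we get stability. -/
theorem Proves.lem_stab {T : Set Formula} {φ : Formula} (h : Proves T (φ.or φ.neg)) :
    Proves T (φ.neg.neg.imp φ) := by
  refine Drv.toProves (Drv.impI ?_)
  refine Drv.orE (Drv.ofProves h) Drv.hyp0 ?_
  exact Drv.efq (Drv.impE Drv.hyp1 Drv.hyp0)

theorem Proves.qf_stab {T : Set Formula} {φ : Formula} (h : φ.isQF) :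
    Proves T (φ.neg.neg.imp φ) := Proves.lem_stab (Proves.qf_lem h)

/-! ### The dual of a prenex formula -/

/-- For prenex formulas, the dual implies the negation (intuitionistically). -/
theorem Proves.dual_imp_neg_sigma {T : Set Formula} :
    ∀ {k : ℕ} {φ : Formula}, IsSigma k φ → Proves T (φ.dual.imp φ.neg) := by
  intro k φ h
  refine IsSigma.rec (motive_1 := fun _ φ _ => Proves T (φ.dual.imp φ.neg))
    (motive_2 := fun _ φ _ => Proves T (φ.dual.imp φ.neg)) ?_ ?_ ?_ ?_ ?_ ?_ h
  · intro φ h; rw [Formula.dual_of_qf h]; exact Proves.imp_refl T _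
  · intro _ _ _ ih; exact ih
  · intro k φ _ ih
    -- dual (ex φ) = all (dual φ); goal : ⊢ ∀ (dual φ) ⊃ ¬ ∃ φ
    show Proves T ((φ.dual.all).imp (φ.ex.imp Formula.falsum))
    refine Proves.imp_swap (Proves.ex_elim ?_)
    -- ⊢ φ ⊃ lift 0 (∀ dual φ ⊃ ⊥)
    show Proves T (φ.imp ((((φ.dual.all).imp Formula.falsum)).lift 0))
    have h1 : Proves T ((((φ.dual.all).lift 0)).imp φ.neg) :=
      (Proves.all_self_lift T φ.dual).imp_trans ih
    refine Drv.toProves (Drv.impI (Drv.impI ?_))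
    exact Drv.impE (Drv.impE (Drv.ofProves h1) Drv.hyp0) Drv.hyp1
  · intro φ h; rw [Formula.dual_of_qf h]; exact Proves.imp_refl T _
  · intro _ _ _ ih; exact ih
  · intro k φ _ ih
    -- dual (all φ) = ex (dual φ); goal: ⊢ ∃ (dual φ) ⊃ ¬ ∀ φ
    show Proves T ((φ.dual.ex).imp (φ.all.neg))
    refine Proves.ex_elim ?_
    show Proves T (φ.dual.imp (((φ.all).imp Formula.falsum).lift 0))
    have h1 : Proves T (((φ.all).lift 0).imp φ) := Proves.all_self_lift T φ
    refine Drv.toProves (Drv.impI (Drv.impI ?_))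
    exact Drv.impE (Drv.impE (Drv.ofProves ih) Drv.hyp1)
      (Drv.impE (Drv.ofProves h1) Drv.hyp0)

theorem Proves.dual_imp_neg_pi {T : Set Formula} {k : ℕ} {φ : Formula} (h : IsPi k φ) :
    Proves T (φ.dual.imp φ.neg) := Proves.dual_imp_neg_sigma (IsSigma.ofPi h)

/-- For prenex formulas, `⊢ φ^⊥^⊥ ⊃ φ`. -/
theorem Proves.dual_dual_sigma {T : Set Formula} :
    ∀ {k : ℕ} {φ : Formula}, IsSigma k φ → Proves T (φ.dual.dual.imp φ) := by
  intro k φ h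
  refine IsSigma.rec (motive_1 := fun _ φ _ => Proves T (φ.dual.dual.imp φ))
    (motive_2 := fun _ φ _ => Proves T (φ.dual.dual.imp φ)) ?_ ?_ ?_ ?_ ?_ ?_ h
  · intro φ h
    rw [Formula.dual_of_qf h, Formula.dual_of_qf h.neg]
    exact Proves.qf_stab h
  · intro _ _ _ ih; exact ih
  · intro k φ _ ih
    show Proves T ((φ.dual.dual.ex).imp φ.ex)
    exact Proves.mono_ex ih
  · intro φ h
    rw [Formula.dual_of_qf h, Formula.dual_of_qf h.neg]
    exact Proves.qf_stab h
  · intro _ _ _ ih; exact ih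
  · intro k φ _ ih
    show Proves T ((φ.dual.dual.all).imp φ.all)
    exact Proves.mono_all ih

theorem Proves.dual_dual_pi {T : Set Formula} {k : ℕ} {φ : Formula} (h : IsPi k φ) :
    Proves T (φ.dual.dual.imp φ) := Proves.dual_dual_sigma (IsSigma.ofPi h)

end SemiClassicalArith
namespace SemiClassicalArith

/-! ### Renaming of variables and closure of provability under renaming -/

/-- Push a renaming under a binder. -/
def upRen (ρ : ℕ → ℕ) : ℕ → ℕ
  | 0 => 0
  | n + 1 => ρ n + 1

def Term.ren (ρ : ℕ → ℕ) : Term → Term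
  | .var n => .var (ρ n)
  | .func c a ts => .func c a fun i => (ts i).ren ρ

def Formula.ren (ρ : ℕ → ℕ) : Formula → Formula
  | .falsum => .falsum
  | .dollar => .dollar
  | .eq t u => .eq (t.ren ρ) (u.ren ρ)
  | .and φ ψ => .and (φ.ren ρ) (ψ.ren ρ)
  | .or φ ψ => .or (φ.ren ρ) (ψ.ren ρ)
  | .imp φ ψ => .imp (φ.ren ρ) (ψ.ren ρ)
  | .all φ => .all (φ.ren (upRen ρ))
  | .ex φ => .ex (φ.ren (upRen ρ))

theorem upRen_comp (ρ ρ' : ℕ → ℕ) : upRen (ρ' ∘ ρ) = upRen ρ' ∘ upRen ρ := by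
  funext n; cases n <;> rfl

theorem Term.ren_comp (ρ ρ' : ℕ → ℕ) : ∀ t : Term, Term.ren ρ' (Term.ren ρ t) = Term.ren (ρ' ∘ ρ) t := by
  intro t
  induction t with
  | var n => rfl
  | func c a ts ih => simp only [Term.ren]; congr 1; funext i; exact ih i

theorem Formula.ren_comp (ρ ρ' : ℕ → ℕ) :
    ∀ φ : Formula, Formula.ren ρ' (Formula.ren ρ φ) = Formula.ren (ρ' ∘ ρ) φ := by
  intro φ
  induction φ generalizing ρ ρ' with
  | falsum => rfl
  | dollar => rfl
  | eq t u => simp [Formula.ren, Term.ren_comp]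
  | and φ ψ ih1 ih2 => simp [Formula.ren, ih1, ih2]
  | or φ ψ ih1 ih2 => simp [Formula.ren, ih1, ih2]
  | imp φ ψ ih1 ih2 => simp [Formula.ren, ih1, ih2]
  | all φ ih => simp [Formula.ren, ih, upRen_comp]
  | ex φ ih => simp [Formula.ren, ih, upRen_comp]

/-- The renaming realizing `lift d`. -/
def liftRen (d : ℕ) : ℕ → ℕ := fun n => if n < d then n else n + 1

theorem upRen_liftRen (d : ℕ) : upRen (liftRen d) = liftRen (d + 1) := by
  funext n
  cases n with
  | zero => simp [upRen, liftRen]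
  | succ n =>
    simp only [upRen, liftRen]
    by_cases h : n < d
    · simp [h, Nat.succ_lt_succ h]
    · simp [h, fun hh => h (Nat.lt_of_succ_lt_succ hh)]

theorem Term.lift_eq_ren (d : ℕ) : ∀ t : Term, t.lift d = Term.ren (liftRen d) t := by
  intro t
  induction t with
  | var n =>
    simp only [Term.lift, Term.ren, liftRen]
    by_cases h : n < d <;> simp [h]
  | func c a ts ih => simp only [Term.lift, Term.ren]; congr 1; funext i; exact ih i

theorem Formula.lift_eq_ren (d : ℕ) :
    ∀ φ : Formula, φ.lift d = Formula.ren (liftRen d) φ := by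
  intro φ
  induction φ generalizing d with
  | falsum => rfl
  | dollar => rfl
  | eq t u => simp [Formula.lift, Formula.ren, Term.lift_eq_ren]
  | and φ ψ ih1 ih2 => simp [Formula.lift, Formula.ren, ih1, ih2]
  | or φ ψ ih1 ih2 => simp [Formula.lift, Formula.ren, ih1, ih2]
  | imp φ ψ ih1 ih2 => simp [Formula.lift, Formula.ren, ih1, ih2]
  | all φ ih => simp [Formula.lift, Formula.ren, ih, upRen_liftRen]
  | ex φ ih => simp [Formula.lift, Formula.ren, ih, upRen_liftRen]

/-- The renaming realizing `subst k (var m)`. -/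
def substRen (k m : ℕ) : ℕ → ℕ := fun n => if n < k then n else if n = k then m else n - 1

theorem upRen_substRen (k m : ℕ) : upRen (substRen k m) = substRen (k+1) (m+1) := by
  funext n
  cases n with
  | zero => simp [upRen, substRen]
  | succ n =>
    simp only [upRen, substRen]
    rcases Nat.lt_trichotomy n k with h | h | h
    · simp [h, Nat.succ_lt_succ h, Nat.ne_of_lt (Nat.succ_lt_succ h)]
    · subst h; simp
    · have h1 : ¬ n < k := by omega
      have h2 : ¬ n = k := by omega
      have h3 : ¬ n + 1 < k + 1 := by omega
      have h4 : ¬ n + 1 = k + 1 := by omega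
      simp [h1, h2, h3, h4]; omega

theorem Term.subst_var_eq_ren (k m : ℕ) :
    ∀ t : Term, Term.subst k (Term.var m) t = Term.ren (substRen k m) t := by
  intro t
  induction t with
  | var n =>
    simp only [Term.subst, Term.ren, substRen]
    rcases Nat.lt_trichotomy n k with h | h | h
    · simp [h]
    · subst h; simp
    · have h1 : ¬ n < k := by omega
      have h2 : ¬ n = k := by omega
      simp [h1, h2]
  | func c a ts ih => simp only [Term.subst, Term.ren]; congr 1; funext i; exact ih i

theorem Formula.subst_var_eq_ren (k m : ℕ) :
    ∀ φ : Formula, φ.subst k (Term.var m) = Formula.ren (substRen k m) φ := by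
  intro φ
  induction φ generalizing k m with
  | falsum => rfl
  | dollar => rfl
  | eq t u => simp [Formula.subst, Formula.ren, Term.subst_var_eq_ren]
  | and φ ψ ih1 ih2 => simp [Formula.subst, Formula.ren, ih1, ih2]
  | or φ ψ ih1 ih2 => simp [Formula.subst, Formula.ren, ih1, ih2]
  | imp φ ψ ih1 ih2 => simp [Formula.subst, Formula.ren, ih1, ih2]
  | all φ ih =>
    have hv : Term.lift 0 (Term.var m) = Term.var (m+1) := by simp [Term.lift]
    simp only [Formula.subst, Formula.ren, upRen_substRen, hv, ih]
  | ex φ ih =>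
    have hv : Term.lift 0 (Term.var m) = Term.var (m+1) := by simp [Term.lift]
    simp only [Formula.subst, Formula.ren, upRen_substRen, hv, ih]

/-! #### Bounds on free variables -/

def Term.BddBy (N : ℕ) : Term → Prop
  | .var n => n < N
  | .func _ _ ts => ∀ i, (ts i).BddBy N

def Formula.BddBy : ℕ → Formula → Prop
  | _, .falsum => True
  | _, .dollar => True
  | N, .eq t u => t.BddBy N ∧ u.BddBy N
  | N, .and φ ψ => φ.BddBy N ∧ ψ.BddBy N
  | N, .or φ ψ => φ.BddBy N ∧ ψ.BddBy N
  | N, .imp φ ψ => φ.BddBy N ∧ ψ.BddBy N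
  | N, .all φ => φ.BddBy (N + 1)
  | N, .ex φ => φ.BddBy (N + 1)

theorem Term.BddBy.mono : ∀ {t : Term} {N M : ℕ}, N ≤ M → t.BddBy N → t.BddBy M := by
  intro t
  induction t with
  | var n => intro N M h hb; exact Nat.lt_of_lt_of_le hb h
  | func c a ts ih => intro N M h hb i; exact ih i h (hb i)

theorem Formula.BddBy.mono : ∀ {φ : Formula} {N M : ℕ}, N ≤ M → φ.BddBy N → φ.BddBy M := by
  intro φ
  induction φ with
  | falsum => intro _ _ _ _; trivial
  | dollar => intro _ _ _ _; trivial
  | eq t u => intro N M h hb; exact ⟨hb.1.mono h, hb.2.mono h⟩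
  | and φ ψ ih1 ih2 => intro N M h hb; exact ⟨ih1 h hb.1, ih2 h hb.2⟩
  | or φ ψ ih1 ih2 => intro N M h hb; exact ⟨ih1 h hb.1, ih2 h hb.2⟩
  | imp φ ψ ih1 ih2 => intro N M h hb; exact ⟨ih1 h hb.1, ih2 h hb.2⟩
  | all φ ih => intro N M h hb; exact ih (Nat.succ_le_succ h) hb
  | ex φ ih => intro N M h hb; exact ih (Nat.succ_le_succ h) hb

theorem Term.exists_bdd : ∀ t : Term, ∃ N, t.BddBy N := by
  intro t
  induction t with
  | var n => exact ⟨n + 1, Nat.lt_succ_self n⟩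
  | func c a ts ih =>
    choose f hf using ih
    refine ⟨(Finset.univ.sup f), fun i => (hf i).mono ?_⟩
    exact Finset.le_sup (Finset.mem_univ i)

theorem Formula.exists_bdd : ∀ φ : Formula, ∃ N, φ.BddBy N := by
  intro φ
  induction φ with
  | falsum => exact ⟨0, trivial⟩
  | dollar => exact ⟨0, trivial⟩
  | eq t u =>
    obtain ⟨N1, h1⟩ := t.exists_bdd
    obtain ⟨N2, h2⟩ := u.exists_bdd
    exact ⟨max N1 N2, h1.mono (Nat.le_max_left _ _), h2.mono (Nat.le_max_right _ _)⟩
  | and φ ψ ih1 ih2 =>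
    obtain ⟨N1, h1⟩ := ih1; obtain ⟨N2, h2⟩ := ih2
    exact ⟨max N1 N2, h1.mono (Nat.le_max_left _ _), h2.mono (Nat.le_max_right _ _)⟩
  | or φ ψ ih1 ih2 =>
    obtain ⟨N1, h1⟩ := ih1; obtain ⟨N2, h2⟩ := ih2
    exact ⟨max N1 N2, h1.mono (Nat.le_max_left _ _), h2.mono (Nat.le_max_right _ _)⟩
  | imp φ ψ ih1 ih2 =>
    obtain ⟨N1, h1⟩ := ih1; obtain ⟨N2, h2⟩ := ih2
    exact ⟨max N1 N2, h1.mono (Nat.le_max_left _ _), h2.mono (Nat.le_max_right _ _)⟩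
  | all φ ih =>
    obtain ⟨N, h⟩ := ih
    exact ⟨N, show Formula.BddBy (N+1) φ from h.mono (Nat.le_succ N)⟩
  | ex φ ih =>
    obtain ⟨N, h⟩ := ih
    exact ⟨N, show Formula.BddBy (N+1) φ from h.mono (Nat.le_succ N)⟩

theorem Term.ren_congr : ∀ {t : Term} {N : ℕ} {ρ ρ' : ℕ → ℕ}, t.BddBy N →
    (∀ i < N, ρ i = ρ' i) → Term.ren ρ t = Term.ren ρ' t := by
  intro t
  induction t with
  | var n => intro N ρ ρ' hb hag; simp only [Term.ren]; rw [hag n hb]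
  | func c a ts ih =>
    intro N ρ ρ' hb hag
    simp only [Term.ren]; congr 1; funext i; exact ih i (hb i) hag

theorem Formula.ren_congr : ∀ {φ : Formula} {N : ℕ} {ρ ρ' : ℕ → ℕ}, φ.BddBy N →
    (∀ i < N, ρ i = ρ' i) → Formula.ren ρ φ = Formula.ren ρ' φ := by
  intro φ
  induction φ with
  | falsum => intros; rfl
  | dollar => intros; rfl
  | eq t u =>
    intro N ρ ρ' hb hag
    simp only [Formula.ren]
    rw [Term.ren_congr hb.1 hag, Term.ren_congr hb.2 hag]
  | and φ ψ ih1 ih2 =>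
    intro N ρ ρ' hb hag
    simp only [Formula.ren]
    rw [ih1 hb.1 hag, ih2 hb.2 hag]
  | or φ ψ ih1 ih2 =>
    intro N ρ ρ' hb hag
    simp only [Formula.ren]
    rw [ih1 hb.1 hag, ih2 hb.2 hag]
  | imp φ ψ ih1 ih2 =>
    intro N ρ ρ' hb hag
    simp only [Formula.ren]
    rw [ih1 hb.1 hag, ih2 hb.2 hag]
  | all φ ih =>
    intro N ρ ρ' hb hag
    simp only [Formula.ren]
    rw [ih hb (fun i hi => ?_)]
    cases i with
    | zero => rfl
    | succ i => simp only [upRen]; rw [hag i (Nat.lt_of_succ_lt_succ hi)]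
  | ex φ ih =>
    intro N ρ ρ' hb hag
    simp only [Formula.ren]
    rw [ih hb (fun i hi => ?_)]
    cases i with
    | zero => rfl
    | succ i => simp only [upRen]; rw [hag i (Nat.lt_of_succ_lt_succ hi)]

end SemiClassicalArith
namespace SemiClassicalArith

theorem upRen_id : upRen id = id := by
  funext n; cases n <;> rfl

theorem Term.ren_id : ∀ t : Term, Term.ren id t = t := by
  intro t
  induction t with
  | var n => rfl
  | func c a ts ih => simp only [Term.ren]; congr 1; funext i; exact ih i

theorem Formula.ren_id : ∀ φ : Formula, Formula.ren id φ = φ := by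
  intro φ
  induction φ with
  | falsum => rfl
  | dollar => rfl
  | eq t u => simp [Formula.ren, Term.ren_id]
  | and φ ψ ih1 ih2 => simp [Formula.ren, ih1, ih2]
  | or φ ψ ih1 ih2 => simp [Formula.ren, ih1, ih2]
  | imp φ ψ ih1 ih2 => simp [Formula.ren, ih1, ih2]
  | all φ ih => simp [Formula.ren, upRen_id, ih]
  | ex φ ih => simp [Formula.ren, upRen_id, ih]

/-- From `⊢ φ` conclude `⊢ φ[0 := t]`. -/
theorem Proves.subst0 {T : Set Formula} {φ : Formula} (t : Term) (h : Proves T φ) :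
    Proves T (φ.subst 0 t) :=
  (Proves.ha (HAAx.allE φ t)).mp h.gen

/-- Composite of instantiation renamings realizing an arbitrary renaming. -/
def chainFun (ρ : ℕ → ℕ) (N : ℕ) : ℕ → (ℕ → ℕ)
  | 0 => id
  | j+1 => substRen 0 (ρ j + (N - 1 - j)) ∘ chainFun ρ N j

theorem chainFun_spec (ρ : ℕ → ℕ) (N : ℕ) :
    ∀ j, j ≤ N → ∀ i, i < N → chainFun ρ N j i = if i < j then ρ i + (N - j) else i - j := by
  intro j
  induction j with
  | zero => intro _ i hi; simp [chainFun]
  | succ j ih =>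
    intro hj i hi
    have hj' : j ≤ N := Nat.le_of_succ_le hj
    simp only [chainFun, Function.comp_apply]
    rcases Nat.lt_trichotomy i j with h | h | h
    · rw [ih hj' i hi]; simp only [substRen]; split_ifs <;> omega
    · subst h; rw [ih hj' i hi]; simp only [substRen]; split_ifs <;> omega
    · rw [ih hj' i hi]; simp only [substRen]; split_ifs <;> omega

/-- Provability is closed under arbitrary renamings of free variables. -/
theorem Proves.ren_closed {T : Set Formula} {φ : Formula} (ρ : ℕ → ℕ) (h : Proves T φ) :
    Proves T (Formula.ren ρ φ) := by
  obtain ⟨N, hb⟩ := φ.exists_bdd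
  have key : ∀ j, Proves T (Formula.ren (chainFun ρ N j) φ) := by
    intro j
    induction j with
    | zero => rw [show chainFun ρ N 0 = id from rfl, Formula.ren_id]; exact h
    | succ j ih =>
      have h2 := ih.subst0 (Term.var (ρ j + (N - 1 - j)))
      rw [Formula.subst_var_eq_ren, Formula.ren_comp] at h2
      exact h2
  have := key N
  rwa [Formula.ren_congr hb (fun i hi => ?_)] at this
  rw [chainFun_spec ρ N N (Nat.le_refl N) i hi, if_pos hi, Nat.sub_self, Nat.add_zero]

/-- Provability is closed under lifting. -/
theorem Proves.lift_closed {T : Set Formula} {φ : Formula} (d : ℕ) (h : Proves T φ) :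
    Proves T (φ.lift d) := by
  rw [Formula.lift_eq_ren]; exact h.ren_closed _

/-- From `⊢ ∀φ` conclude `⊢ φ` (the bound variable becomes the free variable 0). -/
theorem Proves.strip {T : Set Formula} {φ : Formula} (h : Proves T φ.all) : Proves T φ := by
  have h2 : Proves T ((φ.lift 1).all) := h.lift_closed 0
  have h3 := (Proves.ha (T := T) (HAAx.allE (φ.lift 1) (Term.var 0))).mp h2
  rwa [Formula.lift_succ_subst_var φ 0] at h3

end SemiClassicalArith
namespace SemiClassicalArith
open Formula

/-! ### Simp lemmas for lift -/

@[simp] theorem Formula.lift_or (φ ψ : Formula) (d : ℕ) :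
    (φ.or ψ).lift d = (φ.lift d).or (ψ.lift d) := rfl
@[simp] theorem Formula.lift_and (φ ψ : Formula) (d : ℕ) :
    (φ.and ψ).lift d = (φ.lift d).and (ψ.lift d) := rfl
@[simp] theorem Formula.lift_imp (φ ψ : Formula) (d : ℕ) :
    (φ.imp ψ).lift d = (φ.lift d).imp (ψ.lift d) := rfl
@[simp] theorem Formula.lift_all (φ : Formula) (d : ℕ) :
    (φ.all).lift d = (φ.lift (d+1)).all := rfl
@[simp] theorem Formula.lift_ex (φ : Formula) (d : ℕ) :
    (φ.ex).lift d = (φ.lift (d+1)).ex := rfl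
@[simp] theorem Formula.lift_falsum (d : ℕ) :
    (Formula.falsum).lift d = Formula.falsum := rfl

/-! ### Classes closed under lift -/

theorem Formula.isQF.lift : ∀ {φ : Formula}, φ.isQF → ∀ d, (φ.lift d).isQF := by
  intro φ
  induction φ with
  | falsum => intro _ _; trivial
  | dollar => intro h; exact h.elim
  | eq t u => intro _ _; trivial
  | and φ ψ ih1 ih2 => intro h d; exact ⟨ih1 h.1 d, ih2 h.2 d⟩
  | or φ ψ ih1 ih2 => intro h d; exact ⟨ih1 h.1 d, ih2 h.2 d⟩
  | imp φ ψ ih1 ih2 => intro h d; exact ⟨ih1 h.1 d, ih2 h.2 d⟩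
  | all φ _ => intro h; exact h.elim
  | ex φ _ => intro h; exact h.elim

theorem IsSigma.lift : ∀ {j : ℕ} {φ : Formula}, IsSigma j φ → ∀ d, IsSigma j (φ.lift d) := by
  intro j φ h
  refine IsSigma.rec (motive_1 := fun j φ _ => ∀ d, IsSigma j (φ.lift d))
    (motive_2 := fun j φ _ => ∀ d, IsPi j (φ.lift d)) ?_ ?_ ?_ ?_ ?_ ?_ h
  · intro φ h d; exact IsSigma.qf (h.lift d)
  · intro _ _ _ ih d; exact IsSigma.ofPi (ih d)
  · intro _ _ _ ih d; exact IsSigma.ex (ih (d+1))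
  · intro φ h d; exact IsPi.qf (h.lift d)
  · intro _ _ _ ih d; exact IsPi.ofSigma (ih d)
  · intro _ _ _ ih d; exact IsPi.all (ih (d+1))

theorem IsPi.lift : ∀ {j : ℕ} {φ : Formula}, IsPi j φ → ∀ d, IsPi j (φ.lift d) := by
  intro j φ h
  refine IsPi.rec (motive_1 := fun j φ _ => ∀ d, IsSigma j (φ.lift d))
    (motive_2 := fun j φ _ => ∀ d, IsPi j (φ.lift d)) ?_ ?_ ?_ ?_ ?_ ?_ h
  · intro φ h d; exact IsSigma.qf (h.lift d)
  · intro _ _ _ ih d; exact IsSigma.ofPi (ih d)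
  · intro _ _ _ ih d; exact IsSigma.ex (ih (d+1))
  · intro φ h d; exact IsPi.qf (h.lift d)
  · intro _ _ _ ih d; exact IsPi.ofSigma (ih d)
  · intro _ _ _ ih d; exact IsPi.all (ih (d+1))

/-! ### The rules as closure properties -/

/-- Closure under the rule `(Π_{k+1} ∨ Π_{k+1})`-DNE-R. -/
def DneR (S : Set Formula) (k : ℕ) : Prop :=
  ∀ φ ψ : Formula, IsPi (k + 1) φ → IsPi (k + 1) ψ →
    Proves S (φ.or ψ).neg.neg → Proves S (φ.or ψ)

/-- Closure under the rule `Π_{k+1}`-CD-R. -/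
def CdR (S : Set Formula) (k : ℕ) : Prop :=
  ∀ φ ψ : Formula, IsPi (k + 1) φ → IsPi (k + 1) ψ →
    Proves S (((φ.lift 0).or ψ).all) → Proves S (φ.or ψ.all)

/-- `⊢ ∀x(liftφ ∨ ψ) ⊃ ¬¬(φ ∨ ∀xψ)`. -/
theorem Proves.cd_nn (T : Set Formula) (φ ψ : Formula) :
    Proves T ((((φ.lift 0).or ψ).all).imp ((φ.or ψ.all).neg.neg)) := by
  -- first: ⊢ (¬φ ∧ ∀x(liftφ ∨ ψ)) ⊃ ∀ψ
  have lem1 : Proves T (((φ.neg).and (((φ.lift 0).or ψ).all)).imp ψ.all) := by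
    refine Proves.all_intro ?_
    show Proves T ((((φ.lift 0).neg).and ((((φ.lift 0).or ψ).lift 1).all)).imp ψ)
    refine Drv.toProves (Drv.impI ?_)
    have hinst : Drv T [((φ.lift 0).neg).and ((((φ.lift 0).or ψ).lift 1).all)]
        ((((φ.lift 0).or ψ).lift 1).subst 0 (Term.var 0)) :=
      Drv.allE _ (Drv.andE2 Drv.hyp0)
    rw [Formula.lift_succ_subst_var] at hinst
    refine Drv.orE hinst ?_ ?_
    · exact Drv.efq (Drv.impE (Drv.andE1 Drv.hyp1) Drv.hyp0)
    · exact Drv.hyp0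
  refine Drv.toProves (Drv.impI (Drv.impI ?_))
  -- Γ = [¬(φ ∨ ∀ψ), ∀x(liftφ ∨ ψ)]
  have dnegφ : Drv T [(φ.or ψ.all).neg, ((φ.lift 0).or ψ).all] φ.neg :=
    Drv.impI (Drv.impE Drv.hyp1 (Drv.orI1 Drv.hyp0))
  have dall : Drv T [(φ.or ψ.all).neg, ((φ.lift 0).or ψ).all] ψ.all :=
    Drv.impE (Drv.ofProves lem1) (Drv.andI dnegφ Drv.hyp1)
  exact Drv.impE Drv.hyp0 (Drv.orI2 dall)

theorem DneR.toCdR {S : Set Formula} {k : ℕ} (h : DneR S k) : CdR S k := by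
  intro φ ψ hφ hψ hprem
  exact h φ ψ.all hφ hψ.all ((Proves.cd_nn S φ ψ).mp hprem)

/-! ### Bootstrapping prenex excluded middle from CD-R -/

theorem CdR.plem_sigma {S : Set Formula} {k : ℕ} (hcd : CdR S k) :
    ∀ {j : ℕ} {σ : Formula}, IsSigma j σ → j ≤ k → Proves S (σ.or σ.dual) := by
  intro j σ h
  refine IsSigma.rec (motive_1 := fun j σ _ => j ≤ k → Proves S (σ.or σ.dual))
    (motive_2 := fun j π _ => j ≤ k → Proves S (π.or π.dual)) ?_ ?_ ?_ ?_ ?_ ?_ h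
  · intro φ h _; rw [Formula.dual_of_qf h]; exact Proves.qf_lem h
  · intro _ _ _ ih hk; exact ih (by omega)
  · intro m φ hσ ih hk
    have h1 : Proves S (((φ.ex).lift 0).or φ.dual) :=
      (Proves.or_mono (Proves.ex_self_lift S φ) (Proves.imp_refl S φ.dual)).mp (ih hk)
    have h2 := hcd (φ.ex) (φ.dual)
      ((IsSigma.ex hσ).le_pi (by omega)) ((hσ.dual).mono_le (by omega)) h1.gen
    exact h2
  · intro φ h _; rw [Formula.dual_of_qf h]; exact Proves.qf_lem h
  · intro _ _ _ ih hk; exact ih (by omega)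
  · intro m φ hπ ih hk
    have h1 : Proves S (φ.or (((φ.dual).ex).lift 0)) :=
      (Proves.or_mono (Proves.imp_refl S φ) (Proves.ex_self_lift S φ.dual)).mp (ih hk)
    have h2 := (Proves.or_comm_imp S _ _).mp h1
    have h3 := hcd ((φ.dual).ex) φ
      ((IsSigma.ex hπ.dual).le_pi (by omega)) (hπ.mono_le (by omega)) h2.gen
    exact (Proves.or_comm_imp S _ _).mp h3

theorem CdR.plem_pi {S : Set Formula} {k : ℕ} (hcd : CdR S k) {j : ℕ} {π : Formula}
    (h : IsPi j π) (hk : j ≤ k) : Proves S (π.or π.dual) := by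
  refine IsPi.rec (motive_1 := fun j σ _ => j ≤ k → Proves S (σ.or σ.dual))
    (motive_2 := fun j π _ => j ≤ k → Proves S (π.or π.dual)) ?_ ?_ ?_ ?_ ?_ ?_ h hk
  · intro φ h _; rw [Formula.dual_of_qf h]; exact Proves.qf_lem h
  · intro _ _ _ ih hk; exact ih (by omega)
  · intro m φ hσ ih hk
    have h1 : Proves S (((φ.ex).lift 0).or φ.dual) :=
      (Proves.or_mono (Proves.ex_self_lift S φ) (Proves.imp_refl S φ.dual)).mp (ih hk)
    exact hcd (φ.ex) (φ.dual)
      ((IsSigma.ex hσ).le_pi (by omega)) ((hσ.dual).mono_le (by omega)) h1.gen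
  · intro φ h _; rw [Formula.dual_of_qf h]; exact Proves.qf_lem h
  · intro _ _ _ ih hk; exact ih (by omega)
  · intro m φ hπ ih hk
    have h1 : Proves S (φ.or (((φ.dual).ex).lift 0)) :=
      (Proves.or_mono (Proves.imp_refl S φ) (Proves.ex_self_lift S φ.dual)).mp (ih hk)
    have h2 := (Proves.or_comm_imp S _ _).mp h1
    have h3 := hcd ((φ.dual).ex) φ
      ((IsSigma.ex hπ.dual).le_pi (by omega)) (hπ.mono_le (by omega)) h2.gen
    exact (Proves.or_comm_imp S _ _).mp h3

theorem CdR.sigma_lem {S : Set Formula} {k : ℕ} (hcd : CdR S k) {j : ℕ} {σ : Formula}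
    (h : IsSigma j σ) (hk : j ≤ k) : Proves S (σ.or σ.neg) :=
  (Proves.or_mono (Proves.imp_refl S σ) (Proves.dual_imp_neg_sigma h)).mp
    (hcd.plem_sigma h hk)

theorem CdR.pi_lem {S : Set Formula} {k : ℕ} (hcd : CdR S k) {j : ℕ} {π : Formula}
    (h : IsPi j π) (hk : j ≤ k) : Proves S (π.or π.neg) :=
  (Proves.or_mono (Proves.imp_refl S π) (Proves.dual_imp_neg_pi h)).mp
    (hcd.plem_pi h hk)

/-- With CD-R closure, `⊢ ¬σ ⊃ σ^⊥` for `σ ∈ Σ_{k+1}` (and `Π_k`). -/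
theorem CdR.neg_imp_dual_sigma {S : Set Formula} {k : ℕ} (hcd : CdR S k) :
    ∀ {j : ℕ} {σ : Formula}, IsSigma j σ → j ≤ k + 1 → Proves S (σ.neg.imp σ.dual) := by
  intro j σ h
  refine IsSigma.rec (motive_1 := fun j σ _ => j ≤ k + 1 → Proves S (σ.neg.imp σ.dual))
    (motive_2 := fun j π _ => j ≤ k → Proves S (π.neg.imp π.dual)) ?_ ?_ ?_ ?_ ?_ ?_ h
  · intro φ h _; rw [Formula.dual_of_qf h]; exact Proves.imp_refl S _
  · intro _ _ _ ih hk; exact ih (by omega)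
  · intro m φ hσ ih hk
    -- goal : ⊢ ¬∃φ ⊃ ∀(φ.dual)
    show Proves S ((φ.ex.neg).imp ((φ.dual).all))
    refine Proves.all_intro ?_
    show Proves S ((((φ.ex).lift 0).neg).imp φ.dual)
    have hexi : Proves S (φ.imp ((φ.ex).lift 0)) := Proves.ex_self_lift S φ
    have ihm : Proves S (φ.neg.imp φ.dual) := ih (by omega)
    refine Drv.toProves (Drv.impI ?_)
    refine Drv.impE (Drv.ofProves ihm) (Drv.impI ?_)
    exact Drv.impE Drv.hyp1 (Drv.impE (Drv.ofProves hexi) Drv.hyp0)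
  · intro φ h _; rw [Formula.dual_of_qf h]; exact Proves.imp_refl S _
  · intro _ _ _ ih hk; exact ih (by omega)
  · intro m φ hπ ih hk
    -- goal: ⊢ ¬∀φ ⊃ ∃(φ.dual), using LEM for ∃(φ.dual) ∈ Σ_{m+1}, m+1 ≤ k
    have hlem : Proves S (((φ.dual).ex).or ((φ.dual).ex).dual) :=
      hcd.plem_sigma (IsSigma.ex hπ.dual) hk
    have hdd : Proves S (((φ.dual.dual).all).imp φ.all) :=
      Proves.mono_all (Proves.dual_dual_pi hπ)
    show Proves S (((φ.all).neg).imp ((φ.dual).ex))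
    refine Drv.toProves (Drv.impI ?_)
    refine Drv.orE (Drv.ofProves hlem) Drv.hyp0 ?_
    refine Drv.efq (Drv.impE Drv.hyp1 ?_)
    exact Drv.impE (Drv.ofProves hdd) Drv.hyp0

theorem CdR.neg_imp_dual_pi {S : Set Formula} {k : ℕ} (hcd : CdR S k) {j : ℕ} {π : Formula}
    (h : IsPi j π) (hk : j ≤ k) : Proves S (π.neg.imp π.dual) :=
  hcd.neg_imp_dual_sigma (IsSigma.ofPi h) (by omega)

end SemiClassicalArith
namespace SemiClassicalArith
open Formula

theorem CdR.dneR {S : Set Formula} {k : ℕ} (hcd : CdR S k) : DneR S k := by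
  have E2 : ∀ {j : ℕ} {φ : Formula}, IsPi j φ → j = k+1 → ∀ τ, IsSigma k τ →
      Proves S ((τ.or φ).neg.neg) → Proves S (τ.or φ) := by
    intro j φ h
    refine IsPi.rec (motive_1 := fun _ _ _ => True)
      (motive_2 := fun j φ _ => j = k+1 → ∀ τ, IsSigma k τ →
        Proves S ((τ.or φ).neg.neg) → Proves S (τ.or φ)) ?_ ?_ ?_ ?_ ?_ ?_ h
    · intros; trivial
    · intros; trivial
    · intros; trivial
    · intro φ _ hj; exact absurd hj (by omega)
    · intro m φ hσ _ hj τ hτ hnn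
      have hσk : IsSigma k φ := (show m = k by omega) ▸ hσ
      have lτ := hcd.sigma_lem hτ (le_refl k)
      have lφ := hcd.sigma_lem hσk (le_refl k)
      refine Drv.toProves ?_
      refine Drv.orE (Drv.ofProves lτ) (Drv.orI1 Drv.hyp0) ?_
      refine Drv.orE (Drv.ofProves lφ) (Drv.orI2 Drv.hyp0) ?_
      refine Drv.efq (Drv.impE (Drv.ofProves hnn) (Drv.impI ?_))
      exact Drv.orE Drv.hyp0 (Drv.impE Drv.hyp3 Drv.hyp0) (Drv.impE Drv.hyp2 Drv.hyp0)
    · intro m ψ' hπ ih hj τ hτ hnn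
      have hlift : Proves S ((((τ.lift 0).or ((ψ'.lift 1).all)).neg.neg)) :=
        hnn.lift_closed 0
      have h2 : Proves S (((τ.lift 0).or ψ').neg.neg) :=
        (Proves.nn_mono (Proves.or_mono (Proves.imp_refl S _)
          (Proves.all_self_lift S ψ'))).mp hlift
      have h3 := ih hj (τ.lift 0) (hτ.lift 0) h2
      exact hcd τ ψ' (hτ.le_pi (by omega)) (hj ▸ hπ) h3.gen
  intro φ ψ hφ hψ hnn
  refine IsPi.rec (motive_1 := fun _ _ _ => True)
    (motive_2 := fun j ψ _ => j = k+1 → ∀ φ, IsPi (k+1) φ →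
      Proves S ((φ.or ψ).neg.neg) → Proves S (φ.or ψ)) ?_ ?_ ?_ ?_ ?_ ?_ hψ rfl φ hφ hnn
  · intros; trivial
  · intros; trivial
  · intros; trivial
  · intro φ _ hj; exact absurd hj (by omega)
  · intro m ψ₀ hσ _ hj φ' hφ' hnn'
    have hσk : IsSigma k ψ₀ := (show m = k by omega) ▸ hσ
    have hc : Proves S ((ψ₀.or φ').neg.neg) :=
      (Proves.nn_mono (Proves.or_comm_imp S _ _)).mp hnn'
    exact (Proves.or_comm_imp S _ _).mp (E2 hφ' rfl ψ₀ hσk hc)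
  · intro m ψ' hπ ih hj φ' hφ' hnn'
    have hlift : Proves S ((((φ'.lift 0).or ((ψ'.lift 1).all)).neg.neg)) :=
      hnn'.lift_closed 0
    have h2 : Proves S (((φ'.lift 0).or ψ').neg.neg) :=
      (Proves.nn_mono (Proves.or_mono (Proves.imp_refl S _)
        (Proves.all_self_lift S ψ'))).mp hlift
    have h3 := ih hj (φ'.lift 0) (hφ'.lift 0) h2
    exact hcd φ' ψ' hφ' (hj ▸ hπ) h3.gen

end SemiClassicalArith
namespace SemiClassicalArith
open Formula

/-- Closure under the rule `Σ_{k+1}-DML^⊥-R`. -/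
def DmlR (S : Set Formula) (k : ℕ) : Prop :=
  ∀ φ ψ : Formula, IsSigma (k + 1) φ → IsSigma (k + 1) ψ →
    Proves S (φ.and ψ).neg → Proves S (φ.dual.or ψ.dual)

theorem DneR.toDmlR {S : Set Formula} {k : ℕ} (h : DneR S k) : DmlR S k := by
  intro φ ψ hφ hψ hprem
  have hcd : CdR S k := h.toCdR
  have keyφ : Proves S ((φ.dual.neg).imp φ.neg.neg) :=
    Proves.contrapose (hcd.neg_imp_dual_sigma hφ (le_refl _))
  have keyψ : Proves S ((ψ.dual.neg).imp ψ.neg.neg) :=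
    Proves.contrapose (hcd.neg_imp_dual_sigma hψ (le_refl _))
  refine h φ.dual ψ.dual hφ.dual hψ.dual ?_
  refine Drv.toProves (Drv.impI ?_)
  -- Γ₀ = [¬(φ.dual ∨ ψ.dual)], goal ⊥
  have dnφ : Drv S [(φ.dual.or ψ.dual).neg] φ.dual.neg :=
    Drv.impI (Drv.impE Drv.hyp1 (Drv.orI1 Drv.hyp0))
  have dnψ : Drv S [(φ.dual.or ψ.dual).neg] ψ.dual.neg :=
    Drv.impI (Drv.impE Drv.hyp1 (Drv.orI2 Drv.hyp0))
  have nnφ : Drv S [(φ.dual.or ψ.dual).neg] φ.neg.neg :=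
    Drv.impE (Drv.ofProves keyφ) dnφ
  have nnψ : Drv S [(φ.dual.or ψ.dual).neg] ψ.neg.neg :=
    Drv.impE (Drv.ofProves keyψ) dnψ
  refine Drv.impE nnφ (Drv.impI ?_)
  -- Γ = [φ, ¬(φ.dual∨ψ.dual)]
  refine Drv.impE (Drv.weaken nnψ) (Drv.impI ?_)
  -- Γ = [ψ, φ, ¬(φ.dual∨ψ.dual)]
  exact Drv.impE (Drv.ofProves hprem) (Drv.andI Drv.hyp1 Drv.hyp0)

theorem DmlR.toDneR {S : Set Formula} {k : ℕ} (h : DmlR S k) : DneR S k := by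
  intro φ ψ hφ hψ hprem
  have h4 := h φ.dual ψ.dual hφ.dual hψ.dual ?_
  · exact (Proves.or_mono (Proves.dual_dual_pi hφ) (Proves.dual_dual_pi hψ)).mp h4
  · refine Drv.toProves (Drv.impI ?_)
    -- Γ = [φ.dual ∧ ψ.dual], goal ⊥
    refine Drv.impE (Drv.ofProves hprem) (Drv.impI ?_)
    -- Γ = [φ∨ψ, φ.dual∧ψ.dual]
    refine Drv.orE Drv.hyp0 ?_ ?_
    · exact Drv.impE (Drv.impE (Drv.ofProves (Proves.dual_imp_neg_pi hφ))
        (Drv.andE1 Drv.hyp2)) Drv.hyp0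
    · exact Drv.impE (Drv.impE (Drv.ofProves (Proves.dual_imp_neg_pi hψ))
        (Drv.andE2 Drv.hyp2)) Drv.hyp0

end SemiClassicalArith
namespace SemiClassicalArith

/-! ### Substitution for the placeholder `$` -/

theorem Term.lift_lift {d e : ℕ} (hde : d ≤ e) :
    ∀ t : Term, (t.lift d).lift (e+1) = (t.lift e).lift d := by
  intro t
  induction t with
  | var n =>
    simp only [Term.lift]
    rcases Nat.lt_or_ge n d with h | h
    · have h1 : n < e := Nat.lt_of_lt_of_le h hde
      have h2 : n < e + 1 := by omega
      simp [Term.lift, h, h1, h2]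
    · have h1 : ¬ n < d := by omega
      have h2 : ¬ n + 1 < d := by omega
      rcases Nat.lt_or_ge n e with h3 | h3
      · simp [Term.lift, h1, h2, h3, show n + 1 < e + 1 by omega]
      · simp [Term.lift, h1, h2, show ¬ n < e by omega, show ¬ n + 1 < e + 1 by omega]
  | func c a ts ih =>
    simp only [Term.lift]; congr 1; funext i; exact ih i

theorem Formula.lift_lift : ∀ (φ : Formula) {d e : ℕ}, d ≤ e →
    (φ.lift d).lift (e+1) = (φ.lift e).lift d := by
  intro φ
  induction φ with
  | falsum => intros; rfl
  | dollar => intros; rfl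
  | eq t u => intro d e h; simp [Formula.lift, Term.lift_lift h]
  | and φ ψ ih1 ih2 => intro d e h; simp [Formula.lift, ih1 h, ih2 h]
  | or φ ψ ih1 ih2 => intro d e h; simp [Formula.lift, ih1 h, ih2 h]
  | imp φ ψ ih1 ih2 => intro d e h; simp [Formula.lift, ih1 h, ih2 h]
  | all φ ih => intro d e h; simp [Formula.lift]; exact ih (by omega : d+1 ≤ e+1)
  | ex φ ih => intro d e h; simp [Formula.lift]; exact ih (by omega : d+1 ≤ e+1)

theorem Term.repl_lift (s : Term) : ∀ (t : Term) (k : ℕ), Term.repl k s (t.lift k) = t.lift k := by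
  intro t
  induction t with
  | var n =>
    intro k
    simp only [Term.lift]
    rcases Nat.lt_or_ge n k with h | h
    · simp [h, Term.repl, Nat.ne_of_lt h]
    · simp [show ¬ n < k by omega, Term.repl, show ¬ n + 1 = k by omega]
  | func c a ts ih =>
    intro k
    simp only [Term.lift, Term.repl]; congr 1; funext i; exact ih i k

theorem Formula.repl_lift : ∀ (φ : Formula) (k : ℕ) (s : Term),
    (φ.lift k).repl k s = φ.lift k := by
  intro φ
  induction φ with
  | falsum => intros; rfl
  | dollar => intros; rfl
  | eq t u => intro k s; simp [Formula.lift, Formula.repl, Term.repl_lift]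
  | and φ ψ ih1 ih2 => intro k s; simp [Formula.lift, Formula.repl, ih1, ih2]
  | or φ ψ ih1 ih2 => intro k s; simp [Formula.lift, Formula.repl, ih1, ih2]
  | imp φ ψ ih1 ih2 => intro k s; simp [Formula.lift, Formula.repl, ih1, ih2]
  | all φ ih => intro k s; simp [Formula.lift, Formula.repl, ih]
  | ex φ ih => intro k s; simp [Formula.lift, Formula.repl, ih]

/-- Substitute the formula `ρ` for the placeholder `$` (in the first argument). -/
def Formula.dsub : Formula → Formula → Formula
  | .falsum, _ => .falsum
  | .dollar, ρ => ρ
  | .eq t u, _ => .eq t u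
  | .and φ ψ, ρ => .and (φ.dsub ρ) (ψ.dsub ρ)
  | .or φ ψ, ρ => .or (φ.dsub ρ) (ψ.dsub ρ)
  | .imp φ ψ, ρ => .imp (φ.dsub ρ) (ψ.dsub ρ)
  | .all φ, ρ => .all (φ.dsub (ρ.lift 0))
  | .ex φ, ρ => .ex (φ.dsub (ρ.lift 0))

theorem Formula.dsub_noDollar : ∀ {φ : Formula}, φ.noDollar → ∀ ρ, φ.dsub ρ = φ := by
  intro φ
  induction φ with
  | falsum => intros; rfl
  | dollar => intro h; exact h.elim
  | eq t u => intros; rfl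
  | and φ ψ ih1 ih2 => intro h ρ; simp [Formula.dsub, ih1 h.1, ih2 h.2]
  | or φ ψ ih1 ih2 => intro h ρ; simp [Formula.dsub, ih1 h.1, ih2 h.2]
  | imp φ ψ ih1 ih2 => intro h ρ; simp [Formula.dsub, ih1 h.1, ih2 h.2]
  | all φ ih => intro h ρ; simp [Formula.dsub, ih h]
  | ex φ ih => intro h ρ; simp [Formula.dsub, ih h]

theorem Formula.dsub_lift : ∀ (φ : Formula) (ρ : Formula) (d : ℕ),
    (φ.dsub ρ).lift d = (φ.lift d).dsub (ρ.lift d) := by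
  intro φ
  induction φ with
  | falsum => intros; rfl
  | dollar => intros; rfl
  | eq t u => intros; rfl
  | and φ ψ ih1 ih2 => intro ρ d; simp [Formula.dsub, Formula.lift, ih1, ih2]
  | or φ ψ ih1 ih2 => intro ρ d; simp [Formula.dsub, Formula.lift, ih1, ih2]
  | imp φ ψ ih1 ih2 => intro ρ d; simp [Formula.dsub, Formula.lift, ih1, ih2]
  | all φ ih =>
    intro ρ d
    simp only [Formula.dsub, Formula.lift, Formula.lift_all]
    rw [ih, Formula.lift_lift ρ (by omega : 0 ≤ d)]
  | ex φ ih =>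
    intro ρ d
    simp only [Formula.dsub, Formula.lift, Formula.lift_ex]
    rw [ih, Formula.lift_lift ρ (by omega : 0 ≤ d)]

theorem Formula.dsub_subst : ∀ (φ : Formula) (ρ : Formula) (k : ℕ) (t : Term),
    (φ.subst k t).dsub ρ = (φ.dsub (ρ.lift k)).subst k t := by
  intro φ
  induction φ with
  | falsum => intros; rfl
  | dollar =>
    intro ρ k t
    show ρ = (ρ.lift k).subst k t
    rw [Formula.lift_subst_self]
  | eq u v => intros; rfl
  | and φ ψ ih1 ih2 => intro ρ k t; simp [Formula.dsub, Formula.subst, ih1, ih2]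
  | or φ ψ ih1 ih2 => intro ρ k t; simp [Formula.dsub, Formula.subst, ih1, ih2]
  | imp φ ψ ih1 ih2 => intro ρ k t; simp [Formula.dsub, Formula.subst, ih1, ih2]
  | all φ ih =>
    intro ρ k t
    simp only [Formula.dsub, Formula.subst]
    rw [ih, Formula.lift_lift ρ (by omega : 0 ≤ k)]
  | ex φ ih =>
    intro ρ k t
    simp only [Formula.dsub, Formula.subst]
    rw [ih, Formula.lift_lift ρ (by omega : 0 ≤ k)]

theorem Formula.dsub_repl : ∀ (φ : Formula) (ρ : Formula) (k : ℕ) (s : Term),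
    (φ.repl k s).dsub (ρ.lift k) = (φ.dsub (ρ.lift k)).repl k s := by
  intro φ
  induction φ with
  | falsum => intros; rfl
  | dollar =>
    intro ρ k s
    show ρ.lift k = (ρ.lift k).repl k s
    rw [Formula.repl_lift]
  | eq u v => intros; rfl
  | and φ ψ ih1 ih2 => intro ρ k s; simp [Formula.dsub, Formula.repl, ih1, ih2]
  | or φ ψ ih1 ih2 => intro ρ k s; simp [Formula.dsub, Formula.repl, ih1, ih2]
  | imp φ ψ ih1 ih2 => intro ρ k s; simp [Formula.dsub, Formula.repl, ih1, ih2]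
  | all φ ih =>
    intro ρ k s
    simp only [Formula.dsub, Formula.repl]
    rw [← Formula.lift_lift ρ (by omega : 0 ≤ k), ih (ρ.lift 0) (k+1) (s.lift 0)]
  | ex φ ih =>
    intro ρ k s
    simp only [Formula.dsub, Formula.repl]
    rw [← Formula.lift_lift ρ (by omega : 0 ≤ k), ih (ρ.lift 0) (k+1) (s.lift 0)]

theorem HAAx.dsub {φ : Formula} (h : HAAx φ) (ρ : Formula) : HAAx (φ.dsub ρ) := by
  cases h with
  | axK φ ψ => exact HAAx.axK _ _
  | axS φ ψ χ => exact HAAx.axS _ _ _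
  | andI φ ψ => exact HAAx.andI _ _
  | andE1 φ ψ => exact HAAx.andE1 _ _
  | andE2 φ ψ => exact HAAx.andE2 _ _
  | orI1 φ ψ => exact HAAx.orI1 _ _
  | orI2 φ ψ => exact HAAx.orI2 _ _
  | orE φ ψ χ => exact HAAx.orE _ _ _
  | efq φ => exact HAAx.efq _
  | allE φ t =>
    show HAAx (((φ.dsub (ρ.lift 0)).all).imp ((φ.subst 0 t).dsub ρ))
    rw [Formula.dsub_subst φ ρ 0 t]
    exact HAAx.allE _ t
  | exI φ t =>
    show HAAx (((φ.subst 0 t).dsub ρ).imp ((φ.dsub (ρ.lift 0)).ex))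
    rw [Formula.dsub_subst φ ρ 0 t]
    exact HAAx.exI _ t
  | allK φ ψ => exact HAAx.allK _ _
  | allVac φ =>
    show HAAx ((φ.dsub ρ).imp (((φ.lift 0).dsub (ρ.lift 0)).all))
    rw [← Formula.dsub_lift]
    exact HAAx.allVac _
  | exE φ ψ =>
    show HAAx ((((φ.dsub (ρ.lift 0)).imp ((ψ.lift 0).dsub (ρ.lift 0))).all).imp
      (((φ.dsub (ρ.lift 0)).ex).imp (ψ.dsub ρ)))
    rw [← Formula.dsub_lift]
    exact HAAx.exE _ _
  | eqRefl t => exact HAAx.eqRefl t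
  | eqSubst t u φ =>
    show HAAx ((Formula.eq t u).imp (((φ.subst 0 t).dsub ρ).imp ((φ.subst 0 u).dsub ρ)))
    rw [Formula.dsub_subst φ ρ 0 t, Formula.dsub_subst φ ρ 0 u]
    exact HAAx.eqSubst t u _
  | succNeZero t => exact HAAx.succNeZero t
  | succInj t u => exact HAAx.succInj t u
  | ind φ =>
    show HAAx (((φ.subst 0 Term.zero).dsub ρ).imp
      ((((φ.dsub (ρ.lift 0)).imp ((φ.repl 0 (Term.succ (Term.var 0))).dsub (ρ.lift 0))).all).imp
        ((φ.dsub (ρ.lift 0)).all)))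
    rw [Formula.dsub_subst φ ρ 0 Term.zero,
      Formula.dsub_repl φ ρ 0 (Term.succ (Term.var 0))]
    exact HAAx.ind _
  | atomDec t u => exact HAAx.atomDec t u

/-- All `$`-instances of a set of formulas. -/
def DImg (U : Set Formula) : Set Formula := {χ | ∃ υ ∈ U, ∃ ρ, χ = υ.dsub ρ}

theorem Proves.dsub {U : Set Formula} {δ : Formula} (h : Proves U δ) :
    ∀ ρ : Formula, Proves (DImg U) (δ.dsub ρ) := by
  induction h with
  | ax hυ => intro ρ; exact Proves.ax ⟨_, hυ, ρ, rfl⟩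
  | ha hax => intro ρ; exact Proves.ha (hax.dsub ρ)
  | mp _ _ ih1 ih2 => intro ρ; exact (ih1 ρ).mp (ih2 ρ)
  | gen _ ih => intro ρ; exact (ih (ρ.lift 0)).gen

end SemiClassicalArith
namespace SemiClassicalArith
open Formula

/-! ### Soundness of the `$`-translation -/

@[simp] theorem Formula.negD_lift (φ : Formula) (d : ℕ) :
    (φ.negD).lift d = (φ.lift d).negD := rfl

theorem Formula.dollarTr_lift : ∀ (φ : Formula) (d : ℕ),
    (φ.lift d).dollarTr = (φ.dollarTr).lift d := by
  intro φ
  induction φ with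
  | falsum => intros; rfl
  | dollar => intros; rfl
  | eq t u => intros; rfl
  | and φ ψ ih1 ih2 => intro d; simp [Formula.dollarTr, Formula.lift, ih1, ih2]
  | or φ ψ ih1 ih2 =>
    intro d
    show ((((φ.lift d).dollarTr).or ((ψ.lift d).dollarTr)).negD).negD = _
    rw [ih1, ih2]; rfl
  | imp φ ψ ih1 ih2 => intro d; show ((φ.lift d).dollarTr).imp ((ψ.lift d).dollarTr) = _
                       rw [ih1, ih2]; rfl
  | all φ ih => intro d; show (((φ.lift (d+1)).dollarTr)).all = _
                rw [ih]; rfl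
  | ex φ ih => intro d; show ((((φ.lift (d+1)).dollarTr)).ex).negD.negD = _
               rw [ih]; rfl

theorem Formula.dollarTr_subst : ∀ (φ : Formula) (k : ℕ) (t : Term),
    (φ.subst k t).dollarTr = (φ.dollarTr).subst k t := by
  intro φ
  induction φ with
  | falsum => intros; rfl
  | dollar => intros; rfl
  | eq u v => intros; rfl
  | and φ ψ ih1 ih2 => intro k t; simp [Formula.dollarTr, Formula.subst, ih1, ih2]
  | or φ ψ ih1 ih2 =>
    intro k t
    show ((((φ.subst k t).dollarTr).or ((ψ.subst k t).dollarTr)).negD).negD = _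
    rw [ih1, ih2]; rfl
  | imp φ ψ ih1 ih2 =>
    intro k t
    show ((φ.subst k t).dollarTr).imp ((ψ.subst k t).dollarTr) = _
    rw [ih1, ih2]; rfl
  | all φ ih =>
    intro k t
    show ((φ.subst (k+1) (t.lift 0)).dollarTr).all = _
    rw [ih]; rfl
  | ex φ ih =>
    intro k t
    show ((((φ.subst (k+1) (t.lift 0)).dollarTr)).ex).negD.negD = _
    rw [ih]; rfl

theorem Formula.dollarTr_repl : ∀ (φ : Formula) (k : ℕ) (s : Term),
    (φ.repl k s).dollarTr = (φ.dollarTr).repl k s := by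
  intro φ
  induction φ with
  | falsum => intros; rfl
  | dollar => intros; rfl
  | eq u v => intros; rfl
  | and φ ψ ih1 ih2 => intro k s; simp [Formula.dollarTr, Formula.repl, ih1, ih2]
  | or φ ψ ih1 ih2 =>
    intro k s
    show ((((φ.repl k s).dollarTr).or ((ψ.repl k s).dollarTr)).negD).negD = _
    rw [ih1, ih2]; rfl
  | imp φ ψ ih1 ih2 =>
    intro k s
    show ((φ.repl k s).dollarTr).imp ((ψ.repl k s).dollarTr) = _
    rw [ih1, ih2]; rfl
  | all φ ih =>
    intro k s
    show ((φ.repl (k+1) (s.lift 0)).dollarTr).all = _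
    rw [ih]; rfl
  | ex φ ih =>
    intro k s
    show ((((φ.repl (k+1) (s.lift 0)).dollarTr)).ex).negD.negD = _
    rw [ih]; rfl

namespace Proves

variable {T : Set Formula} {φ ψ χ : Formula}

theorem dniD (T : Set Formula) (φ : Formula) : Proves T (φ.imp φ.negD.negD) :=
  Drv.toProves (Drv.impI (Drv.impI (Drv.impE Drv.hyp0 Drv.hyp1)))

theorem contraD (h : Proves T (φ.imp ψ)) : Proves T (ψ.negD.imp φ.negD) :=
  Drv.toProves (Drv.impI (Drv.impI (Drv.impE Drv.hyp1 (Drv.impE (Drv.ofProves h) Drv.hyp0))))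

theorem nnD_mono (h : Proves T (φ.imp ψ)) : Proves T (φ.negD.negD.imp ψ.negD.negD) :=
  contraD (contraD h)

theorem nnnD (T : Set Formula) (φ : Formula) : Proves T (φ.negD.negD.negD.imp φ.negD) :=
  contraD (dniD T φ)

theorem absorbD (T : Set Formula) (φ : Formula) : Proves T (Formula.dollar.imp φ.negD.negD) :=
  Drv.toProves (Drv.impI (Drv.impI Drv.hyp1))

theorem lemD (T : Set Formula) (φ : Formula) :
    Proves T ((φ.or φ.negD).negD.negD) := by
  refine Drv.toProves (Drv.impI ?_)
  -- Γ = [(φ ∨ ¬_$φ) → $]; goal $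
  refine Drv.impE Drv.hyp0 (Drv.orI2 (Drv.impI ?_))
  exact Drv.impE Drv.hyp1 (Drv.orI1 Drv.hyp0)

/-- `⊢ $ ⊃ φ^$`. -/
theorem absorb_dollarTr (T : Set Formula) : ∀ φ : Formula, Proves T (Formula.dollar.imp φ.dollarTr) := by
  intro φ
  induction φ with
  | falsum => exact Proves.imp_refl T _
  | dollar => exact Proves.imp_refl T _
  | eq t u => exact absorbD T _
  | and φ ψ ih1 ih2 =>
    exact Drv.toProves (Drv.impI (Drv.andI
      (Drv.impE (Drv.ofProves ih1) Drv.hyp0) (Drv.impE (Drv.ofProves ih2) Drv.hyp0)))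
  | or φ ψ _ _ => exact absorbD T _
  | imp φ ψ _ ih2 =>
    exact Drv.toProves (Drv.impI (Drv.impI (Drv.impE (Drv.ofProves ih2) Drv.hyp1)))
  | all φ ih =>
    refine Proves.all_intro ?_
    show Proves T ((Formula.dollar).imp φ.dollarTr)
    exact ih
  | ex φ _ => exact absorbD T _

/-- `⊢ ¬_$¬_$ (φ^$) ⊃ φ^$`. -/
theorem stab_dollarTr (T : Set Formula) : ∀ φ : Formula,
    Proves T ((φ.dollarTr.negD.negD).imp φ.dollarTr) := by
  intro φ
  induction φ with
  | falsum =>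
    show Proves T (((Formula.dollar.negD).negD).imp Formula.dollar)
    exact Drv.toProves (Drv.impI (Drv.impE Drv.hyp0 (Drv.ofProves (Proves.imp_refl T _))))
  | dollar =>
    exact Drv.toProves (Drv.impI (Drv.impE Drv.hyp0 (Drv.ofProves (Proves.imp_refl T _))))
  | eq t u => exact nnnD T _
  | and φ ψ ih1 ih2 =>
    refine Drv.toProves (Drv.impI (Drv.andI ?_ ?_))
    · refine Drv.impE (Drv.ofProves ih1) ?_
      exact Drv.impE (Drv.ofProves (nnD_mono (Proves.ha (HAAx.andE1 _ _)))) Drv.hyp0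
    · refine Drv.impE (Drv.ofProves ih2) ?_
      exact Drv.impE (Drv.ofProves (nnD_mono (Proves.ha (HAAx.andE2 _ _)))) Drv.hyp0
  | or φ ψ _ _ => exact nnnD T _
  | imp φ ψ _ ih2 =>
    refine Drv.toProves (Drv.impI (Drv.impI ?_))
    -- Γ = [Tφ, ¬_$¬_$(Tφ ⊃ Tψ)]; goal Tψ
    refine Drv.impE (Drv.ofProves ih2) (Drv.impI ?_)
    -- Γ = [Tψ.negD, Tφ, nn(imp)]; goal $
    refine Drv.impE Drv.hyp2 (Drv.impI ?_)
    -- Γ = [Tφ ⊃ Tψ, Tψ.negD, Tφ, _]; goal $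
    exact Drv.impE Drv.hyp1 (Drv.impE Drv.hyp0 Drv.hyp2)
  | all φ ih =>
    refine Proves.all_intro ?_
    show Proves T (((((φ.dollarTr).all).lift 0).negD.negD).imp φ.dollarTr)
    refine Drv.toProves (Drv.impI ?_)
    refine Drv.impE (Drv.ofProves ih) (Drv.impI ?_)
    -- Γ = [Tφ.negD, nn(lift all)]; goal $
    refine Drv.impE Drv.hyp1 (Drv.impI ?_)
    -- Γ = [(∀ Tφ.lift 1), Tφ.negD, _]; goal $
    have hinst : Drv T [((φ.dollarTr).lift 1).all, (φ.dollarTr).negD,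
        ((((φ.dollarTr).lift 1).all).negD).negD] (((φ.dollarTr).lift 1).subst 0 (Term.var 0)) :=
      Drv.allE _ Drv.hyp0
    rw [Formula.lift_succ_subst_var] at hinst
    exact Drv.impE Drv.hyp1 hinst
  | ex φ _ => exact nnnD T _

end Proves

end SemiClassicalArith
namespace SemiClassicalArith
open Formula

/-- Translations of `HA` axioms are provable. -/
theorem HAAx.dollarTr_provable {T : Set Formula} {φ : Formula} (h : HAAx φ) :
    Proves T φ.dollarTr := by
  cases h with
  | axK φ ψ => exact Proves.ha (HAAx.axK _ _)
  | axS φ ψ χ => exact Proves.ha (HAAx.axS _ _ _)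
  | andI φ ψ => exact Proves.ha (HAAx.andI _ _)
  | andE1 φ ψ => exact Proves.ha (HAAx.andE1 _ _)
  | andE2 φ ψ => exact Proves.ha (HAAx.andE2 _ _)
  | orI1 φ ψ =>
    show Proves T ((φ.dollarTr).imp (((φ.dollarTr).or (ψ.dollarTr)).negD.negD))
    exact (Proves.ha (HAAx.orI1 _ _)).imp_trans (Proves.dniD T _)
  | orI2 φ ψ =>
    show Proves T ((ψ.dollarTr).imp (((φ.dollarTr).or (ψ.dollarTr)).negD.negD))
    exact (Proves.ha (HAAx.orI2 _ _)).imp_trans (Proves.dniD T _)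
  | orE φ ψ χ =>
    show Proves T (((φ.dollarTr).imp (χ.dollarTr)).imp
      (((ψ.dollarTr).imp (χ.dollarTr)).imp
        ((((φ.dollarTr).or (ψ.dollarTr)).negD.negD).imp (χ.dollarTr))))
    refine Drv.toProves (Drv.impI (Drv.impI (Drv.impI ?_)))
    -- Γ = [D, g, f] with D : nn(or), g : Tψ ⊃ Tχ, f : Tφ ⊃ Tχ; goal Tχ
    refine Drv.impE (Drv.ofProves (Proves.stab_dollarTr T χ)) (Drv.impI ?_)
    -- Γ = [Tχ.negD, D, g, f]; goal $
    refine Drv.impE Drv.hyp1 (Drv.impI ?_)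
    -- Γ = [Tφ ∨ Tψ, Tχ.negD, D, g, f]; goal $
    refine Drv.orE Drv.hyp0 ?_ ?_
    · exact Drv.impE Drv.hyp2 (Drv.impE (Drv.hyp (by simp)) Drv.hyp0)
    · exact Drv.impE Drv.hyp2 (Drv.impE (Drv.hyp (by simp)) Drv.hyp0)
  | efq φ =>
    show Proves T (Formula.dollar.imp φ.dollarTr)
    exact Proves.absorb_dollarTr T φ
  | allE φ t =>
    show Proves T (((φ.dollarTr).all).imp ((φ.subst 0 t).dollarTr))
    rw [Formula.dollarTr_subst]
    exact Proves.ha (HAAx.allE _ t)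
  | exI φ t =>
    show Proves T (((φ.subst 0 t).dollarTr).imp (((φ.dollarTr).ex).negD.negD))
    rw [Formula.dollarTr_subst]
    exact (Proves.ha (HAAx.exI _ t)).imp_trans (Proves.dniD T _)
  | allK φ ψ => exact Proves.ha (HAAx.allK _ _)
  | allVac φ =>
    show Proves T ((φ.dollarTr).imp (((φ.lift 0).dollarTr).all))
    rw [Formula.dollarTr_lift]
    exact Proves.ha (HAAx.allVac _)
  | exE φ ψ =>
    show Proves T ((((φ.dollarTr).imp ((ψ.lift 0).dollarTr)).all).imp
      ((((φ.dollarTr).ex).negD.negD).imp (ψ.dollarTr)))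
    rw [Formula.dollarTr_lift]
    refine Drv.toProves (Drv.impI (Drv.impI ?_))
    -- Γ = [nn(ex Tφ), ∀(Tφ ⊃ Tψ.lift 0)]; goal Tψ
    have hex : Drv T [(((φ.dollarTr).ex).negD).negD, ((φ.dollarTr).imp ((ψ.dollarTr).lift 0)).all]
        (((φ.dollarTr).ex).imp (ψ.dollarTr)) :=
      Drv.impE (Drv.ha (HAAx.exE _ _)) Drv.hyp1
    refine Drv.impE (Drv.ofProves (Proves.stab_dollarTr T ψ)) (Drv.impI ?_)
    -- Γ = [Tψ.negD, nn(ex), ∀..]; goal $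
    refine Drv.impE Drv.hyp1 (Drv.impI ?_)
    -- Γ = [ex Tφ, Tψ.negD, nn(ex), ∀..]; goal $
    exact Drv.impE Drv.hyp1 (Drv.impE (Drv.weaken (Drv.weaken hex)) Drv.hyp0)
  | eqRefl t =>
    exact (Proves.dniD T _).mp (Proves.ha (HAAx.eqRefl t))
  | eqSubst t u φ =>
    show Proves T ((((Formula.eq t u).negD).negD).imp
      (((φ.subst 0 t).dollarTr).imp ((φ.subst 0 u).dollarTr)))
    rw [Formula.dollarTr_subst, Formula.dollarTr_subst]
    refine Drv.toProves (Drv.impI (Drv.impI ?_))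
    -- Γ = [Tφ[t], nn(eq)]; goal Tφ[u]
    refine Drv.impE (Drv.ofProves (by
      have := Proves.stab_dollarTr T (φ.subst 0 u)
      rwa [Formula.dollarTr_subst] at this)) (Drv.impI ?_)
    -- Γ = [(Tφ[u]).negD, Tφ[t], nn(eq)]; goal $
    refine Drv.impE Drv.hyp2 (Drv.impI ?_)
    -- Γ = [eq t u, (Tφ[u]).negD, Tφ[t], nn eq]; goal $
    refine Drv.impE Drv.hyp1 ?_
    exact Drv.impE (Drv.impE (Drv.ha (HAAx.eqSubst t u (φ.dollarTr))) Drv.hyp0) Drv.hyp2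
  | succNeZero t =>
    show Proves T ((((Formula.eq _ _).negD).negD).imp Formula.dollar)
    refine Drv.toProves (Drv.impI ?_)
    refine Drv.impE Drv.hyp0 (Drv.impI ?_)
    exact Drv.efq (Drv.impE (Drv.ha (HAAx.succNeZero t)) Drv.hyp0)
  | succInj t u =>
    exact Proves.nnD_mono (Proves.ha (HAAx.succInj t u))
  | ind φ =>
    show Proves T (((φ.subst 0 Term.zero).dollarTr).imp
      ((((φ.dollarTr).imp ((φ.repl 0 (Term.succ (Term.var 0))).dollarTr)).all).imp
        ((φ.dollarTr).all)))
    rw [Formula.dollarTr_subst, Formula.dollarTr_repl]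
    exact Proves.ha (HAAx.ind _)
  | atomDec t u =>
    show Proves T (((((Formula.eq t u).negD.negD)).or
      ((((Formula.eq t u).negD.negD)).negD)).negD.negD)
    exact Proves.lemD T _

/-- Soundness of the `$`-translation. -/
theorem Proves.dollarTr_sound {U : Set Formula} {δ : Formula} (h : Proves U δ) :
    Proves (Formula.dollarTr '' U) δ.dollarTr := by
  induction h with
  | ax hυ => exact Proves.ax ⟨_, hυ, rfl⟩
  | ha hax => exact hax.dollarTr_provable
  | mp _ _ ih1 ih2 => exact ih1.mp ih2
  | gen _ ih => exact ih.gen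

end SemiClassicalArith
namespace SemiClassicalArith
open Formula

/-! ### Alternation paths and degree -/

theorem Formula.alt_nonempty : ∀ φ : Formula, φ.alt.Nonempty := by
  intro φ
  induction φ with
  | falsum => exact ⟨[], by simp [Formula.alt]⟩
  | dollar => exact ⟨[], by simp [Formula.alt]⟩
  | eq t u => exact ⟨[], by simp [Formula.alt]⟩
  | and φ ψ ih1 _ => exact ih1.mono (by simp [Formula.alt, Finset.subset_union_left])
  | or φ ψ ih1 _ => exact ih1.mono (by simp [Formula.alt, Finset.subset_union_left])
  | imp φ ψ _ ih2 => exact ih2.mono (by simp [Formula.alt, Finset.subset_union_right])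
  | all φ ih => exact ih.image _
  | ex φ ih => exact ih.image _

theorem Formula.alt_qf : ∀ {φ : Formula}, φ.isQF → φ.alt = {([] : List Bool)} := by
  intro φ
  induction φ with
  | falsum => intro _; rfl
  | dollar => intro h; exact h.elim
  | eq t u => intro _; rfl
  | and φ ψ ih1 ih2 => intro h; simp [Formula.alt, ih1 h.1, ih2 h.2]
  | or φ ψ ih1 ih2 => intro h; simp [Formula.alt, ih1 h.1, ih2 h.2]
  | imp φ ψ ih1 ih2 =>
    intro h
    simp [Formula.alt, ih1 h.1, ih2 h.2, Formula.pflip]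
  | all φ _ => intro h; exact h.elim
  | ex φ _ => intro h; exact h.elim

theorem Formula.degree_qf {φ : Formula} (h : φ.isQF) : φ.degree = 0 := by
  simp [Formula.degree, Formula.alt_qf h]

theorem Formula.degree_and_left (φ ψ : Formula) : φ.degree ≤ (φ.and ψ).degree :=
  Finset.sup_mono Finset.subset_union_left

theorem Formula.degree_and_right (φ ψ : Formula) : ψ.degree ≤ (φ.and ψ).degree :=
  Finset.sup_mono Finset.subset_union_right

theorem Formula.degree_or_left (φ ψ : Formula) : φ.degree ≤ (φ.or ψ).degree :=
  Finset.sup_mono Finset.subset_union_left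

theorem Formula.degree_or_right (φ ψ : Formula) : ψ.degree ≤ (φ.or ψ).degree :=
  Finset.sup_mono Finset.subset_union_right

theorem Formula.degree_imp_right (φ ψ : Formula) : ψ.degree ≤ (φ.imp ψ).degree :=
  Finset.sup_mono Finset.subset_union_right

theorem Formula.degree_imp_left (φ ψ : Formula) : φ.degree ≤ (φ.imp ψ).degree := by
  refine Finset.sup_le ?_
  intro s hs
  have : Formula.pflip s ∈ (φ.imp ψ).alt :=
    Finset.mem_union_left _ (Finset.mem_image_of_mem _ hs)
  calc s.length = (Formula.pflip s).length := by simp [Formula.pflip]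
    _ ≤ _ := Finset.le_sup this

theorem Formula.degree_all_body (φ : Formula) : φ.degree ≤ (φ.all).degree := by
  refine Finset.sup_le ?_
  intro s hs
  have hmem : (if s.head? = some false then s else false :: s) ∈ (φ.all).alt :=
    Finset.mem_image_of_mem _ hs
  calc s.length ≤ (if s.head? = some false then s else false :: s).length := by
        split <;> simp
    _ ≤ _ := Finset.le_sup hmem

theorem Formula.degree_ex_body (φ : Formula) : φ.degree ≤ (φ.ex).degree := by
  refine Finset.sup_le ?_
  intro s hs
  have hmem : (if s.head? = some true then s else true :: s) ∈ (φ.ex).alt :=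
    Finset.mem_image_of_mem _ hs
  calc s.length ≤ (if s.head? = some true then s else true :: s).length := by
        split <;> simp
    _ ≤ _ := Finset.le_sup hmem

theorem Formula.degree_neg_le (φ : Formula) : (φ.neg).degree ≤ φ.degree := by
  refine Finset.sup_le ?_
  intro s hs
  rcases Finset.mem_union.mp hs with hs | hs
  · obtain ⟨s₀, hs₀, rfl⟩ := Finset.mem_image.mp hs
    calc (Formula.pflip s₀).length = s₀.length := by simp [Formula.pflip]
      _ ≤ _ := Finset.le_sup hs₀
  · have : s = [] := by simpa [Formula.alt] using hs
    simp [this]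

/-- `degree (∃x ¬φ) ≤ degree (∀x φ)`. -/
theorem Formula.degree_ex_neg_le (φ : Formula) : ((φ.neg).ex).degree ≤ (φ.all).degree := by
  refine Finset.sup_le ?_
  intro s hs
  obtain ⟨u, hu, rfl⟩ := Finset.mem_image.mp hs
  rcases Finset.mem_union.mp hu with hu | hu
  · obtain ⟨s₀, hs₀, rfl⟩ := Finset.mem_image.mp hu
    have hmem : (if s₀.head? = some false then s₀ else false :: s₀) ∈ (φ.all).alt :=
      Finset.mem_image_of_mem _ hs₀
    refine le_trans ?_ (Finset.le_sup hmem)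
    cases s₀ with
    | nil => simp [Formula.pflip]
    | cons b s₁ =>
      cases b <;> simp [Formula.pflip]
  · have hu : u = [] := by simpa [Formula.alt] using hu
    subst hu
    obtain ⟨s₀, hs₀⟩ := φ.alt_nonempty
    have hmem : (if s₀.head? = some false then s₀ else false :: s₀) ∈ (φ.all).alt :=
      Finset.mem_image_of_mem _ hs₀
    refine le_trans ?_ (Finset.le_sup hmem)
    rw [show (if ([] : List Bool).head? = some true then [] else [true]).length = 1 by decide]
    split
    · rename_i hh
      cases s₀ with
      | nil => simp at hh
      | cons b s₁ => simp
    · simp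

/-- Prenex formulas in `Σ_k`/`Π_k` have degree at most `k`. -/
theorem IsSigma.path_bound : ∀ {k : ℕ} {φ : Formula}, IsSigma k φ →
    ∀ s ∈ φ.alt, s.length ≤ k ∧ (s.length = k → k = 0 ∨ s.head? = some true) := by
  intro k φ h
  refine IsSigma.rec
    (motive_1 := fun k φ _ => ∀ s ∈ φ.alt, s.length ≤ k ∧ (s.length = k → k = 0 ∨ s.head? = some true))
    (motive_2 := fun k φ _ => ∀ s ∈ φ.alt, s.length ≤ k ∧ (s.length = k → k = 0 ∨ s.head? = some false))
    ?_ ?_ ?_ ?_ ?_ ?_ h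
  · intro φ h s hs
    rw [Formula.alt_qf h] at hs
    simp at hs
    simp [hs]
  · intro k φ _ ih s hs
    obtain ⟨h1, _⟩ := ih s hs
    exact ⟨by omega, fun he => absurd he (by omega)⟩
  · intro k φ _ ih s hs
    obtain ⟨s₀, hs₀, rfl⟩ := Finset.mem_image.mp hs
    obtain ⟨h1, h2⟩ := ih s₀ hs₀
    by_cases hh : s₀.head? = some true
    · rw [if_pos hh]
      exact ⟨h1, fun he => Or.inr hh⟩
    · rw [if_neg hh]
      have hlt : s₀.length ≤ k := by
        rcases Nat.lt_or_ge s₀.length (k+1) with h | h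
        · omega
        · have := h2 (by omega)
          rcases this with h' | h'
          · omega
          · exact absurd h' hh
      exact ⟨by simp only [List.length_cons]; omega, fun _ => Or.inr (by simp)⟩
  · intro φ h s hs
    rw [Formula.alt_qf h] at hs
    simp at hs
    simp [hs]
  · intro k φ _ ih s hs
    obtain ⟨h1, _⟩ := ih s hs
    exact ⟨by omega, fun he => absurd he (by omega)⟩
  · intro k φ _ ih s hs
    obtain ⟨s₀, hs₀, rfl⟩ := Finset.mem_image.mp hs
    obtain ⟨h1, h2⟩ := ih s₀ hs₀
    by_cases hh : s₀.head? = some false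
    · rw [if_pos hh]
      exact ⟨h1, fun he => Or.inr hh⟩
    · rw [if_neg hh]
      have hlt : s₀.length ≤ k := by
        rcases Nat.lt_or_ge s₀.length (k+1) with h | h
        · omega
        · have := h2 (by omega)
          rcases this with h' | h'
          · omega
          · exact absurd h' hh
      exact ⟨by simp only [List.length_cons]; omega, fun _ => Or.inr (by simp)⟩

theorem IsSigma.degree_le {k : ℕ} {φ : Formula} (h : IsSigma k φ) : φ.degree ≤ k :=
  Finset.sup_le (fun s hs => (h.path_bound s hs).1)

theorem IsPi.path_bound : ∀ {k : ℕ} {φ : Formula}, IsPi k φ →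
    ∀ s ∈ φ.alt, s.length ≤ k ∧ (s.length = k → k = 0 ∨ s.head? = some false) := by
  intro k φ h
  refine IsPi.rec
    (motive_1 := fun k φ _ => ∀ s ∈ φ.alt, s.length ≤ k ∧ (s.length = k → k = 0 ∨ s.head? = some true))
    (motive_2 := fun k φ _ => ∀ s ∈ φ.alt, s.length ≤ k ∧ (s.length = k → k = 0 ∨ s.head? = some false))
    ?_ ?_ ?_ ?_ ?_ ?_ h
  · intro φ h s hs
    rw [Formula.alt_qf h] at hs
    simp at hs
    simp [hs]
  · intro k φ _ ih s hs
    obtain ⟨h1, _⟩ := ih s hs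
    exact ⟨by omega, fun he => absurd he (by omega)⟩
  · intro k φ _ ih s hs
    obtain ⟨s₀, hs₀, rfl⟩ := Finset.mem_image.mp hs
    obtain ⟨h1, h2⟩ := ih s₀ hs₀
    by_cases hh : s₀.head? = some true
    · rw [if_pos hh]
      exact ⟨h1, fun he => Or.inr hh⟩
    · rw [if_neg hh]
      have hlt : s₀.length ≤ k := by
        rcases Nat.lt_or_ge s₀.length (k+1) with h | h
        · omega
        · have := h2 (by omega)
          rcases this with h' | h'
          · omega
          · exact absurd h' hh
      exact ⟨by simp only [List.length_cons]; omega, fun _ => Or.inr (by simp)⟩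
  · intro φ h s hs
    rw [Formula.alt_qf h] at hs
    simp at hs
    simp [hs]
  · intro k φ _ ih s hs
    obtain ⟨h1, _⟩ := ih s hs
    exact ⟨by omega, fun he => absurd he (by omega)⟩
  · intro k φ _ ih s hs
    obtain ⟨s₀, hs₀, rfl⟩ := Finset.mem_image.mp hs
    obtain ⟨h1, h2⟩ := ih s₀ hs₀
    by_cases hh : s₀.head? = some false
    · rw [if_pos hh]
      exact ⟨h1, fun he => Or.inr hh⟩
    · rw [if_neg hh]
      have hlt : s₀.length ≤ k := by
        rcases Nat.lt_or_ge s₀.length (k+1) with h | h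
        · omega
        · have := h2 (by omega)
          rcases this with h' | h'
          · omega
          · exact absurd h' hh
      exact ⟨by simp only [List.length_cons]; omega, fun _ => Or.inr (by simp)⟩

theorem IsPi.degree_le {k : ℕ} {φ : Formula} (h : IsPi k φ) : φ.degree ≤ k :=
  Finset.sup_le (fun s hs => (h.path_bound s hs).1)

end SemiClassicalArith
namespace SemiClassicalArith
open Formula

@[simp] theorem Formula.noDollar_neg {φ : Formula} (h : φ.noDollar) : (φ.neg).noDollar :=
  ⟨h, trivial⟩

theorem Proves.fLEM_ax {k : ℕ} {χ : Formula} (h1 : χ.noDollar) (h2 : χ.degree ≤ k) :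
    Proves (fLEM k) (χ.or χ.neg) := Proves.ax ⟨χ, h1, h2, rfl⟩

/-- The key lemma on the `$`-translation of formulas of degree at most `k`:
over `F_k`-LEM, `φ^$` is equivalent to `¬_$¬_$ φ`. -/
theorem Proves.bLem {k : ℕ} : ∀ (β : Formula), β.noDollar → β.degree ≤ k →
    Proves (fLEM k) ((β.dollarTr).imp β.negD.negD) ∧
    Proves (fLEM k) ((β.negD.negD).imp β.dollarTr) := by
  intro β
  induction β with
  | falsum =>
    intro _ _
    constructor
    · exact Drv.toProves (Drv.impI (Drv.impI Drv.hyp1))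
    · refine Drv.toProves (Drv.impI ?_)
      exact Drv.impE Drv.hyp0 (Drv.impI (Drv.efq Drv.hyp0))
  | dollar => intro h; exact h.elim
  | eq t u => intro _ _; exact ⟨Proves.imp_refl _ _, Proves.imp_refl _ _⟩
  | and φ ψ ih1 ih2 =>
    intro hnd hdeg
    obtain ⟨a1, b1⟩ := ih1 hnd.1 ((Formula.degree_and_left φ ψ).trans hdeg)
    obtain ⟨a2, b2⟩ := ih2 hnd.2 ((Formula.degree_and_right φ ψ).trans hdeg)
    constructor
    · -- Tφ ∧ Tψ ⊃ ¬_$¬_$(φ∧ψ)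
      refine Drv.toProves (Drv.impI (Drv.impI ?_))
      -- Γ = [c : (φ∧ψ)→$, C : Tφ∧Tψ]; goal $
      refine Drv.impE (Drv.impE (Drv.ofProves a1) (Drv.andE1 Drv.hyp1)) (Drv.impI ?_)
      -- Γ = [φ, c, C]
      refine Drv.impE (Drv.impE (Drv.ofProves a2) (Drv.andE2 Drv.hyp2)) (Drv.impI ?_)
      -- Γ = [ψ, φ, c, C]
      exact Drv.impE Drv.hyp2 (Drv.andI Drv.hyp1 Drv.hyp0)
    · refine Drv.toProves (Drv.impI (Drv.andI ?_ ?_))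
      · refine Drv.impE (Drv.ofProves b1) (Drv.impI ?_)
        -- Γ = [c : φ→$, D : nn(φ∧ψ)]
        refine Drv.impE Drv.hyp1 (Drv.impI ?_)
        exact Drv.impE Drv.hyp1 (Drv.andE1 Drv.hyp0)
      · refine Drv.impE (Drv.ofProves b2) (Drv.impI ?_)
        refine Drv.impE Drv.hyp1 (Drv.impI ?_)
        exact Drv.impE Drv.hyp1 (Drv.andE2 Drv.hyp0)
  | or φ ψ ih1 ih2 =>
    intro hnd hdeg
    obtain ⟨a1, b1⟩ := ih1 hnd.1 ((Formula.degree_or_left φ ψ).trans hdeg)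
    obtain ⟨a2, b2⟩ := ih2 hnd.2 ((Formula.degree_or_right φ ψ).trans hdeg)
    have hfwd : Proves (fLEM k) (((φ.dollarTr).or (ψ.dollarTr)).imp ((φ.or ψ).negD.negD)) := by
      refine Drv.toProves (Drv.impI ?_)
      refine Drv.orE Drv.hyp0 ?_ ?_
      · refine Drv.impI ?_
        -- Γ = [c : (φ∨ψ)→$, Tφ, or]
        refine Drv.impE (Drv.impE (Drv.ofProves a1) Drv.hyp1) (Drv.impI ?_)
        exact Drv.impE Drv.hyp1 (Drv.orI1 Drv.hyp0)
      · refine Drv.impI ?_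
        refine Drv.impE (Drv.impE (Drv.ofProves a2) Drv.hyp1) (Drv.impI ?_)
        exact Drv.impE Drv.hyp1 (Drv.orI2 Drv.hyp0)
    have hbwd : Proves (fLEM k) ((φ.or ψ).imp ((φ.dollarTr).or (ψ.dollarTr))) := by
      refine Proves.or_mono ?_ ?_
      · exact (Proves.dniD _ φ).imp_trans b1
      · exact (Proves.dniD _ ψ).imp_trans b2
    constructor
    · exact (Proves.nnD_mono hfwd).imp_trans (Proves.nnnD _ ((φ.or ψ).negD))
    · exact Proves.nnD_mono hbwd
  | imp φ ψ ih1 ih2 =>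
    intro hnd hdeg
    obtain ⟨a1, b1⟩ := ih1 hnd.1 ((Formula.degree_imp_left φ ψ).trans hdeg)
    obtain ⟨a2, b2⟩ := ih2 hnd.2 ((Formula.degree_imp_right φ ψ).trans hdeg)
    have hφT : Proves (fLEM k) (φ.imp φ.dollarTr) := (Proves.dniD _ φ).imp_trans b1
    constructor
    · -- (Tφ ⊃ Tψ) ⊃ ¬_$¬_$(φ ⊃ ψ), uses LEM for φ
      refine Drv.toProves (Drv.impI (Drv.impI ?_))
      -- Γ = [c : (φ⊃ψ)→$, G : Tφ⊃Tψ]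
      refine Drv.orE (Drv.ofProves (Proves.fLEM_ax hnd.1
        ((Formula.degree_imp_left φ ψ).trans hdeg))) ?_ ?_
      · -- Γ = [φ, c, G]
        have dTψ : Drv (fLEM k) [φ, (φ.imp ψ).negD, (φ.dollarTr).imp (ψ.dollarTr)]
            (ψ.dollarTr) :=
          Drv.impE Drv.hyp2 (Drv.impE (Drv.ofProves hφT) Drv.hyp0)
        refine Drv.impE (Drv.impE (Drv.ofProves a2) dTψ) (Drv.impI ?_)
        -- Γ = [ψ, φ, c, G]; goal $
        exact Drv.impE Drv.hyp2 (Drv.impI Drv.hyp1)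
      · -- Γ = [¬φ, c, G]; goal $
        refine Drv.impE Drv.hyp1 (Drv.impI ?_)
        exact Drv.efq (Drv.impE Drv.hyp1 Drv.hyp0)
    · -- ¬_$¬_$(φ⊃ψ) ⊃ (Tφ ⊃ Tψ)
      refine Drv.toProves (Drv.impI (Drv.impI ?_))
      -- Γ = [a : Tφ, D : nn(φ⊃ψ)]; goal Tψ
      refine Drv.impE (Drv.ofProves b2) (Drv.impI ?_)
      -- Γ = [c : ψ→$, a, D]; goal $
      refine Drv.impE Drv.hyp2 (Drv.impI ?_)
      -- Γ = [f : φ⊃ψ, c, a, D]; goal $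
      refine Drv.impE (Drv.impE (Drv.ofProves a1) Drv.hyp2) (Drv.impI ?_)
      -- Γ = [φ, f, c, a, D]; goal $
      exact Drv.impE Drv.hyp2 (Drv.impE Drv.hyp1 Drv.hyp0)
  | all φ ih =>
    intro hnd hdeg
    have hdφ : φ.degree ≤ k := (Formula.degree_all_body φ).trans hdeg
    obtain ⟨a1, b1⟩ := ih hnd hdφ
    constructor
    · -- ∀Tφ ⊃ ¬_$¬_$ ∀φ : uses LEM(∀φ) and LEM(∃¬φ)
      have lemAll := Proves.fLEM_ax (k := k) (show (φ.all).noDollar from hnd) hdeg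
      have lemExn := Proves.fLEM_ax (k := k)
        (show ((φ.neg).ex).noDollar from Formula.noDollar_neg hnd)
        ((Formula.degree_ex_neg_le φ).trans hdeg)
      -- sub1 : ⊢ ∃¬φ ⊃ (∀Tφ ⊃ $)
      have sub1 : Proves (fLEM k) (((φ.neg).ex).imp (((φ.dollarTr).all).imp Formula.dollar)) := by
        refine Proves.ex_elim ?_
        show Proves (fLEM k) ((φ.neg).imp ((((φ.dollarTr).lift 1).all).imp Formula.dollar))
        refine Drv.toProves (Drv.impI (Drv.impI ?_))
        -- Γ = [∀(Tφ.lift 1), ¬φ]; goal $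
        have hinst : Drv (fLEM k) [((φ.dollarTr).lift 1).all, φ.neg]
            (((φ.dollarTr).lift 1).subst 0 (Term.var 0)) := Drv.allE _ Drv.hyp0
        rw [Formula.lift_succ_subst_var] at hinst
        refine Drv.impE (Drv.impE (Drv.ofProves a1) hinst) (Drv.impI ?_)
        -- Γ = [φ, ∀.., ¬φ]; goal $
        exact Drv.efq (Drv.impE Drv.hyp2 Drv.hyp0)
      -- sub2 : ⊢ ¬∃¬φ ⊃ ∀φ
      have sub2 : Proves (fLEM k) ((((φ.neg).ex).neg).imp φ.all) := by
        refine Proves.all_intro ?_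
        show Proves (fLEM k) (((((φ.neg).lift 1).ex).neg).imp φ)
        have hexi : Proves (fLEM k) ((φ.neg).imp (((φ.neg).lift 1).ex)) := by
          have h := Proves.ha (T := fLEM k) (HAAx.exI ((φ.neg).lift 1) (Term.var 0))
          rwa [Formula.lift_succ_subst_var] at h
        refine Drv.toProves (Drv.impI ?_)
        refine Drv.impE (Drv.ofProves (Proves.lem_stab (Proves.fLEM_ax (χ := φ) hnd hdφ))) ?_
        refine Drv.impI ?_
        -- Γ = [¬φ, ¬∃¬φ]; goal ⊥
        exact Drv.impE Drv.hyp1 (Drv.impE (Drv.ofProves hexi) Drv.hyp0)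
      refine Drv.toProves (Drv.impI (Drv.impI ?_))
      -- Γ = [c : ∀φ → $, A : ∀Tφ]; goal $
      refine Drv.orE (Drv.ofProves lemAll) (Drv.impE Drv.hyp1 Drv.hyp0) ?_
      -- Γ = [¬∀φ, c, A]
      refine Drv.orE (Drv.ofProves lemExn) ?_ ?_
      · -- Γ = [∃¬φ, ¬∀φ, c, A]
        exact Drv.impE (Drv.impE (Drv.ofProves sub1) Drv.hyp0) Drv.hyp3
      · -- Γ = [¬∃¬φ, ¬∀φ, c, A]
        exact Drv.efq (Drv.impE Drv.hyp1 (Drv.impE (Drv.ofProves sub2) Drv.hyp0))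
    · -- ¬_$¬_$∀φ ⊃ ∀Tφ
      refine Proves.all_intro ?_
      show Proves (fLEM k) (((((φ.lift 1).all).negD).negD).imp (φ.dollarTr))
      refine Drv.toProves (Drv.impI ?_)
      refine Drv.impE (Drv.ofProves b1) (Drv.impI ?_)
      -- Γ = [c : φ→$, D]; goal $
      refine Drv.impE Drv.hyp1 (Drv.impI ?_)
      -- Γ = [∀(φ.lift 1), c, D]; goal $
      have hinst : Drv (fLEM k) [(φ.lift 1).all, φ.negD, (((φ.lift 1).all).negD).negD]
          ((φ.lift 1).subst 0 (Term.var 0)) := Drv.allE _ Drv.hyp0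
      rw [Formula.lift_succ_subst_var] at hinst
      exact Drv.impE Drv.hyp1 hinst
  | ex φ ih =>
    intro hnd hdeg
    have hdφ : φ.degree ≤ k := (Formula.degree_ex_body φ).trans hdeg
    obtain ⟨a1, b1⟩ := ih hnd hdφ
    have hexiT : Proves (fLEM k) (φ.imp (((φ.lift 1)).ex)) := by
      have h := Proves.ha (T := fLEM k) (HAAx.exI (φ.lift 1) (Term.var 0))
      rwa [Formula.lift_succ_subst_var] at h
    constructor
    · -- (∃Tφ).negD.negD ⊃ ¬_$¬_$∃φ
      have inner : Proves (fLEM k) (((φ.dollarTr).ex).imp ((φ.ex).negD.negD)) := by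
        refine Proves.ex_elim ?_
        show Proves (fLEM k) ((φ.dollarTr).imp ((((φ.lift 1).ex).negD).negD))
        refine (a1.imp_trans (Proves.nnD_mono hexiT))
      exact (Proves.nnD_mono inner).imp_trans (Proves.nnnD _ _)
    · -- ¬_$¬_$∃φ ⊃ (∃Tφ).negD.negD
      have inner : Proves (fLEM k) ((φ.ex).imp ((φ.dollarTr).ex)) :=
        Proves.mono_ex ((Proves.dniD _ φ).imp_trans b1)
      exact Proves.nnD_mono inner

end SemiClassicalArith
namespace SemiClassicalArith
open Formula

/-- The theory `F_k-LEM` plus decidability of the placeholder. -/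
def LDol (k : ℕ) : Set Formula := fLEM k ∪ {Formula.dollar.or Formula.dollar.neg}

theorem Proves.fLEM_to_LDol {k : ℕ} {φ : Formula} (h : Proves (fLEM k) φ) :
    Proves (LDol k) φ := h.mono Set.subset_union_left

theorem Proves.dollarDec {k : ℕ} : Proves (LDol k) (Formula.dollar.or Formula.dollar.neg) :=
  Proves.ax (Set.mem_union_right _ rfl)

theorem Rcl.noDollar : ∀ {k : ℕ} {φ : Formula}, Rcl k φ → φ.noDollar := by
  intro k φ h
  refine Rcl.rec (motive_1 := fun φ _ => φ.noDollar) (motive_2 := fun φ _ => φ.noDollar)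
    ?_ ?_ ?_ ?_ ?_ ?_ ?_ ?_ ?_ ?_ h
  · intro φ _ h2; exact h2
  · intro _ _ _ _ ih1 ih2; exact ⟨ih1, ih2⟩
  · intro _ _ _ _ ih1 ih2; exact ⟨ih1, ih2⟩
  · intro _ _ ih; exact ih
  · intro _ _ _ _ ih1 ih2; exact ⟨ih1, ih2⟩
  · intro φ _ h2; exact h2
  · intro _ _ _ _ ih1 ih2; exact ⟨ih1, ih2⟩
  · intro _ _ _ _ ih1 ih2; exact ⟨ih1, ih2⟩
  · intro _ _ ih; exact ih
  · intro _ _ _ _ ih1 ih2; exact ⟨ih1, ih2⟩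

theorem Jcl.noDollar {k : ℕ} {φ : Formula} (h : Jcl k φ) : φ.noDollar := by
  refine Jcl.rec (motive_1 := fun φ _ => φ.noDollar) (motive_2 := fun φ _ => φ.noDollar)
    ?_ ?_ ?_ ?_ ?_ ?_ ?_ ?_ ?_ ?_ h
  · intro φ _ h2; exact h2
  · intro _ _ _ _ ih1 ih2; exact ⟨ih1, ih2⟩
  · intro _ _ _ _ ih1 ih2; exact ⟨ih1, ih2⟩
  · intro _ _ ih; exact ih
  · intro _ _ _ _ ih1 ih2; exact ⟨ih1, ih2⟩
  · intro φ _ h2; exact h2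
  · intro _ _ _ _ ih1 ih2; exact ⟨ih1, ih2⟩
  · intro _ _ _ _ ih1 ih2; exact ⟨ih1, ih2⟩
  · intro _ _ ih; exact ih
  · intro _ _ _ _ ih1 ih2; exact ⟨ih1, ih2⟩

theorem Qcl.noDollar {k : ℕ} {φ : Formula} (h : Qcl k φ) : φ.noDollar := by
  induction h with
  | falsum => trivial
  | eq => trivial
  | and _ _ ih1 ih2 => exact ⟨ih1, ih2⟩
  | or _ _ ih1 ih2 => exact ⟨ih1, ih2⟩
  | all _ ih => exact ih
  | ex _ ih => exact ih
  | imp hJ _ ih => exact ⟨hJ.noDollar, ih⟩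

/-- The mutual `ℛ`/`𝒥` lemma: over `F_k-LEM + ($ ∨ ¬$)`,
`¬_$¬_$ρ ⊃ ρ^$` for `ρ ∈ ℛ_{k+1}` and `ι^$ ⊃ ¬_$¬_$ι` for `ι ∈ 𝒥_{k+1}`. -/
theorem Rcl.dollarTr_lemma : ∀ {k : ℕ} {φ : Formula}, Rcl k φ →
    Proves (LDol k) ((φ.negD.negD).imp φ.dollarTr) := by
  intro k φ h
  refine Rcl.rec
    (motive_1 := fun ρ _ => Proves (LDol k) ((ρ.negD.negD).imp ρ.dollarTr))
    (motive_2 := fun ι _ => Proves (LDol k) ((ι.dollarTr).imp ι.negD.negD))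
    ?_ ?_ ?_ ?_ ?_ ?_ ?_ ?_ ?_ ?_ h
  -- R base
  · intro β hdeg hnd
    exact ((Proves.bLem β hnd hdeg).2).fLEM_to_LDol
  -- R and
  · intro ρ₁ ρ₂ _ _ ih1 ih2
    refine Drv.toProves (Drv.impI (Drv.andI ?_ ?_))
    · refine Drv.impE (Drv.ofProves ih1) (Drv.impI ?_)
      -- Γ = [c : ρ₁→$, D : nn(ρ₁∧ρ₂)]
      refine Drv.impE Drv.hyp1 (Drv.impI ?_)
      exact Drv.impE Drv.hyp1 (Drv.andE1 Drv.hyp0)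
    · refine Drv.impE (Drv.ofProves ih2) (Drv.impI ?_)
      refine Drv.impE Drv.hyp1 (Drv.impI ?_)
      exact Drv.impE Drv.hyp1 (Drv.andE2 Drv.hyp0)
  -- R or
  · intro ρ₁ ρ₂ _ _ ih1 ih2
    have r1 : Proves (LDol k) (ρ₁.imp ρ₁.dollarTr) := (Proves.dniD _ _).imp_trans ih1
    have r2 : Proves (LDol k) (ρ₂.imp ρ₂.dollarTr) := (Proves.dniD _ _).imp_trans ih2
    exact Proves.nnD_mono (Proves.or_mono r1 r2)
  -- R all
  · intro ρ _ ih
    refine Proves.all_intro ?_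
    show Proves (LDol k) (((((ρ.all).lift 0)).negD.negD).imp ρ.dollarTr)
    refine Drv.toProves (Drv.impI ?_)
    refine Drv.impE (Drv.ofProves ih) (Drv.impI ?_)
    -- Γ = [c : ρ→$, D : nn(lift all)]
    refine Drv.impE Drv.hyp1 (Drv.impI ?_)
    -- Γ = [∀(ρ.lift 1), c, D]; goal $
    have hinst : Drv (LDol k) [(ρ.lift 1).all, ρ.negD, (((ρ.lift 1).all).negD).negD]
        ((ρ.lift 1).subst 0 (Term.var 0)) := Drv.allE _ Drv.hyp0
    rw [Formula.lift_succ_subst_var] at hinst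
    exact Drv.impE Drv.hyp1 hinst
  -- R imp : ρ = ι → ρ'
  · intro ι ρ' _ _ ihJ ihR
    refine Drv.toProves (Drv.impI (Drv.impI ?_))
    -- Γ = [a : Tι, D : nn(ι→ρ')]; goal Tρ'
    refine Drv.impE (Drv.ofProves ihR) (Drv.impI ?_)
    -- Γ = [c : ρ'→$, a, D]; goal $
    refine Drv.impE Drv.hyp2 (Drv.impI ?_)
    -- Γ = [f : ι→ρ', c, a, D]; goal $
    refine Drv.impE (Drv.impE (Drv.ofProves ihJ) Drv.hyp2) (Drv.impI ?_)
    -- Γ = [ι, f, c, a, D]; goal $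
    exact Drv.impE Drv.hyp2 (Drv.impE Drv.hyp1 Drv.hyp0)
  -- J base
  · intro β hdeg hnd
    exact ((Proves.bLem β hnd hdeg).1).fLEM_to_LDol
  -- J and
  · intro ι₁ ι₂ _ _ ih1 ih2
    refine Drv.toProves (Drv.impI (Drv.impI ?_))
    -- Γ = [c : (ι₁∧ι₂)→$, C : Tι₁∧Tι₂]; goal $
    refine Drv.impE (Drv.impE (Drv.ofProves ih1) (Drv.andE1 Drv.hyp1)) (Drv.impI ?_)
    refine Drv.impE (Drv.impE (Drv.ofProves ih2) (Drv.andE2 Drv.hyp2)) (Drv.impI ?_)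
    -- Γ = [ι₂, ι₁, c, C]
    exact Drv.impE Drv.hyp2 (Drv.andI Drv.hyp1 Drv.hyp0)
  -- J or
  · intro ι₁ ι₂ _ _ ih1 ih2
    have hfwd : Proves (LDol k) (((ι₁.dollarTr).or (ι₂.dollarTr)).imp ((ι₁.or ι₂).negD.negD)) := by
      refine Drv.toProves (Drv.impI ?_)
      refine Drv.orE Drv.hyp0 ?_ ?_
      · refine Drv.impI ?_
        refine Drv.impE (Drv.impE (Drv.ofProves ih1) Drv.hyp1) (Drv.impI ?_)
        exact Drv.impE Drv.hyp1 (Drv.orI1 Drv.hyp0)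
      · refine Drv.impI ?_
        refine Drv.impE (Drv.impE (Drv.ofProves ih2) Drv.hyp1) (Drv.impI ?_)
        exact Drv.impE Drv.hyp1 (Drv.orI2 Drv.hyp0)
    exact (Proves.nnD_mono hfwd).imp_trans (Proves.nnnD _ ((ι₁.or ι₂).negD))
  -- J ex
  · intro ι _ ih
    have hexi : Proves (LDol k) (ι.imp ((ι.lift 1).ex)) := by
      have h := Proves.ha (T := LDol k) (HAAx.exI (ι.lift 1) (Term.var 0))
      rwa [Formula.lift_succ_subst_var] at h
    have inner : Proves (LDol k) (((ι.dollarTr).ex).imp ((ι.ex).negD.negD)) := by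
      refine Proves.ex_elim ?_
      show Proves (LDol k) ((ι.dollarTr).imp ((((ι.lift 1).ex).negD).negD))
      exact ih.imp_trans (Proves.nnD_mono hexi)
    exact (Proves.nnD_mono inner).imp_trans (Proves.nnnD _ ((ι.ex).negD))
  -- J imp : ι = ρ → ι'
  · intro ρ ι' _ _ ihR ihJ
    have r2 : Proves (LDol k) (ρ.imp ρ.dollarTr) := (Proves.dniD _ _).imp_trans ihR
    refine Drv.toProves (Drv.impI (Drv.impI ?_))
    -- Γ = [c : (ρ→ι')→$, G : Tρ→Tι']; goal $
    refine Drv.orE (Drv.ofProves (Proves.dollarDec)) Drv.hyp0 ?_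
    -- Γ = [nd : ¬$, c, G]; goal $
    have dnotρ : Drv (LDol k) [Formula.dollar.neg, (ρ.imp ι').negD,
        (ρ.dollarTr).imp (ι'.dollarTr)] ρ.neg := by
      refine Drv.impI ?_
      -- Γ = [ρ, nd, c, G]; goal ⊥
      have hTι' : Drv (LDol k) [ρ, Formula.dollar.neg, (ρ.imp ι').negD,
          (ρ.dollarTr).imp (ι'.dollarTr)] (ι'.dollarTr) :=
        Drv.impE Drv.hyp3 (Drv.impE (Drv.ofProves r2) Drv.hyp0)
      refine Drv.impE Drv.hyp1 ?_
      -- goal $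
      refine Drv.impE (Drv.impE (Drv.ofProves ihJ) hTι') (Drv.impI ?_)
      -- Γ = [ι', ρ, nd, c, G]; goal $
      exact Drv.impE Drv.hyp3 (Drv.impI Drv.hyp1)
    -- now: from ¬ρ get ρ→ι' by efq, then c gives $
    refine Drv.impE Drv.hyp1 (Drv.impI ?_)
    -- Γ = [ρ, nd, c, G]; goal ι'
    exact Drv.efq (Drv.impE (Drv.weaken dnotρ) Drv.hyp0)

theorem Jcl.dollarTr_lemma : ∀ {k : ℕ} {φ : Formula}, Jcl k φ →
    Proves (LDol k) ((φ.dollarTr).imp φ.negD.negD) := by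
  intro k φ h
  refine Jcl.rec
    (motive_1 := fun ρ _ => Proves (LDol k) ((ρ.negD.negD).imp ρ.dollarTr))
    (motive_2 := fun ι _ => Proves (LDol k) ((ι.dollarTr).imp ι.negD.negD))
    ?_ ?_ ?_ ?_ ?_ ?_ ?_ ?_ ?_ ?_ h
  -- R base
  · intro β hdeg hnd
    exact ((Proves.bLem β hnd hdeg).2).fLEM_to_LDol
  -- R and
  · intro ρ₁ ρ₂ _ _ ih1 ih2
    refine Drv.toProves (Drv.impI (Drv.andI ?_ ?_))
    · refine Drv.impE (Drv.ofProves ih1) (Drv.impI ?_)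
      -- Γ = [c : ρ₁→$, D : nn(ρ₁∧ρ₂)]
      refine Drv.impE Drv.hyp1 (Drv.impI ?_)
      exact Drv.impE Drv.hyp1 (Drv.andE1 Drv.hyp0)
    · refine Drv.impE (Drv.ofProves ih2) (Drv.impI ?_)
      refine Drv.impE Drv.hyp1 (Drv.impI ?_)
      exact Drv.impE Drv.hyp1 (Drv.andE2 Drv.hyp0)
  -- R or
  · intro ρ₁ ρ₂ _ _ ih1 ih2
    have r1 : Proves (LDol k) (ρ₁.imp ρ₁.dollarTr) := (Proves.dniD _ _).imp_trans ih1
    have r2 : Proves (LDol k) (ρ₂.imp ρ₂.dollarTr) := (Proves.dniD _ _).imp_trans ih2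
    exact Proves.nnD_mono (Proves.or_mono r1 r2)
  -- R all
  · intro ρ _ ih
    refine Proves.all_intro ?_
    show Proves (LDol k) (((((ρ.all).lift 0)).negD.negD).imp ρ.dollarTr)
    refine Drv.toProves (Drv.impI ?_)
    refine Drv.impE (Drv.ofProves ih) (Drv.impI ?_)
    -- Γ = [c : ρ→$, D : nn(lift all)]
    refine Drv.impE Drv.hyp1 (Drv.impI ?_)
    -- Γ = [∀(ρ.lift 1), c, D]; goal $
    have hinst : Drv (LDol k) [(ρ.lift 1).all, ρ.negD, (((ρ.lift 1).all).negD).negD]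
        ((ρ.lift 1).subst 0 (Term.var 0)) := Drv.allE _ Drv.hyp0
    rw [Formula.lift_succ_subst_var] at hinst
    exact Drv.impE Drv.hyp1 hinst
  -- R imp : ρ = ι → ρ'
  · intro ι ρ' _ _ ihJ ihR
    refine Drv.toProves (Drv.impI (Drv.impI ?_))
    -- Γ = [a : Tι, D : nn(ι→ρ')]; goal Tρ'
    refine Drv.impE (Drv.ofProves ihR) (Drv.impI ?_)
    -- Γ = [c : ρ'→$, a, D]; goal $
    refine Drv.impE Drv.hyp2 (Drv.impI ?_)
    -- Γ = [f : ι→ρ', c, a, D]; goal $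
    refine Drv.impE (Drv.impE (Drv.ofProves ihJ) Drv.hyp2) (Drv.impI ?_)
    -- Γ = [ι, f, c, a, D]; goal $
    exact Drv.impE Drv.hyp2 (Drv.impE Drv.hyp1 Drv.hyp0)
  -- J base
  · intro β hdeg hnd
    exact ((Proves.bLem β hnd hdeg).1).fLEM_to_LDol
  -- J and
  · intro ι₁ ι₂ _ _ ih1 ih2
    refine Drv.toProves (Drv.impI (Drv.impI ?_))
    -- Γ = [c : (ι₁∧ι₂)→$, C : Tι₁∧Tι₂]; goal $
    refine Drv.impE (Drv.impE (Drv.ofProves ih1) (Drv.andE1 Drv.hyp1)) (Drv.impI ?_)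
    refine Drv.impE (Drv.impE (Drv.ofProves ih2) (Drv.andE2 Drv.hyp2)) (Drv.impI ?_)
    -- Γ = [ι₂, ι₁, c, C]
    exact Drv.impE Drv.hyp2 (Drv.andI Drv.hyp1 Drv.hyp0)
  -- J or
  · intro ι₁ ι₂ _ _ ih1 ih2
    have hfwd : Proves (LDol k) (((ι₁.dollarTr).or (ι₂.dollarTr)).imp ((ι₁.or ι₂).negD.negD)) := by
      refine Drv.toProves (Drv.impI ?_)
      refine Drv.orE Drv.hyp0 ?_ ?_
      · refine Drv.impI ?_
        refine Drv.impE (Drv.impE (Drv.ofProves ih1) Drv.hyp1) (Drv.impI ?_)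
        exact Drv.impE Drv.hyp1 (Drv.orI1 Drv.hyp0)
      · refine Drv.impI ?_
        refine Drv.impE (Drv.impE (Drv.ofProves ih2) Drv.hyp1) (Drv.impI ?_)
        exact Drv.impE Drv.hyp1 (Drv.orI2 Drv.hyp0)
    exact (Proves.nnD_mono hfwd).imp_trans (Proves.nnnD _ ((ι₁.or ι₂).negD))
  -- J ex
  · intro ι _ ih
    have hexi : Proves (LDol k) (ι.imp ((ι.lift 1).ex)) := by
      have h := Proves.ha (T := LDol k) (HAAx.exI (ι.lift 1) (Term.var 0))
      rwa [Formula.lift_succ_subst_var] at h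
    have inner : Proves (LDol k) (((ι.dollarTr).ex).imp ((ι.ex).negD.negD)) := by
      refine Proves.ex_elim ?_
      show Proves (LDol k) ((ι.dollarTr).imp ((((ι.lift 1).ex).negD).negD))
      exact ih.imp_trans (Proves.nnD_mono hexi)
    exact (Proves.nnD_mono inner).imp_trans (Proves.nnnD _ ((ι.ex).negD))
  -- J imp : ι = ρ → ι'
  · intro ρ ι' _ _ ihR ihJ
    have r2 : Proves (LDol k) (ρ.imp ρ.dollarTr) := (Proves.dniD _ _).imp_trans ihR
    refine Drv.toProves (Drv.impI (Drv.impI ?_))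
    -- Γ = [c : (ρ→ι')→$, G : Tρ→Tι']; goal $
    refine Drv.orE (Drv.ofProves (Proves.dollarDec)) Drv.hyp0 ?_
    -- Γ = [nd : ¬$, c, G]; goal $
    have dnotρ : Drv (LDol k) [Formula.dollar.neg, (ρ.imp ι').negD,
        (ρ.dollarTr).imp (ι'.dollarTr)] ρ.neg := by
      refine Drv.impI ?_
      -- Γ = [ρ, nd, c, G]; goal ⊥
      have hTι' : Drv (LDol k) [ρ, Formula.dollar.neg, (ρ.imp ι').negD,
          (ρ.dollarTr).imp (ι'.dollarTr)] (ι'.dollarTr) :=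
        Drv.impE Drv.hyp3 (Drv.impE (Drv.ofProves r2) Drv.hyp0)
      refine Drv.impE Drv.hyp1 ?_
      -- goal $
      refine Drv.impE (Drv.impE (Drv.ofProves ihJ) hTι') (Drv.impI ?_)
      -- Γ = [ι', ρ, nd, c, G]; goal $
      exact Drv.impE Drv.hyp3 (Drv.impI Drv.hyp1)
    -- now: from ¬ρ get ρ→ι' by efq, then c gives $
    refine Drv.impE Drv.hyp1 (Drv.impI ?_)
    -- Γ = [ρ, nd, c, G]; goal ι'
    exact Drv.efq (Drv.impE (Drv.weaken dnotρ) Drv.hyp0)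


/-- `𝒬_{k+1}`-formulas imply their own `$`-translations. -/
theorem Qcl.dollarTr_lemma : ∀ {k : ℕ} {φ : Formula}, Qcl k φ →
    Proves (LDol k) (φ.imp φ.dollarTr) := by
  intro k φ h
  induction h with
  | falsum => exact Drv.toProves (Drv.impI (Drv.efq Drv.hyp0))
  | eq => exact Proves.dniD _ _
  | and _ _ ih1 ih2 =>
    exact Drv.toProves (Drv.impI (Drv.andI
      (Drv.impE (Drv.ofProves ih1) (Drv.andE1 Drv.hyp0))
      (Drv.impE (Drv.ofProves ih2) (Drv.andE2 Drv.hyp0))))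
  | or _ _ ih1 ih2 => exact (Proves.or_mono ih1 ih2).imp_trans (Proves.dniD _ _)
  | all _ ih => exact Proves.mono_all ih
  | ex _ ih => exact (Proves.mono_ex ih).imp_trans (Proves.dniD _ _)
  | imp hJ _ ih =>
    rename_i ι χ' _
    refine Drv.toProves (Drv.impI (Drv.impI ?_))
    -- Γ = [b : Tι, a : ι→χ']; goal Tχ'
    refine Drv.impE (Drv.ofProves (Proves.stab_dollarTr (LDol k) χ')) (Drv.impI ?_)
    -- Γ = [c : Tχ'→$, b, a]; goal $
    refine Drv.impE (Drv.impE (Drv.ofProves hJ.dollarTr_lemma) Drv.hyp1) (Drv.impI ?_)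
    -- Γ = [ι, c, b, a]; goal $
    exact Drv.impE Drv.hyp1 (Drv.impE (Drv.ofProves ih) (Drv.impE Drv.hyp3 Drv.hyp0))

end SemiClassicalArith
namespace SemiClassicalArith
open Formula

/-- Provable equivalence over `S`. -/
def EqvS (S : Set Formula) (A B : Formula) : Prop :=
  Proves S (A.imp B) ∧ Proves S (B.imp A)

namespace EqvS

variable {S : Set Formula} {A B C D : Formula}

theorem refl (S : Set Formula) (A : Formula) : EqvS S A A :=
  ⟨Proves.imp_refl S A, Proves.imp_refl S A⟩

theorem symm (h : EqvS S A B) : EqvS S B A := ⟨h.2, h.1⟩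

theorem trans (h1 : EqvS S A B) (h2 : EqvS S B C) : EqvS S A C :=
  ⟨h1.1.imp_trans h2.1, h2.2.imp_trans h1.2⟩

theorem and_congr (h1 : EqvS S A B) (h2 : EqvS S C D) : EqvS S (A.and C) (B.and D) :=
  ⟨Proves.and_mono h1.1 h2.1, Proves.and_mono h1.2 h2.2⟩

theorem or_congr (h1 : EqvS S A B) (h2 : EqvS S C D) : EqvS S (A.or C) (B.or D) :=
  ⟨Proves.or_mono h1.1 h2.1, Proves.or_mono h1.2 h2.2⟩

theorem imp_congr (h1 : EqvS S A B) (h2 : EqvS S C D) : EqvS S (A.imp C) (B.imp D) := by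
  constructor
  · refine Drv.toProves (Drv.impI (Drv.impI ?_))
    exact Drv.impE (Drv.ofProves h2.1) (Drv.impE Drv.hyp1 (Drv.impE (Drv.ofProves h1.2) Drv.hyp0))
  · refine Drv.toProves (Drv.impI (Drv.impI ?_))
    exact Drv.impE (Drv.ofProves h2.2) (Drv.impE Drv.hyp1 (Drv.impE (Drv.ofProves h1.1) Drv.hyp0))

theorem all_congr (h : EqvS S A B) : EqvS S A.all B.all :=
  ⟨Proves.mono_all h.1, Proves.mono_all h.2⟩

theorem ex_congr (h : EqvS S A B) : EqvS S A.ex B.ex :=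
  ⟨Proves.mono_ex h.1, Proves.mono_ex h.2⟩

theorem and_comm (S : Set Formula) (A B : Formula) : EqvS S (A.and B) (B.and A) :=
  ⟨Drv.toProves (Drv.impI (Drv.andI (Drv.andE2 Drv.hyp0) (Drv.andE1 Drv.hyp0))),
   Drv.toProves (Drv.impI (Drv.andI (Drv.andE2 Drv.hyp0) (Drv.andE1 Drv.hyp0)))⟩

theorem or_comm (S : Set Formula) (A B : Formula) : EqvS S (A.or B) (B.or A) :=
  ⟨Proves.or_comm_imp S A B, Proves.or_comm_imp S B A⟩

/-- Transfer excluded middle along a provable equivalence. -/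
theorem lem_transfer (h : EqvS S A B) (hlem : Proves S (B.or B.neg)) :
    Proves S (A.or A.neg) := by
  refine Drv.toProves ?_
  refine Drv.orE (Drv.ofProves hlem) ?_ ?_
  · exact Drv.orI1 (Drv.impE (Drv.ofProves h.2) Drv.hyp0)
  · refine Drv.orI2 (Drv.impI ?_)
    exact Drv.impE Drv.hyp1 (Drv.impE (Drv.ofProves h.1) Drv.hyp0)

end EqvS

/-! ### Quantifier-pulling equivalences -/

section Pulls

variable (S : Set Formula) (φ ψ : Formula)

/-- `(∀φ) ∧ ψ ↔ ∀(φ ∧ liftψ)`. -/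
theorem pull_and_all : EqvS S ((φ.all).and ψ) ((φ.and (ψ.lift 0)).all) := by
  constructor
  · refine Proves.all_intro ?_
    show Proves S (((((φ.all).and ψ)).lift 0).imp (φ.and (ψ.lift 0)))
    refine Drv.toProves (Drv.impI (Drv.andI ?_ ?_))
    · have hinst : Drv S [((φ.all).and ψ).lift 0] ((φ.lift 1).subst 0 (Term.var 0)) :=
        Drv.allE _ (Drv.andE1 Drv.hyp0)
      rwa [Formula.lift_succ_subst_var] at hinst
    · exact Drv.andE2 Drv.hyp0
  · refine Drv.toProves (Drv.impI (Drv.andI ?_ ?_))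
    · have h1 : Proves S (((φ.and (ψ.lift 0)).all).imp φ.all) :=
        Proves.mono_all (Proves.ha (HAAx.andE1 _ _))
      exact Drv.impE (Drv.ofProves h1) Drv.hyp0
    · have hinst : Drv S [(φ.and (ψ.lift 0)).all] ((φ.and (ψ.lift 0)).subst 0 (Term.var 0)) :=
        Drv.allE _ Drv.hyp0
    -- (ψ.lift 0).subst 0 (var 0) = ψ
      have : (φ.and (ψ.lift 0)).subst 0 (Term.var 0)
          = (φ.subst 0 (Term.var 0)).and ψ := by
        show (φ.subst 0 (Term.var 0)).and ((ψ.lift 0).subst 0 (Term.var 0)) = _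
        rw [Formula.lift_subst_self]
      rw [this] at hinst
      exact Drv.andE2 hinst

/-- `(∃φ) ∧ ψ ↔ ∃(φ ∧ liftψ)`. -/
theorem pull_and_ex : EqvS S ((φ.ex).and ψ) ((φ.and (ψ.lift 0)).ex) := by
  constructor
  · have h1 : Proves S ((φ.ex).imp (ψ.imp ((φ.and (ψ.lift 0)).ex))) := by
      refine Proves.ex_elim ?_
      show Proves S (φ.imp ((ψ.imp ((φ.and (ψ.lift 0)).ex)).lift 0))
      refine Drv.toProves (Drv.impI (Drv.impI ?_))
      -- Γ = [ψ.lift 0, φ]; goal ((φ.and ψ.lift 0).ex).lift 0 = ex (lift 1 ...)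
      show Drv S [ψ.lift 0, φ] (((φ.and (ψ.lift 0)).lift 1).ex)
      refine Drv.exI (Term.var 0) ?_
      rw [Formula.lift_succ_subst_var]
      exact Drv.andI Drv.hyp1 Drv.hyp0
    refine Drv.toProves (Drv.impI ?_)
    exact Drv.impE (Drv.impE (Drv.ofProves h1) (Drv.andE1 Drv.hyp0)) (Drv.andE2 Drv.hyp0)
  · refine Proves.ex_elim ?_
    show Proves S ((φ.and (ψ.lift 0)).imp (((φ.ex).and ψ).lift 0))
    refine Drv.toProves (Drv.impI (Drv.andI ?_ ?_))
    · show Drv S [φ.and (ψ.lift 0)] ((φ.lift 1).ex)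
      refine Drv.exI (Term.var 0) ?_
      rw [Formula.lift_succ_subst_var]
      exact Drv.andE1 Drv.hyp0
    · exact Drv.andE2 Drv.hyp0

/-- `(∀φ) ∨ ψ ↔ ∀(φ ∨ liftψ)`, the converse using decidability of `ψ`. -/
theorem pull_or_all (hlem : Proves S (ψ.or ψ.neg)) :
    EqvS S ((φ.all).or ψ) ((φ.or (ψ.lift 0)).all) := by
  constructor
  · refine Proves.all_intro ?_
    show Proves S ((((φ.all).or ψ).lift 0).imp (φ.or (ψ.lift 0)))
    refine Drv.toProves (Drv.impI ?_)
    refine Drv.orE Drv.hyp0 ?_ ?_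
    · refine Drv.orI1 ?_
      have hinst : Drv S [(φ.lift 1).all, ((φ.all).or ψ).lift 0]
          ((φ.lift 1).subst 0 (Term.var 0)) := Drv.allE _ Drv.hyp0
      rwa [Formula.lift_succ_subst_var] at hinst
    · exact Drv.orI2 Drv.hyp0
  · -- needs LEM(ψ)
    have sub : Proves S ((ψ.neg.and ((φ.or (ψ.lift 0)).all)).imp φ.all) := by
      refine Proves.all_intro ?_
      show Proves S ((((ψ.lift 0).neg).and (((φ.or (ψ.lift 0)).lift 1).all)).imp φ)
      refine Drv.toProves (Drv.impI ?_)
      have hinst : Drv S [((ψ.lift 0).neg).and (((φ.or (ψ.lift 0)).lift 1).all)]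
          (((φ.or (ψ.lift 0)).lift 1).subst 0 (Term.var 0)) :=
        Drv.allE _ (Drv.andE2 Drv.hyp0)
      rw [Formula.lift_succ_subst_var] at hinst
      refine Drv.orE hinst Drv.hyp0 ?_
      exact Drv.efq (Drv.impE (Drv.andE1 Drv.hyp1) Drv.hyp0)
    refine Drv.toProves (Drv.impI ?_)
    refine Drv.orE (Drv.ofProves hlem) (Drv.orI2 Drv.hyp0) ?_
    refine Drv.orI1 ?_
    exact Drv.impE (Drv.ofProves sub) (Drv.andI Drv.hyp0 Drv.hyp1)

/-- `(∃φ) ∨ ψ ↔ ∃(φ ∨ liftψ)` (both directions intuitionistic). -/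
theorem pull_or_ex : EqvS S ((φ.ex).or ψ) ((φ.or (ψ.lift 0)).ex) := by
  constructor
  · refine Drv.toProves (Drv.impI ?_)
    refine Drv.orE Drv.hyp0 ?_ ?_
    · have h1 : Proves S ((φ.ex).imp ((φ.or (ψ.lift 0)).ex)) :=
        Proves.mono_ex (Proves.ha (HAAx.orI1 _ _))
      exact Drv.impE (Drv.ofProves h1) Drv.hyp0
    · show Drv S [ψ, (φ.ex).or ψ] ((φ.or (ψ.lift 0)).ex)
      refine Drv.exI Term.zero ?_
      show Drv S [ψ, (φ.ex).or ψ]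
        ((φ.subst 0 Term.zero).or ((ψ.lift 0).subst 0 Term.zero))
      rw [Formula.lift_subst_self]
      exact Drv.orI2 Drv.hyp0
  · refine Proves.ex_elim ?_
    show Proves S ((φ.or (ψ.lift 0)).imp ((((φ.lift 1).ex)).or (ψ.lift 0)))
    refine Drv.toProves (Drv.impI ?_)
    refine Drv.orE Drv.hyp0 ?_ ?_
    · refine Drv.orI1 (Drv.exI (Term.var 0) ?_)
      rw [Formula.lift_succ_subst_var]
      exact Drv.hyp0
    · exact Drv.orI2 Drv.hyp0

/-- `(∃φ ⊃ ψ) ↔ ∀(φ ⊃ liftψ)` (both directions intuitionistic). -/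
theorem pull_imp_ex_l : EqvS S ((φ.ex).imp ψ) ((φ.imp (ψ.lift 0)).all) := by
  constructor
  · refine Proves.all_intro ?_
    show Proves S ((((φ.ex).imp ψ).lift 0).imp (φ.imp (ψ.lift 0)))
    refine Drv.toProves (Drv.impI (Drv.impI ?_))
    -- Γ = [φ, ((ex φ).imp ψ).lift 0]; goal ψ.lift 0
    refine Drv.impE Drv.hyp1 (Drv.exI (Term.var 0) ?_)
    rw [Formula.lift_succ_subst_var]
    exact Drv.hyp0
  · refine Drv.toProves (Drv.impI ?_)
    refine Drv.impI ?_
    show Drv S [φ.ex, (φ.imp (ψ.lift 0)).all] ψ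
    have h1 : Proves S (((φ.imp (ψ.lift 0)).all).imp ((φ.ex).imp ψ)) :=
      Proves.ha (HAAx.exE φ ψ)
    exact Drv.impE (Drv.impE (Drv.ofProves h1) Drv.hyp1) Drv.hyp0

/-- `(ψ ⊃ ∀φ) ↔ ∀(liftψ ⊃ φ)` (both directions intuitionistic). -/
theorem pull_imp_all_r : EqvS S (ψ.imp (φ.all)) (((ψ.lift 0).imp φ).all) := by
  constructor
  · refine Proves.all_intro ?_
    show Proves S (((ψ.imp (φ.all)).lift 0).imp ((ψ.lift 0).imp φ))
    refine Drv.toProves (Drv.impI (Drv.impI ?_))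
    -- Γ = [ψ.lift 0, (ψ.lift 0).imp ((φ.lift 1).all)]; goal φ
    have hinst : Drv S [ψ.lift 0, (ψ.lift 0).imp ((φ.lift 1).all)]
        ((φ.lift 1).subst 0 (Term.var 0)) :=
      Drv.allE _ (Drv.impE Drv.hyp1 Drv.hyp0)
    rwa [Formula.lift_succ_subst_var] at hinst
  · exact Proves.cd_converse S ψ φ

/-- `(ψ ⊃ ∃φ) ↔ ∃(liftψ ⊃ φ)`, forward direction using decidability of `ψ`. -/
theorem pull_imp_ex_r (hlem : Proves S (ψ.or ψ.neg)) :
    EqvS S (ψ.imp (φ.ex)) (((ψ.lift 0).imp φ).ex) := by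
  constructor
  · refine Drv.toProves (Drv.impI ?_)
    refine Drv.orE (Drv.ofProves hlem) ?_ ?_
    · -- Γ = [ψ, ψ ⊃ ∃φ]
      have h1 : Proves S ((φ.ex).imp ((((ψ.lift 0).imp φ)).ex)) := by
        refine Proves.ex_elim ?_
        show Proves S (φ.imp (((((ψ.lift 0).imp φ)).ex).lift 0))
        refine Drv.toProves (Drv.impI (Drv.exI (Term.var 0) ?_))
        rw [Formula.lift_succ_subst_var]
        exact Drv.impI Drv.hyp1
      exact Drv.impE (Drv.ofProves h1) (Drv.impE Drv.hyp1 Drv.hyp0)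
    · -- Γ = [¬ψ, ψ ⊃ ∃φ]
      refine Drv.exI Term.zero ?_
      show Drv S [ψ.neg, ψ.imp (φ.ex)]
        (((ψ.lift 0).subst 0 Term.zero).imp (φ.subst 0 Term.zero))
      rw [Formula.lift_subst_self]
      exact Drv.impI (Drv.efq (Drv.impE Drv.hyp1 Drv.hyp0))
  · refine Proves.ex_elim ?_
    show Proves S (((ψ.lift 0).imp φ).imp ((ψ.imp (φ.ex)).lift 0))
    refine Drv.toProves (Drv.impI (Drv.impI ?_))
    -- Γ = [ψ.lift 0, (ψ.lift 0).imp φ]; goal (φ.lift 1).ex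
    refine Drv.exI (Term.var 0) ?_
    rw [Formula.lift_succ_subst_var]
    exact Drv.impE Drv.hyp1 Drv.hyp0

/-- `(∀φ ⊃ ψ) ↔ ∃τ` where `τ` is a prenex form of `φ ⊃ liftψ`:
needs LEM for `φ` and for `∃τ`. -/
theorem pull_imp_all_l {τ : Formula} (heqv : EqvS S (φ.imp (ψ.lift 0)) τ)
    (hlemφ : Proves S (φ.or φ.neg)) (hlemex : Proves S ((τ.ex).or (τ.ex).neg)) :
    EqvS S ((φ.all).imp ψ) (τ.ex) := by
  constructor
  · refine Drv.toProves (Drv.impI ?_)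
    refine Drv.orE (Drv.ofProves hlemex) Drv.hyp0 ?_
    -- Γ = [¬∃τ, ∀φ ⊃ ψ]; goal ∃τ
    refine Drv.efq ?_
    -- derive ∀φ, then ψ, then τ[zero], then ∃τ, contradiction
    have hallφ : Proves S ((((τ.ex).neg)).imp φ.all) := by
      refine Proves.all_intro ?_
      show Proves S (((((τ.lift 1).ex)).neg).imp φ)
      refine Drv.toProves (Drv.impI ?_)
      refine Drv.orE (Drv.ofProves hlemφ) Drv.hyp0 ?_
      -- Γ = [¬φ, ¬∃(τ.lift 1)]; goal φ
      refine Drv.efq (Drv.impE Drv.hyp1 (Drv.exI (Term.var 0) ?_))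
      rw [Formula.lift_succ_subst_var]
      -- goal τ from ¬φ : via heqv.1 applied to (φ ⊃ liftψ)
      refine Drv.impE (Drv.ofProves heqv.1) (Drv.impI ?_)
      exact Drv.efq (Drv.impE Drv.hyp1 Drv.hyp0)
    have hψτ : Proves S (ψ.imp (τ.subst 0 Term.zero)) := by
      have h1 := heqv.1.subst0 Term.zero
      have h2 : ((φ.imp (ψ.lift 0)).subst 0 Term.zero)
          = (φ.subst 0 Term.zero).imp ψ := by
        show ((φ.subst 0 Term.zero)).imp ((ψ.lift 0).subst 0 Term.zero) = _
        rw [Formula.lift_subst_self]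
      have h1' : Proves S (((φ.imp (ψ.lift 0)).subst 0 Term.zero).imp (τ.subst 0 Term.zero)) := h1
      rw [h2] at h1'
      refine Drv.toProves (Drv.impI ?_)
      exact Drv.impE (Drv.ofProves h1') (Drv.impI Drv.hyp1)
    -- Γ = [¬∃τ, ∀φ ⊃ ψ]; goal falsum
    have dψ : Drv S [(τ.ex).neg, (φ.all).imp ψ] ψ :=
      Drv.impE Drv.hyp1 (Drv.impE (Drv.ofProves hallφ) Drv.hyp0)
    exact Drv.impE Drv.hyp0 (Drv.exI Term.zero (Drv.impE (Drv.ofProves hψτ) dψ))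
  · -- ∃τ ⊃ (∀φ ⊃ ψ)
    refine Proves.ex_elim ?_
    show Proves S (τ.imp (((φ.all).imp ψ).lift 0))
    refine Drv.toProves (Drv.impI (Drv.impI ?_))
    -- Γ = [(φ.lift 1).all, τ]; goal ψ.lift 0
    have hτimp : Drv S [(φ.lift 1).all, τ] (φ.imp (ψ.lift 0)) :=
      Drv.impE (Drv.ofProves heqv.2) Drv.hyp1
    have hinst : Drv S [(φ.lift 1).all, τ] ((φ.lift 1).subst 0 (Term.var 0)) :=
      Drv.allE _ Drv.hyp0
    rw [Formula.lift_succ_subst_var] at hinst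
    exact Drv.impE hτimp hinst

end Pulls

end SemiClassicalArith
namespace SemiClassicalArith
open Formula

theorem IsPi.isQF_of_zero {φ : Formula} (h : IsPi 0 φ) : φ.isQF := by
  cases h with
  | qf h => exact h

theorem IsSigma.isQF_of_zero {φ : Formula} (h : IsSigma 0 φ) : φ.isQF := by
  cases h with
  | qf h => exact h

def MPiAnd (S : Set Formula) (a : ℕ) : Prop :=
  ∀ π₁ π₂, IsPi a π₁ → IsPi a π₂ → ∃ π, IsPi a π ∧ EqvS S (π₁.and π₂) π
def MSigAnd (S : Set Formula) (a : ℕ) : Prop :=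
  ∀ σ₁ σ₂, IsSigma a σ₁ → IsSigma a σ₂ → ∃ σ, IsSigma a σ ∧ EqvS S (σ₁.and σ₂) σ
def MPiOr (S : Set Formula) (a : ℕ) : Prop :=
  ∀ π₁ π₂, IsPi a π₁ → IsPi a π₂ → ∃ π, IsPi a π ∧ EqvS S (π₁.or π₂) π
def MSigOr (S : Set Formula) (a : ℕ) : Prop :=
  ∀ σ₁ σ₂, IsSigma a σ₁ → IsSigma a σ₂ → ∃ σ, IsSigma a σ ∧ EqvS S (σ₁.or σ₂) σ
def MPiImp (S : Set Formula) (a : ℕ) : Prop :=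
  ∀ σ₁ π₂, IsSigma a σ₁ → IsPi a π₂ → ∃ π, IsPi a π ∧ EqvS S (σ₁.imp π₂) π
def MSigImp (S : Set Formula) (a : ℕ) : Prop :=
  ∀ π₁ σ₂, IsPi a π₁ → IsSigma a σ₂ → ∃ σ, IsSigma a σ ∧ EqvS S (π₁.imp σ₂) σ

theorem mergeAll {S : Set Formula} {k : ℕ} (hcd : CdR S k) :
    ∀ a, a ≤ k → MPiAnd S a ∧ MSigAnd S a ∧ MPiOr S a ∧ MSigOr S a ∧
      MPiImp S a ∧ MSigImp S a := by
  intro a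
  induction a with
  | zero =>
    intro _
    refine ⟨?_, ?_, ?_, ?_, ?_, ?_⟩
    · intro π₁ π₂ h1 h2
      exact ⟨π₁.and π₂, IsPi.qf ⟨h1.isQF_of_zero, h2.isQF_of_zero⟩, EqvS.refl S _⟩
    · intro π₁ π₂ h1 h2
      exact ⟨π₁.and π₂, IsSigma.qf ⟨h1.isQF_of_zero, h2.isQF_of_zero⟩, EqvS.refl S _⟩
    · intro π₁ π₂ h1 h2
      exact ⟨π₁.or π₂, IsPi.qf ⟨h1.isQF_of_zero, h2.isQF_of_zero⟩, EqvS.refl S _⟩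
    · intro π₁ π₂ h1 h2
      exact ⟨π₁.or π₂, IsSigma.qf ⟨h1.isQF_of_zero, h2.isQF_of_zero⟩, EqvS.refl S _⟩
    · intro π₁ π₂ h1 h2
      exact ⟨π₁.imp π₂, IsPi.qf ⟨h1.isQF_of_zero, h2.isQF_of_zero⟩, EqvS.refl S _⟩
    · intro π₁ π₂ h1 h2
      exact ⟨π₁.imp π₂, IsSigma.qf ⟨h1.isQF_of_zero, h2.isQF_of_zero⟩, EqvS.refl S _⟩
  | succ m ihm =>
    intro hmk
    have ih := ihm (by omega)
    have hm1k : m + 1 ≤ k := hmk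
    -- ∧ for Π_{m+1}
    have hPiAnd : MPiAnd S (m+1) := by
      have inner : ∀ {j π₂}, IsPi j π₂ → j = m + 1 → ∀ σ₁, IsSigma m σ₁ →
          ∃ π, IsPi (m+1) π ∧ EqvS S (σ₁.and π₂) π := by
        intro j π₂ h
        refine IsPi.rec (motive_1 := fun _ _ _ => True)
          (motive_2 := fun j π₂ _ => j = m + 1 → ∀ σ₁, IsSigma m σ₁ →
            ∃ π, IsPi (m+1) π ∧ EqvS S (σ₁.and π₂) π) ?_ ?_ ?_ ?_ ?_ ?_ h
        · intros; trivial
        · intros; trivial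
        · intros; trivial
        · intro _ _ hj; exact absurd hj (by omega)
        · intro j' ψ₂ hσ₂ _ hj σ₁ hσ₁
          have hσ₂' : IsSigma m ψ₂ := (show j' = m by omega) ▸ hσ₂
          obtain ⟨σ, hσ, he⟩ := ih.2.1 σ₁ ψ₂ hσ₁ hσ₂'
          exact ⟨σ, IsPi.ofSigma hσ, he⟩
        · intro j' φ₂ hπ₂ ihin hj σ₁ hσ₁
          obtain ⟨π', hπ', he⟩ := ihin hj (σ₁.lift 0) (hσ₁.lift 0)
          refine ⟨π'.all, hπ'.all, ?_⟩
          refine ((EqvS.and_comm S _ _).trans (pull_and_all S φ₂ σ₁)).trans ?_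
          exact EqvS.all_congr ((EqvS.and_comm S _ _).trans he)
      intro π₁ π₂ h1 h2
      refine IsPi.rec (motive_1 := fun _ _ _ => True)
        (motive_2 := fun j π₁ _ => j = m + 1 → ∀ π₂, IsPi (m+1) π₂ →
          ∃ π, IsPi (m+1) π ∧ EqvS S (π₁.and π₂) π) ?_ ?_ ?_ ?_ ?_ ?_ h1 rfl π₂ h2
      · intros; trivial
      · intros; trivial
      · intros; trivial
      · intro _ _ hj; exact absurd hj (by omega)
      · intro j' σ₁ hσ₁ _ hj π₂' hπ₂'
        exact inner hπ₂' rfl σ₁ ((show j' = m by omega) ▸ hσ₁)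
      · intro j' φ₁ hπ₁ ihout hj π₂' hπ₂'
        obtain ⟨π', hπ', he⟩ := ihout hj (π₂'.lift 0) (hπ₂'.lift 0)
        refine ⟨π'.all, hπ'.all, ?_⟩
        exact (pull_and_all S φ₁ π₂').trans (EqvS.all_congr he)
    -- ∧ for Σ_{m+1}
    have hSigAnd : MSigAnd S (m+1) := by
      have inner : ∀ {j σ₂}, IsSigma j σ₂ → j = m + 1 → ∀ π₁, IsPi m π₁ →
          ∃ σ, IsSigma (m+1) σ ∧ EqvS S (π₁.and σ₂) σ := by
        intro j σ₂ h
        refine IsSigma.rec (motive_2 := fun _ _ _ => True)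
          (motive_1 := fun j σ₂ _ => j = m + 1 → ∀ π₁, IsPi m π₁ →
            ∃ σ, IsSigma (m+1) σ ∧ EqvS S (π₁.and σ₂) σ) ?_ ?_ ?_ ?_ ?_ ?_ h
        · intro _ _ hj; exact absurd hj (by omega)
        · intro j' ψ₂ hπ₂ _ hj π₁ hπ₁
          have hπ₂' : IsPi m ψ₂ := (show j' = m by omega) ▸ hπ₂
          obtain ⟨π, hπ, he⟩ := ih.1 π₁ ψ₂ hπ₁ hπ₂'
          exact ⟨π, IsSigma.ofPi hπ, he⟩
        · intro j' φ₂ hσ₂ ihin hj π₁ hπ₁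
          obtain ⟨σ', hσ', he⟩ := ihin hj (π₁.lift 0) (hπ₁.lift 0)
          refine ⟨σ'.ex, hσ'.ex, ?_⟩
          refine ((EqvS.and_comm S _ _).trans (pull_and_ex S φ₂ π₁)).trans ?_
          exact EqvS.ex_congr ((EqvS.and_comm S _ _).trans he)
        · intros; trivial
        · intros; trivial
        · intros; trivial
      intro σ₁ σ₂ h1 h2
      refine IsSigma.rec (motive_2 := fun _ _ _ => True)
        (motive_1 := fun j σ₁ _ => j = m + 1 → ∀ σ₂, IsSigma (m+1) σ₂ →
          ∃ σ, IsSigma (m+1) σ ∧ EqvS S (σ₁.and σ₂) σ) ?_ ?_ ?_ ?_ ?_ ?_ h1 rfl σ₂ h2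
      · intro _ _ hj; exact absurd hj (by omega)
      · intro j' π₁ hπ₁ _ hj σ₂' hσ₂'
        exact inner hσ₂' rfl π₁ ((show j' = m by omega) ▸ hπ₁)
      · intro j' φ₁ hσ₁ ihout hj σ₂' hσ₂'
        obtain ⟨σ', hσ', he⟩ := ihout hj (σ₂'.lift 0) (hσ₂'.lift 0)
        refine ⟨σ'.ex, hσ'.ex, ?_⟩
        exact (pull_and_ex S φ₁ σ₂').trans (EqvS.ex_congr he)
      · intros; trivial
      · intros; trivial
      · intros; trivial
    -- ∨ for Π_{m+1}
    have hPiOr : MPiOr S (m+1) := by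
      have inner : ∀ {j π₂}, IsPi j π₂ → j = m + 1 → ∀ σ₁, IsSigma m σ₁ →
          ∃ π, IsPi (m+1) π ∧ EqvS S (σ₁.or π₂) π := by
        intro j π₂ h
        refine IsPi.rec (motive_1 := fun _ _ _ => True)
          (motive_2 := fun j π₂ _ => j = m + 1 → ∀ σ₁, IsSigma m σ₁ →
            ∃ π, IsPi (m+1) π ∧ EqvS S (σ₁.or π₂) π) ?_ ?_ ?_ ?_ ?_ ?_ h
        · intros; trivial
        · intros; trivial
        · intros; trivial
        · intro _ _ hj; exact absurd hj (by omega)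
        · intro j' ψ₂ hσ₂ _ hj σ₁ hσ₁
          have hσ₂' : IsSigma m ψ₂ := (show j' = m by omega) ▸ hσ₂
          obtain ⟨σ, hσ, he⟩ := ih.2.2.2.1 σ₁ ψ₂ hσ₁ hσ₂'
          exact ⟨σ, IsPi.ofSigma hσ, he⟩
        · intro j' φ₂ hπ₂ ihin hj σ₁ hσ₁
          obtain ⟨π', hπ', he⟩ := ihin hj (σ₁.lift 0) (hσ₁.lift 0)
          refine ⟨π'.all, hπ'.all, ?_⟩
          have hlem : Proves S (σ₁.or σ₁.neg) := hcd.sigma_lem hσ₁ (by omega)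
          refine ((EqvS.or_comm S _ _).trans (pull_or_all S φ₂ σ₁ hlem)).trans ?_
          exact EqvS.all_congr ((EqvS.or_comm S _ _).trans he)
      intro π₁ π₂ h1 h2
      refine IsPi.rec (motive_1 := fun _ _ _ => True)
        (motive_2 := fun j π₁ _ => j = m + 1 → ∀ π₂, IsPi (m+1) π₂ →
          ∃ π, IsPi (m+1) π ∧ EqvS S (π₁.or π₂) π) ?_ ?_ ?_ ?_ ?_ ?_ h1 rfl π₂ h2
      · intros; trivial
      · intros; trivial
      · intros; trivial
      · intro _ _ hj; exact absurd hj (by omega)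
      · intro j' σ₁ hσ₁ _ hj π₂' hπ₂'
        exact inner hπ₂' rfl σ₁ ((show j' = m by omega) ▸ hσ₁)
      · intro j' φ₁ hπ₁ ihout hj π₂' hπ₂'
        obtain ⟨π', hπ', he⟩ := ihout hj (π₂'.lift 0) (hπ₂'.lift 0)
        refine ⟨π'.all, hπ'.all, ?_⟩
        have hlem : Proves S (π₂'.or π₂'.neg) := hcd.pi_lem hπ₂' (by omega)
        exact (pull_or_all S φ₁ π₂' hlem).trans (EqvS.all_congr he)
    -- ∨ for Σ_{m+1}
    have hSigOr : MSigOr S (m+1) := by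
      have inner : ∀ {j σ₂}, IsSigma j σ₂ → j = m + 1 → ∀ π₁, IsPi m π₁ →
          ∃ σ, IsSigma (m+1) σ ∧ EqvS S (π₁.or σ₂) σ := by
        intro j σ₂ h
        refine IsSigma.rec (motive_2 := fun _ _ _ => True)
          (motive_1 := fun j σ₂ _ => j = m + 1 → ∀ π₁, IsPi m π₁ →
            ∃ σ, IsSigma (m+1) σ ∧ EqvS S (π₁.or σ₂) σ) ?_ ?_ ?_ ?_ ?_ ?_ h
        · intro _ _ hj; exact absurd hj (by omega)
        · intro j' ψ₂ hπ₂ _ hj π₁ hπ₁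
          have hπ₂' : IsPi m ψ₂ := (show j' = m by omega) ▸ hπ₂
          obtain ⟨π, hπ, he⟩ := ih.2.2.1 π₁ ψ₂ hπ₁ hπ₂'
          exact ⟨π, IsSigma.ofPi hπ, he⟩
        · intro j' φ₂ hσ₂ ihin hj π₁ hπ₁
          obtain ⟨σ', hσ', he⟩ := ihin hj (π₁.lift 0) (hπ₁.lift 0)
          refine ⟨σ'.ex, hσ'.ex, ?_⟩
          refine ((EqvS.or_comm S _ _).trans (pull_or_ex S φ₂ π₁)).trans ?_
          exact EqvS.ex_congr ((EqvS.or_comm S _ _).trans he)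
        · intros; trivial
        · intros; trivial
        · intros; trivial
      intro σ₁ σ₂ h1 h2
      refine IsSigma.rec (motive_2 := fun _ _ _ => True)
        (motive_1 := fun j σ₁ _ => j = m + 1 → ∀ σ₂, IsSigma (m+1) σ₂ →
          ∃ σ, IsSigma (m+1) σ ∧ EqvS S (σ₁.or σ₂) σ) ?_ ?_ ?_ ?_ ?_ ?_ h1 rfl σ₂ h2
      · intro _ _ hj; exact absurd hj (by omega)
      · intro j' π₁ hπ₁ _ hj σ₂' hσ₂'
        exact inner hσ₂' rfl π₁ ((show j' = m by omega) ▸ hπ₁)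
      · intro j' φ₁ hσ₁ ihout hj σ₂' hσ₂'
        obtain ⟨σ', hσ', he⟩ := ihout hj (σ₂'.lift 0) (hσ₂'.lift 0)
        refine ⟨σ'.ex, hσ'.ex, ?_⟩
        exact (pull_or_ex S φ₁ σ₂').trans (EqvS.ex_congr he)
      · intros; trivial
      · intros; trivial
      · intros; trivial
    -- ⊃ with Σ antecedent, Π consequent
    have hPiImp : MPiImp S (m+1) := by
      have inner : ∀ {j π₂}, IsPi j π₂ → j = m + 1 → ∀ π₁, IsPi m π₁ →
          ∃ π, IsPi (m+1) π ∧ EqvS S (π₁.imp π₂) π := by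
        intro j π₂ h
        refine IsPi.rec (motive_1 := fun _ _ _ => True)
          (motive_2 := fun j π₂ _ => j = m + 1 → ∀ π₁, IsPi m π₁ →
            ∃ π, IsPi (m+1) π ∧ EqvS S (π₁.imp π₂) π) ?_ ?_ ?_ ?_ ?_ ?_ h
        · intros; trivial
        · intros; trivial
        · intros; trivial
        · intro _ _ hj; exact absurd hj (by omega)
        · intro j' ψ₂ hσ₂ _ hj π₁ hπ₁
          have hσ₂' : IsSigma m ψ₂ := (show j' = m by omega) ▸ hσ₂
          obtain ⟨σ, hσ, he⟩ := ih.2.2.2.2.2 π₁ ψ₂ hπ₁ hσ₂'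
          exact ⟨σ, IsPi.ofSigma hσ, he⟩
        · intro j' φ₂ hπ₂ ihin hj π₁ hπ₁
          obtain ⟨π', hπ', he⟩ := ihin hj (π₁.lift 0) (hπ₁.lift 0)
          refine ⟨π'.all, hπ'.all, ?_⟩
          exact (pull_imp_all_r S φ₂ π₁).trans (EqvS.all_congr he)
      intro σ₁ π₂ h1 h2
      refine IsSigma.rec (motive_2 := fun _ _ _ => True)
        (motive_1 := fun j σ₁ _ => j = m + 1 → ∀ π₂, IsPi (m+1) π₂ →
          ∃ π, IsPi (m+1) π ∧ EqvS S (σ₁.imp π₂) π) ?_ ?_ ?_ ?_ ?_ ?_ h1 rfl π₂ h2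
      · intro _ _ hj; exact absurd hj (by omega)
      · intro j' π₁ hπ₁ _ hj π₂' hπ₂'
        exact inner hπ₂' rfl π₁ ((show j' = m by omega) ▸ hπ₁)
      · intro j' φ₁ hσ₁ ihout hj π₂' hπ₂'
        obtain ⟨π', hπ', he⟩ := ihout hj (π₂'.lift 0) (hπ₂'.lift 0)
        refine ⟨π'.all, hπ'.all, ?_⟩
        exact (pull_imp_ex_l S φ₁ π₂').trans (EqvS.all_congr he)
      · intros; trivial
      · intros; trivial
      · intros; trivial
    -- ⊃ with Π antecedent, Σ consequent
    have hSigImp : MSigImp S (m+1) := by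
      have inner : ∀ {j σ₂}, IsSigma j σ₂ → j = m + 1 → ∀ σ₁, IsSigma m σ₁ →
          ∃ σ, IsSigma (m+1) σ ∧ EqvS S (σ₁.imp σ₂) σ := by
        intro j σ₂ h
        refine IsSigma.rec (motive_2 := fun _ _ _ => True)
          (motive_1 := fun j σ₂ _ => j = m + 1 → ∀ σ₁, IsSigma m σ₁ →
            ∃ σ, IsSigma (m+1) σ ∧ EqvS S (σ₁.imp σ₂) σ) ?_ ?_ ?_ ?_ ?_ ?_ h
        · intro _ _ hj; exact absurd hj (by omega)
        · intro j' ψ₂ hπ₂ _ hj σ₁ hσ₁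
          have hπ₂' : IsPi m ψ₂ := (show j' = m by omega) ▸ hπ₂
          obtain ⟨π, hπ, he⟩ := ih.2.2.2.2.1 σ₁ ψ₂ hσ₁ hπ₂'
          exact ⟨π, IsSigma.ofPi hπ, he⟩
        · intro j' φ₂ hσ₂ ihin hj σ₁ hσ₁
          obtain ⟨σ', hσ', he⟩ := ihin hj (σ₁.lift 0) (hσ₁.lift 0)
          refine ⟨σ'.ex, hσ'.ex, ?_⟩
          have hlem : Proves S (σ₁.or σ₁.neg) := hcd.sigma_lem hσ₁ (by omega)
          exact (pull_imp_ex_r S φ₂ σ₁ hlem).trans (EqvS.ex_congr he)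
        · intros; trivial
        · intros; trivial
        · intros; trivial
      intro π₁ σ₂ h1 h2
      refine IsPi.rec (motive_1 := fun _ _ _ => True)
        (motive_2 := fun j π₁ _ => j = m + 1 → ∀ σ₂, IsSigma (m+1) σ₂ →
          ∃ σ, IsSigma (m+1) σ ∧ EqvS S (π₁.imp σ₂) σ) ?_ ?_ ?_ ?_ ?_ ?_ h1 rfl σ₂ h2
      · intros; trivial
      · intros; trivial
      · intros; trivial
      · intro _ _ hj; exact absurd hj (by omega)
      · intro j' σ₁ hσ₁ _ hj σ₂' hσ₂'
        exact inner hσ₂' rfl σ₁ ((show j' = m by omega) ▸ hσ₁)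
      · intro j' φ₁ hπ₁ ihout hj σ₂' hσ₂'
        obtain ⟨τ, hτ, he⟩ := ihout hj (σ₂'.lift 0) (hσ₂'.lift 0)
        refine ⟨τ.ex, hτ.ex, ?_⟩
        have hπ₁' : IsPi (m+1) φ₁ := hj ▸ hπ₁
        have hlemφ : Proves S (φ₁.or φ₁.neg) := hcd.pi_lem hπ₁' (by omega)
        have hlemex : Proves S ((τ.ex).or (τ.ex).neg) :=
          hcd.sigma_lem (IsSigma.ex hτ) (by omega)
        exact pull_imp_all_l S φ₁ σ₂' he hlemφ hlemex
    exact ⟨hPiAnd, hSigAnd, hPiOr, hSigOr, hPiImp, hSigImp⟩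

end SemiClassicalArith
namespace SemiClassicalArith
open Formula

/-! ### Prenex levels of a formula -/

mutual
  /-- least `a` such that the formula has a `Π_a` prenex form (recursively computed). -/
  def Formula.uVal : Formula → ℕ
    | .falsum => 0
    | .dollar => 0
    | .eq _ _ => 0
    | .and φ ψ => max φ.uVal ψ.uVal
    | .or φ ψ => max φ.uVal ψ.uVal
    | .imp φ ψ => max φ.eVal ψ.uVal
    | .all φ => max 1 φ.uVal
    | .ex φ => (max 1 φ.eVal) + 1
  /-- least `a` such that the formula has a `Σ_a` prenex form. -/
  def Formula.eVal : Formula → ℕ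
    | .falsum => 0
    | .dollar => 0
    | .eq _ _ => 0
    | .and φ ψ => max φ.eVal ψ.eVal
    | .or φ ψ => max φ.eVal ψ.eVal
    | .imp φ ψ => max φ.uVal ψ.eVal
    | .all φ => (max 1 φ.uVal) + 1
    | .ex φ => max 1 φ.eVal
end

/-- `Π`-weight of an alternation path. -/
def wU : List Bool → ℕ
  | [] => 0
  | false :: s => s.length + 1
  | true :: s => s.length + 2

/-- `Σ`-weight of an alternation path. -/
def wE : List Bool → ℕ
  | [] => 0
  | true :: s => s.length + 1
  | false :: s => s.length + 2

theorem wU_pflip (s : List Bool) : wU (Formula.pflip s) = wE s := by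
  cases s with
  | nil => rfl
  | cons b s' => cases b <;> simp [Formula.pflip, wU, wE]

theorem wE_pflip (s : List Bool) : wE (Formula.pflip s) = wU s := by
  cases s with
  | nil => rfl
  | cons b s' => cases b <;> simp [Formula.pflip, wU, wE]

def fAll (s : List Bool) : List Bool := if s.head? = some false then s else false :: s
def fEx (s : List Bool) : List Bool := if s.head? = some true then s else true :: s

theorem wU_fAll (s : List Bool) : wU (fAll s) = (fAll s).length := by
  cases s with
  | nil => rfl
  | cons b s' => cases b <;> simp [fAll, wU]

theorem wE_fEx (s : List Bool) : wE (fEx s) = (fEx s).length := by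
  cases s with
  | nil => rfl
  | cons b s' => cases b <;> simp [fEx, wE]

theorem wU_le_fAll (s : List Bool) : wU s ≤ wU (fAll s) := by
  cases s with
  | nil => simp [fAll, wU]
  | cons b s' => cases b <;> simp [fAll, wU]

theorem wE_le_fEx (s : List Bool) : wE s ≤ wE (fEx s) := by
  cases s with
  | nil => simp [fEx, wE]
  | cons b s' => cases b <;> simp [fEx, wE]

theorem wE_fAll (s : List Bool) : wE (fAll s) = wU (fAll s) + 1 := by
  cases s with
  | nil => rfl
  | cons b s' => cases b <;> simp [fAll, wU, wE]

theorem wU_fEx (s : List Bool) : wU (fEx s) = wE (fEx s) + 1 := by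
  cases s with
  | nil => rfl
  | cons b s' => cases b <;> simp [fEx, wU, wE]

theorem one_le_wU_fAll (s : List Bool) : 1 ≤ wU (fAll s) := by
  cases s with
  | nil => simp [fAll, wU]
  | cons b s' => cases b <;> simp [fAll, wU]

theorem one_le_wE_fEx (s : List Bool) : 1 ≤ wE (fEx s) := by
  cases s with
  | nil => simp [fEx, wE]
  | cons b s' => cases b <;> simp [fEx, wE]

/-- Path bounds on `uVal`/`eVal`. -/
theorem uVal_le_sup : ∀ φ : Formula,
    φ.uVal ≤ φ.alt.sup wU ∧ φ.eVal ≤ φ.alt.sup wE := by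
  intro φ
  induction φ with
  | falsum => constructor <;> simp [Formula.uVal, Formula.eVal]
  | dollar => constructor <;> simp [Formula.uVal, Formula.eVal]
  | eq t u => constructor <;> simp [Formula.uVal, Formula.eVal]
  | and φ ψ ih1 ih2 =>
    constructor
    · show max φ.uVal ψ.uVal ≤ (φ.alt ∪ ψ.alt).sup wU
      rw [Finset.sup_union]
      exact max_le_max ih1.1 ih2.1
    · show max φ.eVal ψ.eVal ≤ (φ.alt ∪ ψ.alt).sup wE
      rw [Finset.sup_union]
      exact max_le_max ih1.2 ih2.2
  | or φ ψ ih1 ih2 =>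
    constructor
    · show max φ.uVal ψ.uVal ≤ (φ.alt ∪ ψ.alt).sup wU
      rw [Finset.sup_union]
      exact max_le_max ih1.1 ih2.1
    · show max φ.eVal ψ.eVal ≤ (φ.alt ∪ ψ.alt).sup wE
      rw [Finset.sup_union]
      exact max_le_max ih1.2 ih2.2
  | imp φ ψ ih1 ih2 =>
    constructor
    · show max φ.eVal ψ.uVal ≤ ((φ.alt.image Formula.pflip) ∪ ψ.alt).sup wU
      rw [Finset.sup_union, Finset.sup_image]
      have : φ.alt.sup (wU ∘ Formula.pflip) = φ.alt.sup wE :=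
        Finset.sup_congr rfl (fun s _ => wU_pflip s)
      rw [this]
      exact max_le_max ih1.2 ih2.1
    · show max φ.uVal ψ.eVal ≤ ((φ.alt.image Formula.pflip) ∪ ψ.alt).sup wE
      rw [Finset.sup_union, Finset.sup_image]
      have : φ.alt.sup (wE ∘ Formula.pflip) = φ.alt.sup wU :=
        Finset.sup_congr rfl (fun s _ => wE_pflip s)
      rw [this]
      exact max_le_max ih1.1 ih2.2
  | all φ ih =>
    have hne := φ.alt_nonempty
    have hUa : (φ.all).alt.sup wU = (φ.alt.image fAll).sup wU := rfl
    have h1 : 1 ≤ (φ.all).alt.sup wU := by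
      obtain ⟨s, hs⟩ := hne
      calc 1 ≤ wU (fAll s) := one_le_wU_fAll s
        _ ≤ _ := Finset.le_sup (Finset.mem_image_of_mem _ hs)
    have h2 : φ.alt.sup wU ≤ (φ.all).alt.sup wU := by
      refine Finset.sup_le ?_
      intro s hs
      exact le_trans (wU_le_fAll s) (Finset.le_sup (Finset.mem_image_of_mem _ hs))
    constructor
    · show max 1 φ.uVal ≤ _
      exact max_le h1 (le_trans ih.1 h2)
    · show (max 1 φ.uVal) + 1 ≤ (φ.alt.image fAll).sup wE
      obtain ⟨s₀, hs₀, hsup⟩ := Finset.exists_mem_eq_sup _ (hne.image fAll) wU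
      obtain ⟨s₁, hs₁, rfl⟩ := Finset.mem_image.mp hs₀
      have : (φ.alt.image fAll).sup wU + 1 ≤ (φ.alt.image fAll).sup wE := by
        rw [hsup, ← wE_fAll]
        exact Finset.le_sup hs₀
      refine le_trans ?_ this
      have := max_le h1 (le_trans ih.1 h2)
      omega
  | ex φ ih =>
    have hne := φ.alt_nonempty
    have h1 : 1 ≤ (φ.alt.image fEx).sup wE := by
      obtain ⟨s, hs⟩ := hne
      calc 1 ≤ wE (fEx s) := one_le_wE_fEx s
        _ ≤ _ := Finset.le_sup (Finset.mem_image_of_mem _ hs)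
    have h2 : φ.alt.sup wE ≤ (φ.alt.image fEx).sup wE := by
      refine Finset.sup_le ?_
      intro s hs
      exact le_trans (wE_le_fEx s) (Finset.le_sup (Finset.mem_image_of_mem _ hs))
    constructor
    · show (max 1 φ.eVal) + 1 ≤ (φ.alt.image fEx).sup wU
      obtain ⟨s₀, hs₀, hsup⟩ := Finset.exists_mem_eq_sup _ (hne.image fEx) wE
      obtain ⟨s₁, hs₁, rfl⟩ := Finset.mem_image.mp hs₀
      have hle : (φ.alt.image fEx).sup wE + 1 ≤ (φ.alt.image fEx).sup wU := by
        rw [hsup, ← wU_fEx]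
        exact Finset.le_sup hs₀
      refine le_trans ?_ hle
      have := max_le h1 (le_trans ih.2 h2)
      omega
    · show max 1 φ.eVal ≤ (φ.alt.image fEx).sup wE
      exact max_le h1 (le_trans ih.2 h2)

/-- `uVal (∀φ) ≤ degree (∀φ)`. -/
theorem uVal_all_le_degree (φ : Formula) : (φ.all).uVal ≤ (φ.all).degree := by
  have h := (uVal_le_sup φ.all).1
  have : (φ.all).alt.sup wU = (φ.all).degree := by
    refine Finset.sup_congr rfl ?_
    intro s hs
    obtain ⟨s₀, _, rfl⟩ := Finset.mem_image.mp hs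
    exact wU_fAll s₀
  rwa [this] at h

theorem eVal_ex_le_degree (φ : Formula) : (φ.ex).eVal ≤ (φ.ex).degree := by
  have h := (uVal_le_sup φ.ex).2
  have : (φ.ex).alt.sup wE = (φ.ex).degree := by
    refine Finset.sup_congr rfl ?_
    intro s hs
    obtain ⟨s₀, _, rfl⟩ := Finset.mem_image.mp hs
    exact wE_fEx s₀
  rwa [this] at h

end SemiClassicalArith
namespace SemiClassicalArith
open Formula

/-! ### Prenex normal forms and `F_k`-LEM -/

theorem Proves.lem_and {T : Set Formula} {φ ψ : Formula}
    (h1 : Proves T (φ.or φ.neg)) (h2 : Proves T (ψ.or ψ.neg)) :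
    Proves T ((φ.and ψ).or (φ.and ψ).neg) := by
  refine Drv.toProves ?_
  refine Drv.orE (Drv.ofProves h1) ?_ ?_
  · refine Drv.orE (Drv.ofProves h2) ?_ ?_
    · exact Drv.orI1 (Drv.andI Drv.hyp1 Drv.hyp0)
    · exact Drv.orI2 (Drv.impI (Drv.impE Drv.hyp1 (Drv.andE2 Drv.hyp0)))
  · exact Drv.orI2 (Drv.impI (Drv.impE Drv.hyp1 (Drv.andE1 Drv.hyp0)))

theorem Proves.lem_or {T : Set Formula} {φ ψ : Formula}
    (h1 : Proves T (φ.or φ.neg)) (h2 : Proves T (ψ.or ψ.neg)) :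
    Proves T ((φ.or ψ).or (φ.or ψ).neg) := by
  refine Drv.toProves ?_
  refine Drv.orE (Drv.ofProves h1) ?_ ?_
  · exact Drv.orI1 (Drv.orI1 Drv.hyp0)
  · refine Drv.orE (Drv.ofProves h2) ?_ ?_
    · exact Drv.orI1 (Drv.orI2 Drv.hyp0)
    · refine Drv.orI2 (Drv.impI ?_)
      exact Drv.orE Drv.hyp0 (Drv.impE Drv.hyp3 Drv.hyp0) (Drv.impE Drv.hyp2 Drv.hyp0)

theorem Proves.lem_imp {T : Set Formula} {φ ψ : Formula}
    (h1 : Proves T (φ.or φ.neg)) (h2 : Proves T (ψ.or ψ.neg)) :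
    Proves T ((φ.imp ψ).or (φ.imp ψ).neg) := by
  refine Drv.toProves ?_
  refine Drv.orE (Drv.ofProves h2) ?_ ?_
  · exact Drv.orI1 (Drv.impI Drv.hyp1)
  · refine Drv.orE (Drv.ofProves h1) ?_ ?_
    · refine Drv.orI2 (Drv.impI ?_)
      exact Drv.impE Drv.hyp2 (Drv.impE Drv.hyp0 Drv.hyp1)
    · refine Drv.orI1 (Drv.impI ?_)
      exact Drv.efq (Drv.impE Drv.hyp1 Drv.hyp0)

/-- Every `$`-free formula of level `≤ k` is provably equivalent (over `S`)
to a prenex formula. -/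
theorem spForms {S : Set Formula} {k : ℕ} (hcd : CdR S k) :
    ∀ φ : Formula, φ.noDollar →
      (∀ a, φ.uVal ≤ a → a ≤ k → ∃ π, IsPi a π ∧ EqvS S φ π) ∧
      (∀ a, φ.eVal ≤ a → a ≤ k → ∃ σ, IsSigma a σ ∧ EqvS S φ σ) := by
  intro φ
  induction φ with
  | falsum =>
    intro _
    constructor
    · intro a _ _
      exact ⟨Formula.falsum, (IsPi.qf (show (Formula.falsum).isQF from trivial)).mono_le (Nat.zero_le a), EqvS.refl S _⟩
    · intro a _ _
      exact ⟨Formula.falsum, (IsSigma.qf (show (Formula.falsum).isQF from trivial)).mono_le (Nat.zero_le a), EqvS.refl S _⟩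
  | dollar => intro h; exact h.elim
  | eq t u =>
    intro _
    constructor
    · intro a _ _
      exact ⟨Formula.eq t u, (IsPi.qf (show (Formula.eq t u).isQF from trivial)).mono_le (Nat.zero_le a), EqvS.refl S _⟩
    · intro a _ _
      exact ⟨Formula.eq t u, (IsSigma.qf (show (Formula.eq t u).isQF from trivial)).mono_le (Nat.zero_le a), EqvS.refl S _⟩
  | and φ ψ ih1 ih2 =>
    intro hnd
    constructor
    · intro a ha hak
      have hu : φ.uVal ≤ a ∧ ψ.uVal ≤ a := by
        constructor <;> [exact le_trans (le_max_left _ _) ha;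
          exact le_trans (le_max_right _ _) ha]
      obtain ⟨π₁, hπ₁, he₁⟩ := (ih1 hnd.1).1 a hu.1 hak
      obtain ⟨π₂, hπ₂, he₂⟩ := (ih2 hnd.2).1 a hu.2 hak
      obtain ⟨π, hπ, he⟩ := (mergeAll hcd a hak).1 π₁ π₂ hπ₁ hπ₂
      exact ⟨π, hπ, (he₁.and_congr he₂).trans he⟩
    · intro a ha hak
      have hu : φ.eVal ≤ a ∧ ψ.eVal ≤ a := by
        constructor <;> [exact le_trans (le_max_left _ _) ha;
          exact le_trans (le_max_right _ _) ha]
      obtain ⟨σ₁, hσ₁, he₁⟩ := (ih1 hnd.1).2 a hu.1 hak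
      obtain ⟨σ₂, hσ₂, he₂⟩ := (ih2 hnd.2).2 a hu.2 hak
      obtain ⟨σ, hσ, he⟩ := (mergeAll hcd a hak).2.1 σ₁ σ₂ hσ₁ hσ₂
      exact ⟨σ, hσ, (he₁.and_congr he₂).trans he⟩
  | or φ ψ ih1 ih2 =>
    intro hnd
    constructor
    · intro a ha hak
      obtain ⟨π₁, hπ₁, he₁⟩ := (ih1 hnd.1).1 a (le_trans (le_max_left _ _) ha) hak
      obtain ⟨π₂, hπ₂, he₂⟩ := (ih2 hnd.2).1 a (le_trans (le_max_right _ _) ha) hak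
      obtain ⟨π, hπ, he⟩ := (mergeAll hcd a hak).2.2.1 π₁ π₂ hπ₁ hπ₂
      exact ⟨π, hπ, (he₁.or_congr he₂).trans he⟩
    · intro a ha hak
      obtain ⟨σ₁, hσ₁, he₁⟩ := (ih1 hnd.1).2 a (le_trans (le_max_left _ _) ha) hak
      obtain ⟨σ₂, hσ₂, he₂⟩ := (ih2 hnd.2).2 a (le_trans (le_max_right _ _) ha) hak
      obtain ⟨σ, hσ, he⟩ := (mergeAll hcd a hak).2.2.2.1 σ₁ σ₂ hσ₁ hσ₂
      exact ⟨σ, hσ, (he₁.or_congr he₂).trans he⟩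
  | imp φ ψ ih1 ih2 =>
    intro hnd
    constructor
    · intro a ha hak
      obtain ⟨σ₁, hσ₁, he₁⟩ := (ih1 hnd.1).2 a (le_trans (le_max_left _ _) ha) hak
      obtain ⟨π₂, hπ₂, he₂⟩ := (ih2 hnd.2).1 a (le_trans (le_max_right _ _) ha) hak
      obtain ⟨π, hπ, he⟩ := (mergeAll hcd a hak).2.2.2.2.1 σ₁ π₂ hσ₁ hπ₂
      exact ⟨π, hπ, (he₁.imp_congr he₂).trans he⟩
    · intro a ha hak
      obtain ⟨π₁, hπ₁, he₁⟩ := (ih1 hnd.1).1 a (le_trans (le_max_left _ _) ha) hak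
      obtain ⟨σ₂, hσ₂, he₂⟩ := (ih2 hnd.2).2 a (le_trans (le_max_right _ _) ha) hak
      obtain ⟨σ, hσ, he⟩ := (mergeAll hcd a hak).2.2.2.2.2 π₁ σ₂ hπ₁ hσ₂
      exact ⟨σ, hσ, (he₁.imp_congr he₂).trans he⟩
  | all φ ih =>
    intro hnd
    constructor
    · intro a ha hak
      have h1a : 1 ≤ a := le_trans (le_max_left _ _) ha
      have hu : φ.uVal ≤ a := le_trans (le_max_right _ _) ha
      obtain ⟨b, rfl⟩ : ∃ b, a = b + 1 := ⟨a - 1, by omega⟩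
      obtain ⟨π, hπ, he⟩ := (ih hnd).1 (b+1) hu hak
      exact ⟨π.all, hπ.all, EqvS.all_congr he⟩
    · intro a ha hak
      have ha' : (max 1 φ.uVal) + 1 ≤ a := ha
      obtain ⟨b, rfl⟩ : ∃ b, a = b + 1 := ⟨a - 1, by omega⟩
      obtain ⟨c, hc⟩ : ∃ c, b = c + 1 := ⟨b - 1, by omega⟩
      obtain ⟨π, hπ, he⟩ := (ih hnd).1 b (by omega) (by omega)
      have hπ' : IsPi b π.all := by
        rw [hc] at hπ ⊢
        exact hπ.all
      exact ⟨π.all, hπ'.le_sigma (by omega), EqvS.all_congr he⟩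
  | ex φ ih =>
    intro hnd
    constructor
    · intro a ha hak
      have ha' : (max 1 φ.eVal) + 1 ≤ a := ha
      obtain ⟨b, rfl⟩ : ∃ b, a = b + 1 := ⟨a - 1, by omega⟩
      obtain ⟨c, hc⟩ : ∃ c, b = c + 1 := ⟨b - 1, by omega⟩
      obtain ⟨σ, hσ, he⟩ := (ih hnd).2 b (by omega) (by omega)
      have hσ' : IsSigma b σ.ex := by
        rw [hc] at hσ ⊢
        exact hσ.ex
      exact ⟨σ.ex, hσ'.le_pi (by omega), EqvS.ex_congr he⟩
    · intro a ha hak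
      have h1a : 1 ≤ a := le_trans (le_max_left _ _) ha
      have hu : φ.eVal ≤ a := le_trans (le_max_right _ _) ha
      obtain ⟨b, rfl⟩ : ∃ b, a = b + 1 := ⟨a - 1, by omega⟩
      obtain ⟨σ, hσ, he⟩ := (ih hnd).2 (b+1) hu hak
      exact ⟨σ.ex, hσ.ex, EqvS.ex_congr he⟩

/-- The bootstrapped `F_k`-LEM. -/
theorem CdR.flem {S : Set Formula} {k : ℕ} (hcd : CdR S k) :
    ∀ χ : Formula, χ.noDollar → χ.degree ≤ k → Proves S (χ.or χ.neg) := by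
  intro χ
  induction χ with
  | falsum =>
    intro _ _
    exact (Proves.ha (HAAx.orI2 _ _)).mp (Proves.imp_refl S Formula.falsum)
  | dollar => intro h; exact h.elim
  | eq t u => intro _ _; exact Proves.ha (HAAx.atomDec t u)
  | and φ ψ ih1 ih2 =>
    intro hnd hdeg
    exact Proves.lem_and (ih1 hnd.1 ((Formula.degree_and_left φ ψ).trans hdeg))
      (ih2 hnd.2 ((Formula.degree_and_right φ ψ).trans hdeg))
  | or φ ψ ih1 ih2 =>
    intro hnd hdeg
    exact Proves.lem_or (ih1 hnd.1 ((Formula.degree_or_left φ ψ).trans hdeg))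
      (ih2 hnd.2 ((Formula.degree_or_right φ ψ).trans hdeg))
  | imp φ ψ ih1 ih2 =>
    intro hnd hdeg
    exact Proves.lem_imp (ih1 hnd.1 ((Formula.degree_imp_left φ ψ).trans hdeg))
      (ih2 hnd.2 ((Formula.degree_imp_right φ ψ).trans hdeg))
  | all φ _ =>
    intro hnd hdeg
    have hu : (φ.all).uVal ≤ k := le_trans (uVal_all_le_degree φ) hdeg
    obtain ⟨π, hπ, he⟩ := (spForms hcd (φ.all) hnd).1 k hu (le_refl k)
    exact he.lem_transfer (hcd.pi_lem hπ (le_refl k))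
  | ex φ _ =>
    intro hnd hdeg
    have hu : (φ.ex).eVal ≤ k := le_trans (eVal_ex_le_degree φ) hdeg
    obtain ⟨σ, hσ, he⟩ := (spForms hcd (φ.ex) hnd).2 k hu (le_refl k)
    exact he.lem_transfer (hcd.sigma_lem hσ (le_refl k))

end SemiClassicalArith
namespace SemiClassicalArith
open Formula

/-! ### Further degree lemmas -/

theorem Formula.degree_or_le (φ ψ : Formula) :
    (φ.or ψ).degree ≤ max φ.degree ψ.degree := by
  refine Finset.sup_le ?_
  intro s hs
  rcases Finset.mem_union.mp hs with hs | hs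
  · exact le_trans (Finset.le_sup hs) (le_max_left _ _)
  · exact le_trans (Finset.le_sup hs) (le_max_right _ _)

theorem Formula.alt_lift : ∀ (φ : Formula) (d : ℕ), (φ.lift d).alt = φ.alt := by
  intro φ
  induction φ with
  | falsum => intros; rfl
  | dollar => intros; rfl
  | eq t u => intros; rfl
  | and φ ψ ih1 ih2 => intro d; simp [Formula.alt, ih1, ih2]
  | or φ ψ ih1 ih2 => intro d; simp [Formula.alt, ih1, ih2]
  | imp φ ψ ih1 ih2 => intro d; simp [Formula.alt, ih1, ih2]
  | all φ ih => intro d; simp [Formula.alt, ih]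
  | ex φ ih => intro d; simp [Formula.alt, ih]

theorem Formula.degree_lift (φ : Formula) (d : ℕ) : (φ.lift d).degree = φ.degree := by
  simp [Formula.degree, Formula.alt_lift]

theorem Formula.noDollar_lift : ∀ {φ : Formula}, φ.noDollar → ∀ d, (φ.lift d).noDollar := by
  intro φ
  induction φ with
  | falsum => intros; trivial
  | dollar => intro h; exact h.elim
  | eq t u => intros; trivial
  | and φ ψ ih1 ih2 => intro h d; exact ⟨ih1 h.1 d, ih2 h.2 d⟩
  | or φ ψ ih1 ih2 => intro h d; exact ⟨ih1 h.1 d, ih2 h.2 d⟩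
  | imp φ ψ ih1 ih2 => intro h d; exact ⟨ih1 h.1 d, ih2 h.2 d⟩
  | all φ ih => intro h d; exact ih h (d+1)
  | ex φ ih => intro h d; exact ih h (d+1)

/-! ### Lift-iterates of the `$`-instance and parametrized `$`-images -/

def Formula.liftIter : ℕ → Formula → Formula
  | 0, ρ => ρ
  | n + 1, ρ => (Formula.liftIter n ρ).lift 0

theorem Formula.liftIter_noDollar {ρ : Formula} (h : ρ.noDollar) (n : ℕ) :
    (Formula.liftIter n ρ).noDollar := by
  induction n with
  | zero => exact h
  | succ n ih => exact Formula.noDollar_lift ih 0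

theorem Formula.liftIter_degree (ρ : Formula) (n : ℕ) :
    (Formula.liftIter n ρ).degree = ρ.degree := by
  induction n with
  | zero => rfl
  | succ n ih => rw [Formula.liftIter, Formula.degree_lift, ih]

def DImgP (U : Set Formula) (ρ : Formula) : Set Formula :=
  {χ | ∃ υ ∈ U, ∃ n, χ = υ.dsub (Formula.liftIter n ρ)}

theorem Proves.dsubP {U : Set Formula} {δ : Formula} (h : Proves U δ) (ρ : Formula) :
    ∀ n, Proves (DImgP U ρ) (δ.dsub (Formula.liftIter n ρ)) := by
  induction h with
  | ax hυ => intro n; exact Proves.ax ⟨_, hυ, n, rfl⟩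
  | ha hax => intro n; exact Proves.ha (hax.dsub _)
  | mp _ _ ih1 ih2 => intro n; exact (ih1 n).mp (ih2 n)
  | gen _ ih => intro n; exact (ih (n+1)).gen

/-- Discharging the `$`-instances of `LDol k` in a theory with `F_k`-LEM. -/
theorem Proves.cut_LDol {S : Set Formula} {k : ℕ} {ρ : Formula}
    (hLD : ∀ χ : Formula, χ.noDollar → χ.degree ≤ k → Proves S (χ.or χ.neg))
    (hρnd : ρ.noDollar) (hρdeg : ρ.degree ≤ k) {δ : Formula}
    (h : Proves (DImgP (LDol k) ρ) δ) : Proves S δ := by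
  refine h.cut ?_
  rintro χ ⟨υ, hυ, m, rfl⟩
  rcases hυ with hυ | hυ
  · obtain ⟨χ', h1', h2', rfl⟩ := hυ
    rw [Formula.dsub_noDollar (show (χ'.or χ'.neg).noDollar from ⟨h1', h1', trivial⟩)]
    exact hLD χ' h1' h2'
  · have hυ' : υ = Formula.dollar.or Formula.dollar.neg := hυ
    subst hυ'
    show Proves S ((Formula.dollar.or Formula.dollar.neg).dsub (Formula.liftIter m ρ))
    have : (Formula.dollar.or Formula.dollar.neg).dsub (Formula.liftIter m ρ)
        = (Formula.liftIter m ρ).or (Formula.liftIter m ρ).neg := rfl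
    rw [this]
    exact hLD _ (Formula.liftIter_noDollar hρnd m)
      (by rw [Formula.liftIter_degree]; exact hρdeg)

/-- The core conservation argument for disjunctions of `Σ_k`-formulas. -/
theorem core_conservation {k : ℕ} {T X : Set Formula}
    (hX : ∀ ψ ∈ X, ψ.sentence ∧ Qcl k ψ)
    (hLD : ∀ χ : Formula, χ.noDollar → χ.degree ≤ k → Proves (T ∪ X) (χ.or χ.neg)) :
    ∀ σ τ : Formula, IsSigma k σ → IsSigma k τ → Proves (lemSet ∪ X) (σ.or τ) →
      Proves (T ∪ X) (σ.or τ) := by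
  intro σ τ hσ hτ hp
  set γ := σ.or τ with hγdef
  have hnd : γ.noDollar := ⟨hσ.noDollar, hτ.noDollar⟩
  have hdeg : γ.degree ≤ k :=
    le_trans (Formula.degree_or_le σ τ) (max_le hσ.degree_le hτ.degree_le)
  -- Step 1: translate
  have s1 : Proves (Formula.dollarTr '' (lemSet ∪ X)) γ.dollarTr := hp.dollarTr_sound
  -- Step 2: discharge translated LEM
  have s2 : Proves (Formula.dollarTr '' X) γ.dollarTr := by
    refine s1.cut ?_
    rintro χ ⟨υ, hυ, rfl⟩
    rcases hυ with hυ | hυ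
    · obtain ⟨φ₀, _, rfl⟩ := hυ
      exact Proves.lemD _ (φ₀.dollarTr)
    · exact Proves.ax ⟨υ, hυ, rfl⟩
  -- Step 3: substitute γ for $
  have s3 : Proves (DImgP (Formula.dollarTr '' X) γ) ((γ.dollarTr).dsub γ) := s2.dsubP γ 0
  -- Step 4: discharge the substituted translated axioms of X
  have s4 : Proves (T ∪ X) ((γ.dollarTr).dsub γ) := by
    refine s3.cut ?_
    rintro χ ⟨υ, ⟨χ₀, hχ₀, rfl⟩, n, rfl⟩
    have hQ := (hX χ₀ hχ₀).2
    have la := (hQ.dollarTr_lemma).dsubP (Formula.liftIter n γ) 0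
    have la' : Proves (T ∪ X)
        ((χ₀.imp χ₀.dollarTr).dsub (Formula.liftIter 0 (Formula.liftIter n γ))) :=
      Proves.cut_LDol hLD (Formula.liftIter_noDollar hnd n)
        (by rw [Formula.liftIter_degree]; exact hdeg) la
    have la'' : Proves (T ∪ X)
        ((χ₀.dsub (Formula.liftIter n γ)).imp ((χ₀.dollarTr).dsub (Formula.liftIter n γ))) := la'
    rw [Formula.dsub_noDollar hQ.noDollar] at la''
    exact la''.mp (Proves.ax (Set.mem_union_right _ hχ₀))
  -- Step 5: collapse using the B-lemma
  have bl := (Proves.bLem γ hnd hdeg).1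
  have bl1 : Proves (DImgP (fLEM k) γ) (((γ.dollarTr).imp γ.negD.negD).dsub γ) := by
    have := bl.dsubP γ 0
    exact this
  have bl2 : Proves (DImgP (LDol k) γ) (((γ.dollarTr).imp γ.negD.negD).dsub γ) := by
    refine bl1.mono ?_
    rintro χ ⟨υ, hυ, n, rfl⟩
    exact ⟨υ, Or.inl hυ, n, rfl⟩
  have bl3 : Proves (T ∪ X) (((γ.dollarTr).dsub γ).imp (((γ.dsub γ).imp γ).imp γ)) :=
    Proves.cut_LDol hLD hnd hdeg bl2
  rw [Formula.dsub_noDollar hnd] at bl3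
  exact (bl3.mp s4).mp (Proves.imp_refl _ γ)

/-- The hard TFAE edge: DNE-R closure implies conservativity. -/
theorem hard_edge (k : ℕ) (T X : Set Formula)
    (hT : IsSemiClassical T) (hX : ∀ ψ ∈ X, ψ.sentence ∧ Qcl k ψ)
    (h2 : DneR (T ∪ X) k) :
    ∀ φ ψ : Formula, IsPi (k + 1) φ → IsPi (k + 1) ψ →
      Proves (lemSet ∪ X) (φ.or ψ) → Proves (T ∪ X) (φ.or ψ) := by
  have hcd : CdR (T ∪ X) k := h2.toCdR
  have hLD := hcd.flem
  have core := core_conservation hX hLD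
  -- inner recursion: the left component is a Σ_k formula
  have HE2 : ∀ {j : ℕ} {φ : Formula}, IsPi j φ → j = k+1 → ∀ τ, IsSigma k τ →
      Proves (lemSet ∪ X) (τ.or φ) → Proves (T ∪ X) (τ.or φ) := by
    intro j φ h
    refine IsPi.rec (motive_1 := fun _ _ _ => True)
      (motive_2 := fun j φ _ => j = k+1 → ∀ τ, IsSigma k τ →
        Proves (lemSet ∪ X) (τ.or φ) → Proves (T ∪ X) (τ.or φ)) ?_ ?_ ?_ ?_ ?_ ?_ h
    · intros; trivial
    · intros; trivial
    · intros; trivial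
    · intro φ _ hj; exact absurd hj (by omega)
    · intro m φ hσ _ hj τ hτ hp
      exact core τ φ hτ ((show m = k by omega) ▸ hσ) hp
    · intro m φ' hπ ih hj τ hτ hp
      have hlift : Proves (lemSet ∪ X) ((τ.lift 0).or ((φ'.lift 1).all)) := hp.lift_closed 0
      have h2' : Proves (lemSet ∪ X) ((τ.lift 0).or φ') :=
        (Proves.or_mono (Proves.imp_refl _ _) (Proves.all_self_lift _ φ')).mp hlift
      have h3 := ih hj (τ.lift 0) (hτ.lift 0) h2'
      exact hcd τ φ' (hτ.le_pi (by omega)) (hj ▸ hπ) h3.gen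
  intro φ ψ hφ hψ hp
  refine IsPi.rec (motive_1 := fun _ _ _ => True)
    (motive_2 := fun j ψ _ => j = k+1 → ∀ φ, IsPi (k+1) φ →
      Proves (lemSet ∪ X) (φ.or ψ) → Proves (T ∪ X) (φ.or ψ)) ?_ ?_ ?_ ?_ ?_ ?_ hψ rfl φ hφ hp
  · intros; trivial
  · intros; trivial
  · intros; trivial
  · intro φ _ hj; exact absurd hj (by omega)
  · intro m ψ₀ hσ _ hj φ' hφ' hp'
    have hσk : IsSigma k ψ₀ := (show m = k by omega) ▸ hσ
    have hc : Proves (lemSet ∪ X) (ψ₀.or φ') := (Proves.or_comm_imp _ _ _).mp hp'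
    exact (Proves.or_comm_imp _ _ _).mp (HE2 hφ' rfl ψ₀ hσk hc)
  · intro m ψ' hπ ih hj φ' hφ' hp'
    have hlift : Proves (lemSet ∪ X) ((φ'.lift 0).or ((ψ'.lift 1).all)) := hp'.lift_closed 0
    have h2' : Proves (lemSet ∪ X) ((φ'.lift 0).or ψ') :=
      (Proves.or_mono (Proves.imp_refl _ _) (Proves.all_self_lift _ ψ')).mp hlift
    have h3 := ih hj (φ'.lift 0) (hφ'.lift 0) h2'
    exact hcd φ' ψ' hφ' (hj ▸ hπ) h3.gen

end SemiClassicalArith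
namespace SemiClassicalArith
open Formula

theorem piOrPi_conservation_tfae' (k : ℕ) (T X : Set Formula)
    (hT : IsSemiClassical T) (hX : ∀ ψ ∈ X, ψ.sentence ∧ Qcl k ψ) :
    List.TFAE
      [ (∀ φ ψ : Formula, IsPi (k + 1) φ → IsPi (k + 1) ψ →
          Proves (lemSet ∪ X) (φ.or ψ) → Proves (T ∪ X) (φ.or ψ)),
        (∀ φ ψ : Formula, IsPi (k + 1) φ → IsPi (k + 1) ψ →
          Proves (T ∪ X) (φ.or ψ).neg.neg → Proves (T ∪ X) (φ.or ψ)),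
        (∀ φ ψ : Formula, IsPi (k + 1) φ → IsPi (k + 1) ψ →
          Proves (T ∪ X) (((φ.lift 0).or ψ).all) →
          Proves (T ∪ X) (φ.or ψ.all)),
        (∀ φ ψ : Formula, IsSigma (k + 1) φ → IsSigma (k + 1) ψ →
          Proves (T ∪ X) (φ.and ψ).neg →
          Proves (T ∪ X) (φ.dual.or ψ.dual)) ] := by
  have hS2PA : ∀ {δ : Formula}, Proves (T ∪ X) δ → Proves (lemSet ∪ X) δ := by
    intro δ h
    refine Proves.cut ?_ h
    intro χ hχ
    rcases hχ with hχ | hχ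
    · exact ((hT χ hχ).2).mono Set.subset_union_left
    · exact Proves.ax (Set.mem_union_right _ hχ)
  tfae_have 1 → 2 := by
    intro h1
    intro φ ψ hφ hψ hnn
    have hnd : (φ.or ψ).noDollar := ⟨hφ.noDollar, hψ.noDollar⟩
    have hD : Proves (lemSet ∪ X) (((φ.or ψ).neg.neg).imp (φ.or ψ)) :=
      Proves.lem_stab (Proves.ax (Set.mem_union_left _ ⟨φ.or ψ, hnd, rfl⟩))
    exact h1 φ ψ hφ hψ (hD.mp (hS2PA hnn))
  tfae_have 2 → 3 := fun h => DneR.toCdR h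
  tfae_have 3 → 2 := fun h => CdR.dneR h
  tfae_have 2 → 4 := fun h => DneR.toDmlR h
  tfae_have 4 → 2 := fun h => DmlR.toDneR h
  tfae_have 2 → 1 := fun h => hard_edge k T X hT hX h
  tfae_finish

end SemiClassicalArith

namespace SemiClassicalArith
/-- for semi-classical `T` and `X ⊆ 𝒬_{k+1}` sentences, the
`(Π_{k+1} ∨ Π_{k+1})`-conservativity of `PA + X` over `T + X` is equivalent to
closure of `T + X` under `(Π_{k+1} ∨ Π_{k+1})-DNE-R`, under `Π_{k+1}-CD-R`, and
under `Σ_{k+1}-DML^⊥-R`. -/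
theorem piOrPi_conservation_tfae (k : ℕ) (T X : Set Formula)
    (hT : IsSemiClassical T) (hX : ∀ ψ ∈ X, ψ.sentence ∧ Qcl k ψ) :
    List.TFAE
      [ (∀ φ ψ : Formula, IsPi (k + 1) φ → IsPi (k + 1) ψ →
          Proves (lemSet ∪ X) (φ.or ψ) → Proves (T ∪ X) (φ.or ψ)),
        (∀ φ ψ : Formula, IsPi (k + 1) φ → IsPi (k + 1) ψ →
          Proves (T ∪ X) (φ.or ψ).neg.neg → Proves (T ∪ X) (φ.or ψ)),
        (∀ φ ψ : Formula, IsPi (k + 1) φ → IsPi (k + 1) ψ →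
          Proves (T ∪ X) (((φ.lift 0).or ψ).all) →
          Proves (T ∪ X) (φ.or ψ.all)),
        (∀ φ ψ : Formula, IsSigma (k + 1) φ → IsSigma (k + 1) ψ →
          Proves (T ∪ X) (φ.and ψ).neg →
          Proves (T ∪ X) (φ.dual.or ψ.dual)) ] :=
  piOrPi_conservation_tfae' k T X hT hX

end SemiClassicalArith
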